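/- arXiv:2306.09564 — 14 statements merged into one kernel-verified Lean document; each statement's English description precedes it below -/
import Mathlib

section
/- For any number n of agents with additive utility functions over a finite set of indivisible items (where each item may be a good for some agents and a chore for others, i.e., utilities for individual items may be positive, zero, or negative), there always exists a complete allocation of the items that satisfies envy-freeness up to one item (EF1). -/
open Finset

/-- The bundle of agent `i` under the assignment `f` of items to agents;
an assignment `f : Fin m → Fin n` encodes a complete allocation (a partition of the
items into `n` possibly empty, pairwise disjoint bundles). -/
def bundle {n m : ℕ} (f : Fin m → Fin n) (i : Fin n) : Finset (Fin m) :=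
  Finset.univ.filter fun o => f o = i

namespace EF1X

noncomputable def maxPick {m : ℕ} (s : Finset (Fin m)) (w : Fin m → ℝ) : Option (Fin m) :=
  if h : s.Nonempty then some (s.exists_max_image w h).choose else none

lemma maxPick_mem {m : ℕ} {s : Finset (Fin m)} {w : Fin m → ℝ} {o : Fin m}
    (h : maxPick s w = some o) : o ∈ s := by
  unfold maxPick at h
  by_cases hs : s.Nonempty
  · rw [dif_pos hs] at h
    obtain ⟨h1, _⟩ := (s.exists_max_image w hs).choose_spec
    cases h; exact h1
  · rw [dif_neg hs] at h; cases h

lemma maxPick_le {m : ℕ} {s : Finset (Fin m)} {w : Fin m → ℝ} {o : Fin m}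
    (h : maxPick s w = some o) : ∀ x ∈ s, w x ≤ w o := by
  unfold maxPick at h
  by_cases hs : s.Nonempty
  · rw [dif_pos hs] at h
    obtain ⟨_, h2⟩ := (s.exists_max_image w hs).choose_spec
    cases h; exact h2
  · rw [dif_neg hs] at h; cases h

lemma maxPick_of_nonempty {m : ℕ} {s : Finset (Fin m)} (w : Fin m → ℝ) (hs : s.Nonempty) :
    ∃ o, maxPick s w = some o := by
  unfold maxPick; rw [dif_pos hs]; exact ⟨_, rfl⟩

variable {n m : ℕ}

/-- Items that are (weakly) chores for everybody. -/
noncomputable def Oneg (v : Fin n → Fin m → ℝ) : Finset (Fin m) :=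
  univ.filter fun o => ∀ i, v i o ≤ 0

/-- the agent acting at turn `t` : phase 1 (`t < m*n`) in forward order,
phase 2 in backward order. -/
def ag (m : ℕ) {n : ℕ} (hn : 0 < n) (t : ℕ) : Fin n :=
  if t < m * n then ⟨t % n, Nat.mod_lt _ hn⟩ else ⟨n - 1 - t % n, by omega⟩

/-- the pool from which the agent acting at turn `t` picks, given remaining set `R`. -/
noncomputable def pool (v : Fin n → Fin m → ℝ) (hn : 0 < n) (t : ℕ) (R : Finset (Fin m)) :
    Finset (Fin m) :=
  if t < m * n then
    (if m * n ≤ t + (Oneg v).card then R ∩ Oneg v else ∅)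
  else R.filter fun o => 0 < v (ag m hn t) o

lemma pool_subset (v : Fin n → Fin m → ℝ) (hn : 0 < n) (t : ℕ) (R : Finset (Fin m)) :
    pool v hn t R ⊆ R := by
  unfold pool
  split_ifs
  · exact inter_subset_left
  · exact empty_subset _
  · exact filter_subset _ _

noncomputable def rem (v : Fin n → Fin m → ℝ) (hn : 0 < n) : ℕ → Finset (Fin m)
  | 0 => univ
  | t + 1 =>
    match maxPick (pool v hn t (rem v hn t)) (v (ag m hn t)) with
    | some o => (rem v hn t).erase o
    | none => rem v hn t

noncomputable def pick (v : Fin n → Fin m → ℝ) (hn : 0 < n) (t : ℕ) : Option (Fin m) :=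
  maxPick (pool v hn t (rem v hn t)) (v (ag m hn t))

/-- value of turn `t` in the eyes of agent `i` -/
noncomputable def val (v : Fin n → Fin m → ℝ) (hn : 0 < n) (i : Fin n) (t : ℕ) : ℝ :=
  (pick v hn t).elim 0 (v i)

lemma rem_succ_some {v : Fin n → Fin m → ℝ} {hn : 0 < n} {t : ℕ} {o : Fin m}
    (h : pick v hn t = some o) : rem v hn (t + 1) = (rem v hn t).erase o := by
  show (match maxPick (pool v hn t (rem v hn t)) (v (ag m hn t)) with
    | some o => (rem v hn t).erase o
    | none => rem v hn t) = _
  rw [show maxPick (pool v hn t (rem v hn t)) (v (ag m hn t)) = some o from h]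

lemma rem_succ_none {v : Fin n → Fin m → ℝ} {hn : 0 < n} {t : ℕ}
    (h : pick v hn t = none) : rem v hn (t + 1) = rem v hn t := by
  show (match maxPick (pool v hn t (rem v hn t)) (v (ag m hn t)) with
    | some o => (rem v hn t).erase o
    | none => rem v hn t) = _
  rw [show maxPick (pool v hn t (rem v hn t)) (v (ag m hn t)) = none from h]

lemma rem_succ_subset (v : Fin n → Fin m → ℝ) (hn : 0 < n) (t : ℕ) :
    rem v hn (t + 1) ⊆ rem v hn t := by
  cases h : pick v hn t with
  | none => rw [rem_succ_none h]
  | some o => rw [rem_succ_some h]; exact erase_subset _ _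

lemma rem_mono (v : Fin n → Fin m → ℝ) (hn : 0 < n) {t t' : ℕ} (h : t ≤ t') :
    rem v hn t' ⊆ rem v hn t := by
  induction t' with
  | zero => cases Nat.le_zero.1 h; exact Finset.Subset.refl _
  | succ k ih =>
    rcases Nat.lt_or_ge t (k+1) with h1 | h1
    · exact Finset.Subset.trans (rem_succ_subset v hn k) (ih (by omega))
    · cases Nat.le_antisymm h h1; exact Finset.Subset.refl _

lemma pick_mem {v : Fin n → Fin m → ℝ} {hn : 0 < n} {t : ℕ} {o : Fin m}
    (h : pick v hn t = some o) : o ∈ pool v hn t (rem v hn t) := maxPick_mem h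

lemma pick_mem_rem {v : Fin n → Fin m → ℝ} {hn : 0 < n} {t t' : ℕ} {o : Fin m}
    (htt : t ≤ t') (h : pick v hn t' = some o) : o ∈ rem v hn t :=
  rem_mono v hn htt (pool_subset v hn t' _ (pick_mem h))

lemma pick_not_mem_after {v : Fin n → Fin m → ℝ} {hn : 0 < n} {t t' : ℕ} {o : Fin m}
    (h : pick v hn t = some o) (htt : t < t') : o ∉ rem v hn t' := by
  intro hmem
  have := rem_mono v hn (show t + 1 ≤ t' from htt) hmem
  rw [rem_succ_some h] at this
  exact (mem_erase.1 this).1 rfl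

lemma pick_time_unique {v : Fin n → Fin m → ℝ} {hn : 0 < n} {t t' : ℕ} {o : Fin m}
    (h : pick v hn t = some o) (h' : pick v hn t' = some o) : t = t' := by
  rcases Nat.lt_trichotomy t t' with hh | hh | hh
  · exact absurd (pick_mem_rem (le_refl t') h') (pick_not_mem_after h hh)
  · exact hh
  · exact absurd (pick_mem_rem (le_refl t) h) (pick_not_mem_after h' hh)

lemma pick_phase1_mem_Oneg {v : Fin n → Fin m → ℝ} {hn : 0 < n} {t : ℕ} {o : Fin m}
    (ht : t < m * n) (h : pick v hn t = some o) : o ∈ Oneg v := by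
  have := pick_mem h
  unfold pool at this
  rw [if_pos ht] at this
  split_ifs at this with h2
  · exact (mem_inter.1 this).2
  · cases this

lemma val_phase1_nonpos {v : Fin n → Fin m → ℝ} {hn : 0 < n} {t : ℕ} (i : Fin n)
    (ht : t < m * n) : val v hn i t ≤ 0 := by
  unfold val
  cases h : pick v hn t with
  | none => simp
  | some o =>
    have := pick_phase1_mem_Oneg ht h
    rw [Oneg, mem_filter] at this
    simpa using this.2 i

lemma val_phase2_nonneg {v : Fin n → Fin m → ℝ} {hn : 0 < n} {t : ℕ} {i : Fin n}
    (ht : ¬ t < m * n) (hag : ag m hn t = i) : 0 ≤ val v hn i t := by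
  unfold val
  cases h : pick v hn t with
  | none => simp
  | some o =>
    have hmem := pick_mem h
    unfold pool at hmem
    rw [if_neg ht] at hmem
    rw [hag] at hmem
    simpa using le_of_lt (mem_filter.1 hmem).2

/-- Phase-1 invariant: the chores pool empties exactly at time `m*n`. -/
lemma card_inter_Oneg (v : Fin n → Fin m → ℝ) (hn : 0 < n) :
    ∀ t ≤ m * n, (rem v hn t ∩ Oneg v).card = min (Oneg v).card (m * n - t) := by
  have hK : (Oneg v).card ≤ m * n := by
    calc (Oneg v).card ≤ (univ : Finset (Fin m)).card := card_le_card (filter_subset _ _)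
    _ = m := by simp
    _ ≤ m * n := Nat.le_mul_of_pos_right m hn
  intro t
  induction t with
  | zero =>
    intro _
    have : rem v hn 0 ∩ Oneg v = Oneg v := by
      rw [show rem v hn 0 = univ from rfl]; exact univ_inter _
    rw [this]; omega
  | succ k ih =>
    intro hk1
    have hk : k < m * n := by omega
    have ihk := ih (by omega)
    by_cases hact : m * n ≤ k + (Oneg v).card
    · -- active turn: pool = rem ∩ Oneg, nonempty
      have hpool : pool v hn k (rem v hn k) = rem v hn k ∩ Oneg v := by
        unfold pool; rw [if_pos hk, if_pos hact]
      have hcard : (rem v hn k ∩ Oneg v).card = m * n - k := by omega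
      have hne : (rem v hn k ∩ Oneg v).Nonempty := by
        rw [← card_pos, hcard]; omega
      obtain ⟨o, ho⟩ := maxPick_of_nonempty (v (ag m hn k)) (hpool ▸ hne)
      have hpk : pick v hn k = some o := ho
      have homem : o ∈ rem v hn k ∩ Oneg v := hpool ▸ pick_mem hpk
      rw [rem_succ_some hpk]
      have : (rem v hn k).erase o ∩ Oneg v = (rem v hn k ∩ Oneg v).erase o := by
        ext x; simp only [mem_inter, mem_erase]; tauto
      rw [this, card_erase_of_mem homem, hcard]
      omega
    · -- inactive: pool empty, nothing picked
      have hpool : pool v hn k (rem v hn k) = ∅ := by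
        unfold pool; rw [if_pos hk, if_neg hact]
      have hpk : pick v hn k = none := by
        unfold pick; rw [hpool]; unfold maxPick
        rw [dif_neg]; simp
      rw [rem_succ_none hpk, ihk]
      omega

lemma rem_mn_inter (v : Fin n → Fin m → ℝ) (hn : 0 < n) :
    rem v hn (m * n) ∩ Oneg v = ∅ := by
  have := card_inter_Oneg v hn (m * n) (le_refl _)
  rw [Nat.sub_self] at this
  simpa [Nat.min_zero] using card_eq_zero.1 (by omega)

/-- Phase-1 turn-wise comparison: if `i` acts at turn `t` and `t < t' < m*n`,
then `i`'s value of turn `t'` is at most `i`'s value of its own turn `t`. -/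
lemma P1 {v : Fin n → Fin m → ℝ} {hn : 0 < n} {t t' : ℕ} {i : Fin n}
    (htt : t < t') (ht' : t' < m * n) (hag : ag m hn t = i) :
    val v hn i t' ≤ val v hn i t := by
  have ht : t < m * n := lt_trans htt ht'
  cases h' : pick v hn t' with
  | none =>
    -- t' must be inactive, hence t inactive, hence val i t = 0
    have hact' : ¬ (m * n ≤ t' + (Oneg v).card) := by
      intro hact
      have hpool : pool v hn t' (rem v hn t') = rem v hn t' ∩ Oneg v := by
        unfold pool; rw [if_pos ht', if_pos hact]
      have hcard := card_inter_Oneg v hn t' (le_of_lt ht')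
      have hne : (pool v hn t' (rem v hn t')).Nonempty := by
        rw [hpool, ← card_pos, hcard]; omega
      obtain ⟨o, ho⟩ := maxPick_of_nonempty (v (ag m hn t')) hne
      rw [show pick v hn t' = some o from ho] at h'; cases h'
    have hpool : pool v hn t (rem v hn t) = ∅ := by
      unfold pool; rw [if_pos ht, if_neg (by omega)]
    have hpk : pick v hn t = none := by
      unfold pick; rw [hpool]; unfold maxPick; rw [dif_neg]; simp
    unfold val; rw [h', hpk]
  | some o =>
    have hoO : o ∈ Oneg v := pick_phase1_mem_Oneg ht' h'
    have horem : o ∈ rem v hn t := pick_mem_rem (le_of_lt htt) h'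
    unfold val; rw [h']
    cases hp : pick v hn t with
    | none =>
      simp only [Option.elim]
      rw [Oneg, mem_filter] at hoO
      exact hoO.2 i
    | some a =>
      simp only [Option.elim]
      -- t is active (it picked), so pool t = rem t ∩ Oneg
      have hpoolne : (pool v hn t (rem v hn t)).Nonempty := ⟨a, pick_mem hp⟩
      have hact : m * n ≤ t + (Oneg v).card := by
        by_contra hact
        have : pool v hn t (rem v hn t) = ∅ := by
          unfold pool; rw [if_pos ht, if_neg hact]
        rw [this] at hpoolne; exact not_nonempty_empty hpoolne
      have hpool : pool v hn t (rem v hn t) = rem v hn t ∩ Oneg v := by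
        unfold pool; rw [if_pos ht, if_pos hact]
      have homem : o ∈ pool v hn t (rem v hn t) := by
        rw [hpool, mem_inter]; exact ⟨horem, hoO⟩
      have := maxPick_le (show maxPick _ (v (ag m hn t)) = some a from hp) o homem
      rwa [hag] at this

/-- Phase-2 turn-wise comparison. -/
lemma P2 {v : Fin n → Fin m → ℝ} {hn : 0 < n} {t t' : ℕ} {i : Fin n}
    (ht : ¬ t < m * n) (htt : t < t') (hag : ag m hn t = i) :
    val v hn i t' ≤ val v hn i t := by
  cases h' : pick v hn t' with
  | none =>
    unfold val; rw [h']
    simpa [val] using val_phase2_nonneg ht hag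
  | some o =>
    have horem : o ∈ rem v hn t := pick_mem_rem (le_of_lt htt) h'
    rcases le_or_gt (v i o) 0 with hvo | hvo
    · have h0 : (0:ℝ) ≤ val v hn i t := val_phase2_nonneg ht hag
      unfold val at *; rw [h']
      simp only [Option.elim]
      exact le_trans hvo h0
    · have homem : o ∈ pool v hn t (rem v hn t) := by
        unfold pool; rw [if_neg ht, mem_filter, hag]
        exact ⟨horem, hvo⟩
      obtain ⟨a, ha⟩ := maxPick_of_nonempty (v (ag m hn t)) ⟨o, homem⟩
      have := maxPick_le ha o homem
      unfold val; rw [h', show pick v hn t = some a from ha]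
      simp only [Option.elim]
      rwa [hag] at this

lemma ag_phase1 (hn : 0 < n) {q r : ℕ} (hq : q < m) (hr : r < n) :
    ag m hn (q * n + r) = ⟨r, hr⟩ := by
  have hlt : q * n + r < m * n := by
    calc q * n + r < q * n + n := by omega
    _ = (q + 1) * n := by ring
    _ ≤ m * n := Nat.mul_le_mul_right n (by omega)
  unfold ag
  rw [if_pos hlt]
  congr 1
  rw [show q * n + r = r + n * q by ring, Nat.add_mul_mod_self_left]
  exact Nat.mod_eq_of_lt hr

lemma ag_phase2 (hn : 0 < n) {r : ℕ} (q : ℕ) (hr : r < n) :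
    ag m hn (m * n + (q * n + r)) = ⟨n - 1 - r, by omega⟩ := by
  have hge : ¬ (m * n + (q * n + r) < m * n) := by omega
  unfold ag
  rw [if_neg hge]
  congr 1
  rw [show m * n + (q * n + r) = r + n * (m + q) by ring, Nat.add_mul_mod_self_left,
    Nat.mod_eq_of_lt hr]

lemma ag_phase1_agent (hn : 0 < n) {q : ℕ} (hq : q < m) (i : Fin n) :
    ag m hn (q * n + i.val) = i := by
  rw [ag_phase1 hn hq i.isLt]

lemma ag_phase2_agent (hn : 0 < n) (q : ℕ) (i : Fin n) :
    ag m hn (m * n + (q * n + (n - 1 - i.val))) = i := by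
  rw [ag_phase2 hn q (show n - 1 - i.val < n by omega)]
  have := i.isLt
  ext; simp; omega

/-- In phase 2, each round with a nonempty remainder strictly shrinks it. -/
lemma phase2_round (v : Fin n → Fin m → ℝ) (hn : 0 < n) (q : ℕ)
    (hne : (rem v hn (m * n + q * n)).Nonempty) :
    rem v hn (m * n + q * n + n) ⊂ rem v hn (m * n + q * n) := by
  set s := m * n + q * n with hs
  obtain ⟨o, ho⟩ := hne
  have honeg : o ∉ Oneg v := by
    intro hO
    have : o ∈ rem v hn (m * n) ∩ Oneg v :=
      mem_inter.2 ⟨rem_mono v hn (by omega) ho, hO⟩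
    rw [rem_mn_inter] at this
    exact notMem_empty _ this
  have : ∃ i : Fin n, 0 < v i o := by
    by_contra hc
    push_neg at hc
    exact honeg (by rw [Oneg, mem_filter]; exact ⟨mem_univ _, hc⟩)
  obtain ⟨i, hi⟩ := this
  set t := s + (n - 1 - i.val) with hts
  have htlt : t < s + n := by omega
  have hagt : ag m hn t = i := by
    rw [hts, hs, add_assoc]; exact ag_phase2_agent hn q i
  have htph2 : ¬ t < m * n := by omega
  -- find a witness x ∈ rem s with x ∉ rem (s+n)
  have key : ∃ x, x ∈ rem v hn s ∧ x ∉ rem v hn (s + n) := by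
    by_cases homem : o ∈ rem v hn t
    · have hpoolne : (pool v hn t (rem v hn t)).Nonempty := by
        refine ⟨o, ?_⟩
        unfold pool; rw [if_neg htph2, mem_filter, hagt]
        exact ⟨homem, hi⟩
      obtain ⟨a, ha⟩ := maxPick_of_nonempty (v (ag m hn t)) hpoolne
      have hpk : pick v hn t = some a := ha
      refine ⟨a, pick_mem_rem (by omega) hpk, ?_⟩
      exact pick_not_mem_after hpk (by omega)
    · exact ⟨o, ho, fun hx => homem (rem_mono v hn (by omega) hx)⟩
  obtain ⟨x, hx1, hx2⟩ := key
  rw [ssubset_iff_of_subset (rem_mono v hn (by omega))]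
  exact ⟨x, hx1, hx2⟩

lemma rem_final (v : Fin n → Fin m → ℝ) (hn : 0 < n) :
    rem v hn (m * n + m * n) = ∅ := by
  have main : ∀ q ≤ m, (rem v hn (m * n + q * n)).card ≤ m - q := by
    intro q
    induction q with
    | zero =>
      intro _
      calc (rem v hn (m * n + 0 * n)).card ≤ (univ : Finset (Fin m)).card :=
        card_le_card (subset_univ _)
      _ = m := by simp
      _ = m - 0 := rfl
    | succ k ih =>
      intro hk
      rcases Finset.eq_empty_or_nonempty (rem v hn (m * n + k * n)) with he | hne
      · have : rem v hn (m * n + (k+1) * n) ⊆ rem v hn (m * n + k * n) :=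
          rem_mono v hn (by nlinarith)
        rw [he] at this
        simp [Finset.subset_empty.1 this]
      · have hlt := card_lt_card (phase2_round v hn k hne)
        have := ih (by omega)
        have harr : m * n + k * n + n = m * n + (k+1) * n := by ring
        rw [harr] at hlt
        omega
  have := main m (le_refl m)
  rw [Nat.sub_self] at this
  exact card_eq_zero.1 (by omega)

/-- every item is picked at some turn `< m*n + m*n`. -/
lemma exists_pick_time (v : Fin n → Fin m → ℝ) (hn : 0 < n) (o : Fin m) :
    ∃ t, t < m * n + m * n ∧ pick v hn t = some o := by
  have aux : ∀ T, o ∉ rem v hn T → ∃ t < T, pick v hn t = some o := by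
    intro T
    induction T with
    | zero => intro h; exact absurd (mem_univ o) h
    | succ k ih =>
      intro h
      cases hp : pick v hn k with
      | none =>
        rw [rem_succ_none hp] at h
        obtain ⟨t, ht1, ht2⟩ := ih h
        exact ⟨t, by omega, ht2⟩
      | some a =>
        by_cases hoa : o = a
        · exact ⟨k, by omega, hoa ▸ hp⟩
        · rw [rem_succ_some hp] at h
          have : o ∉ rem v hn k := fun hmem => h (mem_erase.2 ⟨hoa, hmem⟩)
          obtain ⟨t, ht1, ht2⟩ := ih this
          exact ⟨t, by omega, ht2⟩
  have h0 : o ∉ rem v hn (m * n + m * n) := by rw [rem_final]; exact notMem_empty _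
  obtain ⟨t, ht1, ht2⟩ := aux _ h0
  exact ⟨t, ht1, ht2⟩

lemma sum_range_mul (f : ℕ → ℝ) (a b : ℕ) :
    ∑ t ∈ range (a * b), f t = ∑ q ∈ range a, ∑ r ∈ range b, f (q * b + r) := by
  induction a with
  | zero => simp
  | succ k ih =>
    rw [show (k+1) * b = k * b + b by ring, Finset.sum_range_add, ih,
      Finset.sum_range_succ]

/-- the sum of `v i` over agent `j`'s bundle equals the sum of turn values over `j`'s turns. -/
lemma sum_bundle_eq (v : Fin n → Fin m → ℝ) (hn : 0 < n)
    (f : Fin m → Fin n) (pt : Fin m → ℕ)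
    (hlt : ∀ o, pt o < m * n + m * n)
    (hpick : ∀ o, pick v hn (pt o) = some o)
    (hf : ∀ o, f o = ag m hn (pt o)) (i j : Fin n) :
    ∑ o ∈ bundle f j, v i o =
      ∑ q ∈ range m, val v hn i (q * n + j.val) +
      ∑ q ∈ range m, val v hn i (m * n + (q * n + (n - 1 - j.val))) := by
  have step1 : ∑ o ∈ bundle f j, v i o =
      ∑ t ∈ (range (m * n + m * n)).filter
        (fun t => ag m hn t = j ∧ (pick v hn t).isSome), val v hn i t := by
    refine Finset.sum_bij (fun (o : Fin m) (_ : o ∈ bundle f j) => pt o) ?_ ?_ ?_ ?_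
    · intro o ho
      rw [mem_filter, mem_range]
      refine ⟨hlt o, ?_, by rw [hpick o]; rfl⟩
      rw [← hf o]
      exact (Finset.mem_filter.1 ho).2
    · intro o _ o' _ h
      have h' : pt o = pt o' := h
      have := hpick o
      rw [h', hpick o'] at this
      cases this; rfl
    · intro t ht
      rw [mem_filter] at ht
      obtain ⟨htr, hagt, hsome⟩ := ht
      obtain ⟨o, ho⟩ := Option.isSome_iff_exists.1 hsome
      have hpt : pt o = t := pick_time_unique (hpick o) ho
      refine ⟨o, ?_, show pt o = t from hpt⟩
      rw [bundle, mem_filter]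
      exact ⟨mem_univ _, by rw [hf o, hpt, hagt]⟩
    · intro o _
      unfold val
      rw [hpick o]
      rfl
  have step2 : ∑ t ∈ (range (m * n + m * n)).filter
        (fun t => ag m hn t = j ∧ (pick v hn t).isSome), val v hn i t =
      ∑ t ∈ (range (m * n + m * n)).filter (fun t => ag m hn t = j), val v hn i t := by
    refine Finset.sum_subset ?_ ?_
    · intro t ht
      rw [mem_filter] at *
      exact ⟨ht.1, ht.2.1⟩
    · intro t ht hnt
      rw [mem_filter] at *
      cases hp : pick v hn t with
      | none => unfold val; rw [hp]; rfl
      | some o =>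
        exfalso
        exact hnt ⟨ht.1, ht.2, by rw [hp]; rfl⟩
  have step3 : ∑ t ∈ (range (m * n + m * n)).filter (fun t => ag m hn t = j), val v hn i t =
      ∑ t ∈ range (m * n + m * n), ite (ag m hn t = j) (val v hn i t) 0 :=
    Finset.sum_filter _ _
  rw [step1, step2, step3, Finset.sum_range_add, sum_range_mul, sum_range_mul]
  congr 1
  · refine Finset.sum_congr rfl fun q hq => ?_
    rw [mem_range] at hq
    have inner : ∀ r ∈ range n, (if ag m hn (q * n + r) = j then val v hn i (q * n + r) else 0)
        = (if r = j.val then val v hn i (q * n + r) else 0) := by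
      intro r hr
      rw [mem_range] at hr
      refine if_congr ?_ rfl rfl
      rw [ag_phase1 hn hq hr, Fin.ext_iff]
    rw [Finset.sum_congr rfl inner, Finset.sum_ite_eq' (range n) j.val
      (fun r => val v hn i (q * n + r)), if_pos (mem_range.2 j.isLt)]
  · refine Finset.sum_congr rfl fun q hq => ?_
    have inner : ∀ r ∈ range n,
        (if ag m hn (m * n + (q * n + r)) = j then val v hn i (m * n + (q * n + r)) else 0)
        = (if r = n - 1 - j.val then val v hn i (m * n + (q * n + r)) else 0) := by
      intro r hr
      rw [mem_range] at hr
      refine if_congr ?_ rfl rfl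
      rw [ag_phase2 hn q hr, Fin.ext_iff]
      have := j.isLt
      constructor <;> (intro h; simp only at h ⊢; omega)
    rw [Finset.sum_congr rfl inner, Finset.sum_ite_eq' (range n) (n - 1 - j.val)
      (fun r => val v hn i (m * n + (q * n + r))), if_pos (mem_range.2 (by omega))]

end EF1X

open EF1X in
theorem ef1_exists_additive_mixed' (n m : ℕ) (hn : 0 < n)
    (v : Fin n → Fin m → ℝ) :
    ∃ f : Fin m → Fin n, ∀ i j : Fin n,
      (∃ O' ⊆ bundle f j, O'.card ≤ 1 ∧
        (∑ o ∈ bundle f i, v i o) ≥ ∑ o ∈ bundle f j \ O', v i o) ∨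
      (∃ O' ⊆ bundle f i, O'.card ≤ 1 ∧
        (∑ o ∈ bundle f i \ O', v i o) ≥ ∑ o ∈ bundle f j, v i o) := by
  classical
  rcases Nat.eq_zero_or_pos m with hm | hm
  · subst hm
    refine ⟨fun o => o.elim0, fun i j => ?_⟩
    left
    refine ⟨∅, empty_subset _, by simp, ?_⟩
    have hempty : ∀ s : Finset (Fin 0), s = ∅ := fun s => Finset.eq_empty_of_isEmpty s
    rw [sdiff_empty, hempty (bundle _ i), hempty (bundle _ j)]
  obtain ⟨k, rfl⟩ : ∃ k, m = k + 1 := ⟨m - 1, by omega⟩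
  choose pt hpt using fun o => exists_pick_time v hn o
  refine ⟨fun o => ag (k+1) hn (pt o), fun i j => ?_⟩
  set f : Fin (k+1) → Fin n := fun o => ag (k+1) hn (pt o) with hfdef
  have hSi := sum_bundle_eq v hn f pt (fun o => (hpt o).1) (fun o => (hpt o).2)
    (fun o => rfl) i i
  have hSj := sum_bundle_eq v hn f pt (fun o => (hpt o).1) (fun o => (hpt o).2)
    (fun o => rfl) i j
  have hin := i.isLt
  have hjn := j.isLt
  have hmul : ∀ q r : ℕ, q < k + 1 → r < n → q * n + r < (k+1) * n := by
    intro q r hq hr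
    calc q * n + r < q * n + n := by omega
    _ = (q + 1) * n := by ring
    _ ≤ (k+1) * n := Nat.mul_le_mul_right n (by omega)
  rcases lt_trichotomy i.val j.val with hij | hij | hij
  · -- i acts earlier in phase 1, later in phase 2
    left
    set tstar := (k+1) * n + (0 * n + (n - 1 - j.val)) with htstar
    set O' : Finset (Fin (k+1)) := (pick v hn tstar).elim ∅ (fun b => {b}) with hO'
    have hsub : O' ⊆ bundle f j := by
      cases hb : pick v hn tstar with
      | none => rw [hO', hb]; exact empty_subset _
      | some b =>
        have hbt : pt b = tstar := pick_time_unique (hpt b).2 hb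
        have hbmem : b ∈ bundle f j := by
          rw [bundle, mem_filter]
          refine ⟨mem_univ _, ?_⟩
          show ag (k+1) hn (pt b) = j
          rw [hbt, htstar]
          exact ag_phase2_agent hn 0 j
        rw [hO', hb]
        intro x hx
        simp only [Option.elim, Finset.mem_singleton] at hx
        rwa [hx]
    have hcard : O'.card ≤ 1 := by
      cases hb : pick v hn tstar with
      | none => rw [hO', hb]; simp
      | some b => rw [hO', hb]; simp
    have hsum : ∑ o ∈ O', v i o = EF1X.val v hn i tstar := by
      cases hb : pick v hn tstar with
      | none => rw [hO', hb]; unfold EF1X.val; rw [hb]; simp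
      | some b => rw [hO', hb]; unfold EF1X.val; rw [hb]; simp
    refine ⟨O', hsub, hcard, ?_⟩
    rw [Finset.sum_sdiff_eq_sub hsub, hsum, hSi, hSj]
    have hA : ∑ q ∈ range (k+1), EF1X.val v hn i (q * n + j.val) ≤
        ∑ q ∈ range (k+1), EF1X.val v hn i (q * n + i.val) := by
      refine Finset.sum_le_sum fun q hq => ?_
      rw [mem_range] at hq
      exact P1 (by omega) (hmul q j.val hq hjn) (ag_phase1_agent hn hq i)
    have hB : ∑ q ∈ range (k+1), EF1X.val v hn i ((k+1) * n + (q * n + (n - 1 - j.val)))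
        - EF1X.val v hn i tstar ≤
        ∑ q ∈ range (k+1), EF1X.val v hn i ((k+1) * n + (q * n + (n - 1 - i.val))) := by
      rw [Finset.sum_range_succ' (fun q => EF1X.val v hn i ((k+1) * n + (q * n + (n - 1 - j.val)))),
        Finset.sum_range_succ (fun q => EF1X.val v hn i ((k+1) * n + (q * n + (n - 1 - i.val))))]
      have hterm : ∑ q ∈ range k, EF1X.val v hn i ((k+1) * n + ((q+1) * n + (n - 1 - j.val))) ≤
          ∑ q ∈ range k, EF1X.val v hn i ((k+1) * n + (q * n + (n - 1 - i.val))) := by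
        refine Finset.sum_le_sum fun q hq => ?_
        refine P2 (by omega) ?_ (ag_phase2_agent hn q i)
        have e : (q + 1) * n = q * n + n := by ring
        omega
      have hlast : 0 ≤ EF1X.val v hn i ((k+1) * n + (k * n + (n - 1 - i.val))) :=
        val_phase2_nonneg (by omega) (ag_phase2_agent hn k i)
      rw [htstar]
      linarith
    linarith
  · -- i = j
    left
    refine ⟨∅, empty_subset _, by simp, ?_⟩
    rw [sdiff_empty]
    have : i = j := Fin.ext hij
    rw [this]
  · -- j acts earlier in phase 1; i removes its own last phase-1 pick
    right
    set tstar := k * n + i.val with htstar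
    set O' : Finset (Fin (k+1)) := (pick v hn tstar).elim ∅ (fun b => {b}) with hO'
    have hsub : O' ⊆ bundle f i := by
      cases hb : pick v hn tstar with
      | none => rw [hO', hb]; exact empty_subset _
      | some b =>
        have hbt : pt b = tstar := pick_time_unique (hpt b).2 hb
        have hbmem : b ∈ bundle f i := by
          rw [bundle, mem_filter]
          refine ⟨mem_univ _, ?_⟩
          show ag (k+1) hn (pt b) = i
          rw [hbt, htstar]
          exact ag_phase1_agent hn (by omega) i
        rw [hO', hb]
        intro x hx
        simp only [Option.elim, Finset.mem_singleton] at hx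
        rwa [hx]
    have hcard : O'.card ≤ 1 := by
      cases hb : pick v hn tstar with
      | none => rw [hO', hb]; simp
      | some b => rw [hO', hb]; simp
    have hsum : ∑ o ∈ O', v i o = EF1X.val v hn i tstar := by
      cases hb : pick v hn tstar with
      | none => rw [hO', hb]; unfold EF1X.val; rw [hb]; simp
      | some b => rw [hO', hb]; unfold EF1X.val; rw [hb]; simp
    refine ⟨O', hsub, hcard, ?_⟩
    rw [Finset.sum_sdiff_eq_sub hsub, hsum, hSi, hSj]
    have hA : ∑ q ∈ range (k+1), EF1X.val v hn i (q * n + j.val) ≤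
        ∑ q ∈ range (k+1), EF1X.val v hn i (q * n + i.val) - EF1X.val v hn i tstar := by
      rw [Finset.sum_range_succ' (fun q => EF1X.val v hn i (q * n + j.val)),
        Finset.sum_range_succ (fun q => EF1X.val v hn i (q * n + i.val))]
      have hterm : ∑ q ∈ range k, EF1X.val v hn i ((q+1) * n + j.val) ≤
          ∑ q ∈ range k, EF1X.val v hn i (q * n + i.val) := by
        refine Finset.sum_le_sum fun q hq => ?_
        rw [mem_range] at hq
        have e : (q + 1) * n = q * n + n := by ring
        refine P1 (by omega) (hmul (q+1) j.val (by omega) hjn) (ag_phase1_agent hn (by omega) i)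
      have hfirst : EF1X.val v hn i (0 * n + j.val) ≤ 0 := by
        refine val_phase1_nonpos i ?_
        have := hmul 0 j.val (by omega) hjn
        omega
      rw [htstar]
      linarith
    have hB : ∑ q ∈ range (k+1), EF1X.val v hn i ((k+1) * n + (q * n + (n - 1 - j.val))) ≤
        ∑ q ∈ range (k+1), EF1X.val v hn i ((k+1) * n + (q * n + (n - 1 - i.val))) := by
      refine Finset.sum_le_sum fun q hq => ?_
      refine P2 (by omega) (by omega) (ag_phase2_agent hn q i)
    linarith


/-- For any number `n` of agents with additive utilities over a finite set of
indivisible items (values of items may be positive, zero, or negative), there exists a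
complete allocation satisfying EF1. -/
theorem ef1_exists_additive_mixed (n m : ℕ) (hn : 0 < n)
    (v : Fin n → Fin m → ℝ) :
    ∃ f : Fin m → Fin n, ∀ i j : Fin n,
      (∃ O' ⊆ bundle f j, O'.card ≤ 1 ∧
        (∑ o ∈ bundle f i, v i o) ≥ ∑ o ∈ bundle f j \ O', v i o) ∨
      (∃ O' ⊆ bundle f i, O'.card ≤ 1 ∧
        (∑ o ∈ bundle f i \ O', v i o) ≥ ∑ o ∈ bundle f j, v i o) := by
  exact ef1_exists_additive_mixed' n m hn v
end

section
/- For any number n of agents with doubly-monotonic utility functions over a finite set of indivisible items, there always exists a complete allocation of the items that satisfies envy-freeness up to one item (EF1). -/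
open Finset

def pB {n m : ℕ} (f : Fin m → Fin n) (S : Finset (Fin m)) (i : Fin n) : Finset (Fin m) :=
  S.filter fun o => f o = i

lemma pB_perm {n m : ℕ} (f : Fin m → Fin n) (S : Finset (Fin m)) (σ : Equiv.Perm (Fin n))
    (i : Fin n) : pB (fun o => σ (f o)) S i = pB f S (σ.symm i) := by
  ext x; simp [pB, Equiv.apply_eq_iff_eq_symm_apply]

lemma pB_update {n m : ℕ} (f : Fin m → Fin n) (S : Finset (Fin m)) (o : Fin m) (ho : o ∈ S)
    (a i : Fin n) :
    pB (Function.update f o a) S i =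
      if i = a then insert o (pB f (S.erase o) i) else pB f (S.erase o) i := by
  ext x
  rcases eq_or_ne x o with rfl | hx
  · simp only [pB, mem_filter, Function.update_self, ho, true_and]
    split_ifs with h
    · simp [h]
    · simp [Ne.symm h]
  · split_ifs with h <;>
      simp [pB, mem_filter, mem_erase, mem_insert, Function.update_of_ne hx, hx] <;> tauto

lemma pB_subset {n m : ℕ} (f : Fin m → Fin n) (S : Finset (Fin m)) (i : Fin n) :
    pB f S i ⊆ S := filter_subset _ _

lemma insert_sdiff_not_mem {α : Type*} [DecidableEq α] (s t : Finset α) (o : α) (h : o ∉ t) :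
    insert o s \ t = insert o (s \ t) := by
  ext x; by_cases hx : x = o <;> simp [hx, h] <;> tauto

lemma insert_sdiff_self' {α : Type*} [DecidableEq α] (s : Finset α) (o : α) (h : o ∉ s) :
    insert o s \ {o} = s := by
  ext x
  rcases eq_or_ne x o with rfl | hx
  · simp [h]
  · simp [hx]


lemma exists_cycle {n : ℕ} (g : Fin n → Fin n) (S : Finset (Fin n))
    (hcl : ∀ x ∈ S, g x ∈ S) (a0 : Fin n) (ha0 : a0 ∈ S) :
    ∃ (σ : Equiv.Perm (Fin n)) (K : Finset (Fin n)),
      K.Nonempty ∧ K ⊆ S ∧ (∀ x ∈ K, σ x = g x) ∧ (∀ x, x ∉ K → σ x = x) := by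
  classical
  have hiter : ∀ k, g^[k] a0 ∈ S := by
    intro k; induction k with
    | zero => simpa
    | succ k ih => rw [Function.iterate_succ_apply']; exact hcl _ ih
  have hrep : ∃ k l, k < l ∧ g^[k] a0 = g^[l] a0 := by
    obtain ⟨k, l, hkl, heq⟩ := Finite.exists_ne_map_eq_of_infinite (fun k : ℕ => g^[k] a0)
    rcases lt_or_gt_of_ne hkl with h | h
    · exact ⟨k, l, h, heq⟩
    · exact ⟨l, k, h, heq.symm⟩
  obtain ⟨k, l, hkl, heq⟩ := hrep
  set y := g^[k] a0 with hy
  have hspec : ∃ q, 0 < q ∧ g^[q] y = y := by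
    refine ⟨l - k, by omega, ?_⟩
    rw [hy, ← Function.iterate_add_apply]
    rw [show l - k + k = l by omega]
    exact heq.symm
  set p := Nat.find hspec with hp
  obtain ⟨hppos, hpper⟩ : 0 < p ∧ g^[p] y = y := Nat.find_spec hspec
  have hmin : ∀ q, 0 < q → q < p → g^[q] y ≠ y := by
    intro q hq hqp hne
    exact Nat.find_min hspec hqp ⟨hq, hne⟩
  set L : List (Fin n) := (List.range p).map (fun s => g^[s] y) with hL
  have hlen : L.length = p := by simp [hL]
  have hgetL : ∀ (i : ℕ) (h : i < L.length), L[i] = g^[i] y := by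
    intro i h; simp [hL]
  have hinj : ∀ s ∈ List.range p, ∀ t ∈ List.range p, g^[s] y = g^[t] y → s = t := by
    intro s hs t ht hst
    simp only [List.mem_range] at hs ht
    by_contra hne
    -- wlog s < t
    rcases lt_or_gt_of_ne hne with h | h
    · apply hmin (p - t + s) (by omega) (by omega)
      rw [Function.iterate_add_apply, hst, ← Function.iterate_add_apply,
        show p - t + t = p by omega]
      exact hpper
    · apply hmin (p - s + t) (by omega) (by omega)
      rw [Function.iterate_add_apply, ← hst, ← Function.iterate_add_apply,
        show p - s + s = p by omega]
      exact hpper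
  have hnodup : L.Nodup := (List.nodup_range : (List.range p).Nodup).map_on hinj
  have hymem : y ∈ L := by
    rw [hL]
    refine List.mem_map.2 ⟨0, ?_, rfl⟩
    simpa using hppos
  refine ⟨L.formPerm, L.toFinset, ⟨y, List.mem_toFinset.2 hymem⟩, ?_, ?_, ?_⟩
  · intro x hx
    rw [List.mem_toFinset, hL, List.mem_map] at hx
    obtain ⟨s, _, rfl⟩ := hx
    rw [hy, ← Function.iterate_add_apply]
    exact hiter _
  · intro x hx
    rw [List.mem_toFinset] at hx
    obtain ⟨i, hi, rfl⟩ := List.mem_iff_getElem.1 hx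
    rw [List.formPerm_apply_getElem _ hnodup i hi]
    have hip : i < p := hlen ▸ hi
    rcases eq_or_lt_of_le (Nat.succ_le_of_lt hip) with h | h
    · -- i+1 = p
      rw [hgetL, hgetL]
      rw [hlen, show (i+1) % p = 0 by simp [← h]]
      rw [show (0:ℕ) = 0 from rfl]
      simp only [Function.iterate_zero, id_eq]
      conv_lhs => rw [← hpper, ← h, Function.iterate_succ_apply']
    · rw [hgetL, hgetL, hlen, Nat.mod_eq_of_lt h, Function.iterate_succ_apply']
  · intro x hx
    exact List.formPerm_apply_of_notMem (fun h => hx (List.mem_toFinset.2 h))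


lemma perm_symm_fix {n : ℕ} (σ : Equiv.Perm (Fin n)) (K : Finset (Fin n))
    (hσid : ∀ x, x ∉ K → σ x = x) :
    (∀ i, i ∉ K → σ.symm i = i) ∧ (∀ i, i ∈ K → σ.symm i ∈ K) := by
  constructor
  · intro i hi
    conv_lhs => rw [← hσid i hi]
    exact σ.symm_apply_apply i
  · intro i hi
    by_contra h
    have h2 : σ (σ.symm i) = σ.symm i := hσid _ h
    rw [σ.apply_symm_apply] at h2
    exact h (h2 ▸ hi)

lemma phase1 {n m : ℕ} (hn : 0 < n) (u : Fin n → Finset (Fin m) → ℝ)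
    (G : Fin n → Finset (Fin m))
    (hG : ∀ i (o : Fin m) (T : Finset (Fin m)), o ∉ T →
      (o ∈ G i → u i T ≤ u i (insert o T)) ∧ (o ∉ G i → u i (insert o T) ≤ u i T))
    (S : Finset (Fin m)) (hS : ∀ o ∈ S, ∃ i, o ∈ G i) :
    ∃ f : Fin m → Fin n, ∀ i j : Fin n,
      ∃ O' ⊆ pB f S j, O'.card ≤ 1 ∧ u i (pB f S i) ≥ u i (pB f S j \ O') := by
  classical
  induction S using Finset.strongInduction with
  | _ S IH =>
  rcases S.eq_empty_or_nonempty with rfl | ⟨o, ho⟩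
  · exact ⟨fun _ => ⟨0, hn⟩, fun i j => ⟨∅, by simp, by simp, le_refl _⟩⟩
  set S' := S.erase o with hS'
  have hsub : S' ⊂ S := erase_ssubset ho
  obtain ⟨f0, hf0⟩ := IH S' hsub (fun o' ho' => hS o' (mem_of_mem_erase ho'))
  set Inv : (Fin m → Fin n) → Prop := fun f => ∀ i j : Fin n,
      ∃ O' ⊆ pB f S' j, O'.card ≤ 1 ∧ u i (pB f S' i) ≥ u i (pB f S' j \ O') with hInv
  set T : Finset (Fin m → Fin n) := univ.filter Inv with hT
  have hTne : T.Nonempty := ⟨f0, mem_filter.2 ⟨mem_univ _, hf0⟩⟩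
  obtain ⟨f, hfT, hmax⟩ := T.exists_max_image (fun f => ∑ i, u i (pB f S' i)) hTne
  have hf : Inv f := (mem_filter.1 hfT).2
  have honS' : o ∉ S' := notMem_erase _ _
  have hoB : ∀ i, o ∉ pB f S' i := fun i h => honS' (pB_subset f S' i h)
  -- claim: exists unenvied-within-A agent a with o ∈ G a
  have claim : ∃ a, o ∈ G a ∧ ∀ j, o ∈ G j → u j (pB f S' a) ≤ u j (pB f S' j) := by
    by_contra hcon
    push_neg at hcon
    have hcon' : ∀ a, o ∈ G a → ∃ j, o ∈ G j ∧ u j (pB f S' j) < u j (pB f S' a) := by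
      intro a ha
      obtain ⟨j, hj1, hj2⟩ := hcon a ha
      exact ⟨j, hj1, hj2⟩
    set g : Fin n → Fin n := fun a => if h : o ∈ G a then (hcon' a h).choose else a with hg
    have hgG : ∀ a, o ∈ G a → o ∈ G (g a) ∧
        u (g a) (pB f S' (g a)) < u (g a) (pB f S' a) := by
      intro a ha
      have := (hcon' a ha).choose_spec
      simpa [hg, dif_pos ha] using this
    set A : Finset (Fin n) := univ.filter (fun a => o ∈ G a) with hA
    have hclA : ∀ x ∈ A, g x ∈ A := by
      intro x hx
      have hxG : o ∈ G x := (mem_filter.1 hx).2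
      exact mem_filter.2 ⟨mem_univ _, (hgG x hxG).1⟩
    obtain ⟨a0, ha0⟩ := hS o ho
    obtain ⟨σ, K, hKne, hKA, hσg, hσid⟩ :=
      exists_cycle g A hclA a0 (mem_filter.2 ⟨mem_univ _, ha0⟩)
    obtain ⟨hsfix, hsK⟩ := perm_symm_fix σ K hσid
    have key : ∀ i, u i (pB f S' i) ≤ u i (pB f S' (σ.symm i)) := by
      intro i
      by_cases hi : i ∈ K
      · have hx : σ.symm i ∈ K := hsK i hi
        have hxi : σ (σ.symm i) = i := σ.apply_symm_apply i
        have hgxi : g (σ.symm i) = i := by rw [← hσg _ hx, hxi]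
        have hxG : o ∈ G (σ.symm i) := (mem_filter.1 (hKA hx)).2
        have := (hgG _ hxG).2
        rw [hgxi] at this
        exact le_of_lt this
      · rw [hsfix i hi]
    have keystrict : ∀ i ∈ K, u i (pB f S' i) < u i (pB f S' (σ.symm i)) := by
      intro i hi
      have hx : σ.symm i ∈ K := hsK i hi
      have hxi : σ (σ.symm i) = i := σ.apply_symm_apply i
      have hgxi : g (σ.symm i) = i := by rw [← hσg _ hx, hxi]
      have hxG : o ∈ G (σ.symm i) := (mem_filter.1 (hKA hx)).2
      have := (hgG _ hxG).2
      rwa [hgxi] at this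
    set f'' : Fin m → Fin n := fun o' => σ (f o') with hf''
    have hB'' : ∀ i, pB f'' S' i = pB f S' (σ.symm i) := fun i => pB_perm f S' σ i
    have hInv'' : Inv f'' := by
      intro i j
      obtain ⟨O', hsub', hcard', hle'⟩ := hf i (σ.symm j)
      refine ⟨O', by rw [hB'']; exact hsub', hcard', ?_⟩
      rw [hB'', hB'']
      exact le_trans hle' (key i)
    have hmem'' : f'' ∈ T := mem_filter.2 ⟨mem_univ _, hInv''⟩
    have hsum : ∑ i, u i (pB f S' i) < ∑ i, u i (pB f'' S' i) := by
      obtain ⟨x0, hx0⟩ := hKne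
      refine Finset.sum_lt_sum (fun i _ => by rw [hB'']; exact key i) ⟨x0, mem_univ _, ?_⟩
      rw [hB'']
      exact keystrict x0 hx0
    have := hmax f'' hmem''
    linarith
  obtain ⟨a, haG, hbest⟩ := claim
  set fnew := Function.update f o a with hfnew
  have hBnew : ∀ i, pB fnew S i =
      if i = a then insert o (pB f S' i) else pB f S' i := fun i => pB_update f S o ho a i
  refine ⟨fnew, fun i j => ?_⟩
  rcases eq_or_ne i j with rfl | hij
  · exact ⟨∅, empty_subset _, by simp, by simp⟩
  rcases eq_or_ne j a with rfl | hja
  · -- j = a, i ≠ a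
    have hBi : pB fnew S i = pB f S' i := by rw [hBnew]; simp [hij]
    have hBa : pB fnew S j = insert o (pB f S' j) := by rw [hBnew]; simp
    by_cases hiG : o ∈ G i
    · refine ⟨{o}, ?_, by simp, ?_⟩
      · rw [hBa]; simp
      · rw [hBi, hBa, insert_sdiff_self' _ _ (hoB j)]
        exact hbest i hiG
    · obtain ⟨O', hsub', hcard', hle'⟩ := hf i j
      have hoO' : o ∉ O' := fun h => hoB j (hsub' h)
      refine ⟨O', ?_, hcard', ?_⟩
      · rw [hBa]; exact hsub'.trans (subset_insert _ _)
      · rw [hBi, hBa, insert_sdiff_not_mem _ _ _ hoO']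
        have hnm : o ∉ pB f S' j \ O' := fun h => hoB j (mem_sdiff.1 h).1
        exact le_trans ((hG i o _ hnm).2 hiG) hle'
  rcases eq_or_ne i a with rfl | hia
  · -- i = a, j ≠ a
    have hBi : pB fnew S i = insert o (pB f S' i) := by rw [hBnew]; simp
    have hBj : pB fnew S j = pB f S' j := by rw [hBnew]; simp [hja]
    obtain ⟨O', hsub', hcard', hle'⟩ := hf i j
    refine ⟨O', by rw [hBj]; exact hsub', hcard', ?_⟩
    rw [hBi, hBj]
    exact le_trans hle' ((hG i o _ (hoB i)).1 haG)
  · have hBi : pB fnew S i = pB f S' i := by rw [hBnew]; simp [hia]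
    have hBj : pB fnew S j = pB f S' j := by rw [hBnew]; simp [hja]
    rw [hBi, hBj]
    exact hf i j


lemma phase2 {n m : ℕ} (hn : 0 < n) (u : Fin n → Finset (Fin m) → ℝ)
    (G : Fin n → Finset (Fin m))
    (hG : ∀ i (o : Fin m) (T : Finset (Fin m)), o ∉ T →
      (o ∈ G i → u i T ≤ u i (insert o T)) ∧ (o ∉ G i → u i (insert o T) ≤ u i T))
    (S : Finset (Fin m)) :
    ∃ f : Fin m → Fin n, ∀ i j : Fin n,
      (∃ O' ⊆ pB f S j, O'.card ≤ 1 ∧ u i (pB f S i) ≥ u i (pB f S j \ O')) ∨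
      (∃ O' ⊆ pB f S i, O'.card ≤ 1 ∧ u i (pB f S i \ O') ≥ u i (pB f S j)) := by
  classical
  induction S using Finset.strongInduction with
  | _ S IH =>
  by_cases hall : ∀ o ∈ S, ∃ i, o ∈ G i
  · obtain ⟨f, hf⟩ := phase1 hn u G hG S hall
    exact ⟨f, fun i j => Or.inl (hf i j)⟩
  push_neg at hall
  obtain ⟨o, ho, hoch⟩ := hall
  set S' := S.erase o with hS'
  have hsub : S' ⊂ S := erase_ssubset ho
  obtain ⟨f0, hf0⟩ := IH S' hsub
  set Inv : (Fin m → Fin n) → Prop := fun f => ∀ i j : Fin n,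
      (∃ O' ⊆ pB f S' j, O'.card ≤ 1 ∧ u i (pB f S' i) ≥ u i (pB f S' j \ O')) ∨
      (∃ O' ⊆ pB f S' i, O'.card ≤ 1 ∧ u i (pB f S' i \ O') ≥ u i (pB f S' j)) with hInv
  set T : Finset (Fin m → Fin n) := univ.filter Inv with hT
  have hTne : T.Nonempty := ⟨f0, mem_filter.2 ⟨mem_univ _, hf0⟩⟩
  obtain ⟨f, hfT, hmax⟩ := T.exists_max_image (fun f => ∑ i, u i (pB f S' i)) hTne
  have hf : Inv f := (mem_filter.1 hfT).2
  have honS' : o ∉ S' := notMem_erase _ _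
  have hoB : ∀ i, o ∉ pB f S' i := fun i h => honS' (pB_subset f S' i h)
  -- claim: exists agent envying nobody
  have claim : ∃ i0 : Fin n, ∀ j, u i0 (pB f S' j) ≤ u i0 (pB f S' i0) := by
    by_contra hcon
    push_neg at hcon
    have hne : Nonempty (Fin n) := ⟨⟨0, hn⟩⟩
    have hgmax : ∀ i : Fin n, ∃ j, ∀ k, u i (pB f S' k) ≤ u i (pB f S' j) := by
      intro i
      obtain ⟨j, _, hj⟩ := univ.exists_max_image (fun k => u i (pB f S' k)) univ_nonempty
      exact ⟨j, fun k => hj k (mem_univ _)⟩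
    set g : Fin n → Fin n := fun i => (hgmax i).choose with hg
    have hgprop : ∀ i k, u i (pB f S' k) ≤ u i (pB f S' (g i)) := fun i => (hgmax i).choose_spec
    have hgstrict : ∀ i, u i (pB f S' i) < u i (pB f S' (g i)) := by
      intro i
      obtain ⟨j, hj⟩ := hcon i
      exact lt_of_lt_of_le hj (hgprop i j)
    obtain ⟨σ, K, hKne, _, hσg, hσid⟩ :=
      exists_cycle g univ (fun x _ => mem_univ _) ⟨0, hn⟩ (mem_univ _)
    set f'' : Fin m → Fin n := fun o' => σ.symm (f o') with hf''
    have hB'' : ∀ i, pB f'' S' i = pB f S' (σ i) := by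
      intro i
      have := pB_perm f S' σ.symm i
      simpa using this
    have hfix : ∀ i, i ∉ K → σ i = i := hσid
    have hInv'' : Inv f'' := by
      intro i j
      by_cases hiK : i ∈ K
      · left
        refine ⟨∅, empty_subset _, by simp, ?_⟩
        rw [hB'', hB'', sdiff_empty, hσg i hiK]
        exact hgprop i (σ j)
      · have hBi : pB f'' S' i = pB f S' i := by rw [hB'', hfix i hiK]
        rcases hf i (σ j) with ⟨O', h1, h2, h3⟩ | ⟨O', h1, h2, h3⟩
        · exact Or.inl ⟨O', by rw [hB'' j]; exact h1, h2, by rw [hB'' j, hBi]; exact h3⟩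
        · exact Or.inr ⟨O', by rw [hBi]; exact h1, h2, by rw [hB'' j, hBi]; exact h3⟩
    have hmem'' : f'' ∈ T := mem_filter.2 ⟨mem_univ _, hInv''⟩
    have hsum : ∑ i, u i (pB f S' i) < ∑ i, u i (pB f'' S' i) := by
      obtain ⟨x0, hx0⟩ := hKne
      refine Finset.sum_lt_sum (fun i _ => ?_) ⟨x0, mem_univ _, ?_⟩
      · rw [hB'']
        by_cases hiK : i ∈ K
        · rw [hσg i hiK]; exact le_of_lt (hgstrict i)
        · rw [hfix i hiK]
      · rw [hB'', hσg x0 hx0]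
        exact hgstrict x0
    have := hmax f'' hmem''
    linarith
  obtain ⟨i0, hi0⟩ := claim
  set fnew := Function.update f o i0 with hfnew
  have hBnew : ∀ i, pB fnew S i =
      if i = i0 then insert o (pB f S' i) else pB f S' i := fun i => pB_update f S o ho i0 i
  refine ⟨fnew, fun i j => ?_⟩
  rcases eq_or_ne i j with rfl | hij
  · exact Or.inl ⟨∅, empty_subset _, by simp, by simp⟩
  rcases eq_or_ne j i0 with rfl | hji0
  · -- j = i0, i ≠ i0; o is a chore for i
    have hBi : pB fnew S i = pB f S' i := by rw [hBnew]; simp [hij]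
    have hBj : pB fnew S j = insert o (pB f S' j) := by rw [hBnew]; simp
    rcases hf i j with ⟨O', h1, h2, h3⟩ | ⟨O', h1, h2, h3⟩
    · left
      have hoO' : o ∉ O' := fun h => hoB j (h1 h)
      refine ⟨O', ?_, h2, ?_⟩
      · rw [hBj]; exact h1.trans (subset_insert _ _)
      · rw [hBi, hBj, insert_sdiff_not_mem _ _ _ hoO']
        have hnm : o ∉ pB f S' j \ O' := fun h => hoB j (mem_sdiff.1 h).1
        exact le_trans ((hG i o _ hnm).2 (hoch i)) h3
    · right
      refine ⟨O', by rw [hBi]; exact h1, h2, ?_⟩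
      rw [hBi, hBj]
      exact le_trans ((hG i o _ (hoB j)).2 (hoch i)) h3
  rcases eq_or_ne i i0 with rfl | hii0
  · -- i = i0, j ≠ i0
    have hBi : pB fnew S i = insert o (pB f S' i) := by rw [hBnew]; simp
    have hBj : pB fnew S j = pB f S' j := by rw [hBnew]; simp [hji0]
    right
    refine ⟨{o}, ?_, by simp, ?_⟩
    · rw [hBi]; simp
    · rw [hBi, hBj, insert_sdiff_self' _ _ (hoB i)]
      exact hi0 j
  · have hBi : pB fnew S i = pB f S' i := by rw [hBnew]; simp [hii0]
    have hBj : pB fnew S j = pB f S' j := by rw [hBnew]; simp [hji0]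
    rw [hBi, hBj]
    exact hf i j


/-- For any number `n` of agents with doubly-monotonic utilities over a finite
set of indivisible items, there exists a complete allocation satisfying EF1.
Double monotonicity of `u i`: there is a set `G` of goods (its complement being the chores
`C`) such that adding a good never decreases utility and adding a chore never increases it. -/
theorem ef1_exists_doubly_monotonic (n m : ℕ) (hn : 0 < n)
    (u : Fin n → Finset (Fin m) → ℝ)
    (hu0 : ∀ i, u i ∅ = 0)
    (hdm : ∀ i : Fin n, ∃ G : Finset (Fin m),
      ∀ (o : Fin m) (S : Finset (Fin m)), o ∉ S →
        (o ∈ G → u i S ≤ u i (insert o S)) ∧ (o ∉ G → u i (insert o S) ≤ u i S)) :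
    ∃ f : Fin m → Fin n, ∀ i j : Fin n,
      (∃ O' ⊆ bundle f j, O'.card ≤ 1 ∧ u i (bundle f i) ≥ u i (bundle f j \ O')) ∨
      (∃ O' ⊆ bundle f i, O'.card ≤ 1 ∧ u i (bundle f i \ O') ≥ u i (bundle f j)) := by
  classical
  choose G hG using hdm
  obtain ⟨f, hf⟩ := phase2 hn u G hG Finset.univ
  exact ⟨f, fun i j => hf i j⟩
end

section
/- For two agents with arbitrary utility functions over a finite set of indivisible items (normalized so that the empty bundle has utility zero), there always exists a complete allocation of the items that satisfies envy-freeness up to one item (EF1). -/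
open Finset

/-!
Cut and choose. Order the items and let `Lₖ` be the first `k` of them. Moving the cut from `k`
to `k + 1` transfers one item `a` from `Lₖᶜ` to `Lₖ₊₁`; comparing `v Lₖ` with `v Lₖ₊₁ᶜ` shows
that agent 0 is EF1 holding the same side at both cuts, since `a` is the item to forget on
either side. As `(L₀, L₀ᶜ) = (∅, univ)` and `(Lₘ, Lₘᶜ) = (univ, ∅)`, the side she accepts
cannot stay the same all the way, so at some cut she accepts both sides. She cuts there and
agent 1 takes the side she values more.
-/

namespace EF1

section Valuation

variable {α β : Type*} [DecidableEq α] [LinearOrder β]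

/-- An agent with valuation `v` holding `X` is envy-free up to one item towards `Y`. -/
def IsEF1 (v : Finset α → β) (X Y : Finset α) : Prop :=
  (∃ O' ⊆ Y, O'.card ≤ 1 ∧ v X ≥ v (Y \ O')) ∨
  (∃ O' ⊆ X, O'.card ≤ 1 ∧ v (X \ O') ≥ v Y)

variable {v : Finset α → β} {X Y : Finset α} {a : α}

lemma IsEF1.of_le (h : v Y ≤ v X) : IsEF1 v X Y :=
  Or.inl ⟨∅, empty_subset _, by simp, by simpa using h⟩

lemma IsEF1.refl (v : Finset α → β) (X : Finset α) : IsEF1 v X X :=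
  .of_le le_rfl

lemma IsEF1.of_erase_right (ha : a ∈ Y) (h : v (Y.erase a) ≤ v X) : IsEF1 v X Y :=
  Or.inl ⟨{a}, singleton_subset_iff.2 ha, by simp, by rwa [sdiff_singleton_eq_erase]⟩

lemma IsEF1.of_erase_left (ha : a ∈ X) (h : v Y ≤ v (X.erase a)) : IsEF1 v X Y :=
  Or.inr ⟨{a}, singleton_subset_iff.2 ha, by simp, by rwa [sdiff_singleton_eq_erase]⟩

variable [Fintype α]

lemma isEF1_cut_step (v : Finset α → β) {S : Finset α} (ha : a ∉ S) :
    (IsEF1 v S Sᶜ ∧ IsEF1 v (insert a S) (insert a S)ᶜ) ∨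
      (IsEF1 v Sᶜ S ∧ IsEF1 v (insert a S)ᶜ (insert a S)) := by
  have haS : a ∈ Sᶜ := mem_compl.2 ha
  have haI : a ∈ insert a S := mem_insert_self a S
  rw [compl_insert]
  rcases le_total (v (Sᶜ.erase a)) (v S) with h | h
  · refine .inl ⟨.of_erase_right haS h, .of_erase_left haI ?_⟩
    rwa [erase_insert ha]
  · refine .inr ⟨.of_erase_left haS h, .of_erase_right haI ?_⟩
    rwa [erase_insert ha]

end Valuation

lemma exists_and_of_steps_of_swap {A B : ℕ → Prop} {m : ℕ} (hm : 0 < m)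
    (hstep : ∀ k < m, (A k ∧ A (k + 1)) ∨ (B k ∧ B (k + 1)))
    (hA : A 0 → B m) (hB : B 0 → A m) : ∃ k, A k ∧ B k := by
  by_contra! hne
  -- otherwise each of `A`, `B` propagates from `0` to `m`
  have hprop : ∀ P : ℕ → Prop, (∀ k < m, P k → P (k + 1)) → P 0 → P m := by
    intro P h h0
    suffices ∀ k ≤ m, P k from this m le_rfl
    intro k
    induction k with
    | zero => exact fun _ => h0
    | succ k ih => exact fun hk => h k (by omega) (ih (by omega))
  have hAstep : ∀ k < m, A k → A (k + 1) := fun k hk hAk =>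
    (hstep k hk).elim And.right fun h => absurd h.1 (hne k hAk)
  have hBstep : ∀ k < m, B k → B (k + 1) := fun k hk hBk =>
    (hstep k hk).elim (fun h => absurd hBk (hne k h.1)) And.right
  rcases hstep 0 hm with ⟨h0, -⟩ | ⟨h0, -⟩
  · exact hne m (hprop A hAstep h0) (hA h0)
  · exact hne m (hB h0) (hprop B hBstep h0)

def initSeg (m k : ℕ) : Finset (Fin m) :=
  univ.filter fun o => (o : ℕ) < k

@[simp] lemma initSeg_zero (m : ℕ) : initSeg m 0 = ∅ := by
  simp [initSeg]

@[simp] lemma initSeg_self (m : ℕ) : initSeg m m = univ := by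
  simp [initSeg]

lemma initSeg_succ {m k : ℕ} (hk : k < m) : initSeg m (k + 1) = insert ⟨k, hk⟩ (initSeg m k) := by
  ext o
  simp only [initSeg, mem_filter, mem_univ, true_and, mem_insert, Fin.ext_iff]
  omega

lemma notMem_initSeg {m k : ℕ} (hk : k < m) : (⟨k, hk⟩ : Fin m) ∉ initSeg m k := by
  simp [initSeg]

lemma exists_initSeg_isEF1_both {β : Type*} [LinearOrder β] (m : ℕ)
    (v : Finset (Fin m) → β) :
    ∃ k, IsEF1 v (initSeg m k) (initSeg m k)ᶜ ∧ IsEF1 v (initSeg m k)ᶜ (initSeg m k) := by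
  rcases Nat.eq_zero_or_pos m with rfl | hm
  · refine ⟨0, ?_⟩
    simp only [initSeg_zero, compl_empty, univ_eq_empty]
    exact ⟨.refl v ∅, .refl v ∅⟩
  refine exists_and_of_steps_of_swap hm (fun k hk => ?_) ?_ ?_
  · rw [initSeg_succ hk]
    exact isEF1_cut_step v (notMem_initSeg hk)
  all_goals simp

def allocOf {m : ℕ} (S : Finset (Fin m)) : Fin m → Fin 2 :=
  fun o => if o ∈ S then 0 else 1

lemma bundle_allocOf_zero {m : ℕ} (S : Finset (Fin m)) : bundle (allocOf S) 0 = S := by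
  ext o
  by_cases h : o ∈ S <;> simp [bundle, allocOf, h]

lemma bundle_allocOf_one {m : ℕ} (S : Finset (Fin m)) : bundle (allocOf S) 1 = Sᶜ := by
  ext o
  by_cases h : o ∈ S <;> simp [bundle, allocOf, h]

lemma isEF1_allocOf {β : Type*} [LinearOrder β] {m : ℕ} (u : Fin 2 → Finset (Fin m) → β)
    {S : Finset (Fin m)}
    (h₀ : IsEF1 (u 0) S Sᶜ) (h₁ : IsEF1 (u 1) Sᶜ S) (i j : Fin 2) :
    IsEF1 (u i) (bundle (allocOf S) i) (bundle (allocOf S) j) := by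
  fin_cases i <;> fin_cases j <;>
    simp only [Fin.zero_eta, Fin.mk_one, bundle_allocOf_zero, bundle_allocOf_one] <;>
    first | exact .refl _ _ | assumption

end EF1

theorem ef1_exists_two_agents_general_general (m : ℕ)
    (u : Fin 2 → Finset (Fin m) → ℝ) :
    ∃ f : Fin m → Fin 2, ∀ i j : Fin 2,
      (∃ O' ⊆ bundle f j, O'.card ≤ 1 ∧ u i (bundle f i) ≥ u i (bundle f j \ O')) ∨
      (∃ O' ⊆ bundle f i, O'.card ≤ 1 ∧ u i (bundle f i \ O') ≥ u i (bundle f j)) := by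
  obtain ⟨k, hL, hR⟩ := EF1.exists_initSeg_isEF1_both m (u 0)
  rcases le_total (u 1 (EF1.initSeg m k)) (u 1 (EF1.initSeg m k)ᶜ) with h | h
  · exact ⟨EF1.allocOf (EF1.initSeg m k), EF1.isEF1_allocOf u hL (.of_le h)⟩
  · exact ⟨EF1.allocOf (EF1.initSeg m k)ᶜ,
      EF1.isEF1_allocOf u (by rwa [compl_compl]) (by rw [compl_compl]; exact .of_le h)⟩

/-- For two agents with arbitrary utility functions over a finite set of
indivisible items (normalized so that the empty bundle has utility zero), there exists a
complete allocation satisfying EF1. -/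
theorem ef1_exists_two_agents_general (m : ℕ)
    (u : Fin 2 → Finset (Fin m) → ℝ) (hu0 : ∀ i, u i ∅ = 0) :
    ∃ f : Fin m → Fin 2, ∀ i j : Fin 2,
      (∃ O' ⊆ bundle f j, O'.card ≤ 1 ∧ u i (bundle f i) ≥ u i (bundle f j \ O')) ∨
      (∃ O' ⊆ bundle f i, O'.card ≤ 1 ∧ u i (bundle f i \ O') ≥ u i (bundle f j)) :=
  ef1_exists_two_agents_general_general m u
end

section
/- For agents with additive utility functions over a finite set of indivisible items that may be goods or chores, every allocation satisfying envy-freeness up to one item (EF1) also satisfies proportionality up to one item (PROP1). -/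
open Finset

/-- With additive utilities over indivisible items that may be goods or chores,
every complete allocation satisfying EF1 also satisfies PROP1. -/
theorem ef1_implies_prop1 (n m : ℕ) (hn : 0 < n) (v : Fin n → Fin m → ℝ)
    (f : Fin m → Fin n)
    (hEF1 : ∀ i j : Fin n,
      (∃ O' ⊆ bundle f j, O'.card ≤ 1 ∧
        (∑ o ∈ bundle f i, v i o) ≥ ∑ o ∈ bundle f j \ O', v i o) ∨
      (∃ O' ⊆ bundle f i, O'.card ≤ 1 ∧
        (∑ o ∈ bundle f i \ O', v i o) ≥ ∑ o ∈ bundle f j, v i o)) :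
    ∀ i : Fin n,
      (∑ o ∈ bundle f i, v i o) ≥ (∑ o : Fin m, v i o) / n ∨
      (∃ o : Fin m, o ∉ bundle f i ∧
        (∑ o' ∈ insert o (bundle f i), v i o') ≥ (∑ o' : Fin m, v i o') / n) ∨
      (∃ o ∈ bundle f i,
        (∑ o' ∈ bundle f i \ {o}, v i o') ≥ (∑ o' : Fin m, v i o') / n) := by
  intro i
  have claim : ∀ j : Fin n, ∃ C : ℝ, 0 ≤ C ∧
      (∑ o ∈ bundle f j, v i o) ≤ (∑ o ∈ bundle f i, v i o) + C ∧
      (C = 0 ∨ (∃ o, o ∉ bundle f i ∧ v i o = C) ∨ (∃ o ∈ bundle f i, -v i o = C)) := by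
    intro j
    by_cases hij : j = i
    · exact ⟨0, le_refl 0, by simp [hij], Or.inl rfl⟩
    rcases hEF1 i j with ⟨O', hsub, hcard, hineq⟩ | ⟨O', hsub, hcard, hineq⟩
    · set val := ∑ o ∈ O', v i o with hval
      have hs : ∑ o ∈ bundle f j \ O', v i o = (∑ o ∈ bundle f j, v i o) - val :=
        Finset.sum_sdiff_eq_sub hsub
      refine ⟨max val 0, le_max_right _ _, ?_, ?_⟩
      · rw [hs] at hineq
        have := le_max_left val 0
        linarith
      · rcases le_or_gt val 0 with h0 | h0
        · left; exact max_eq_right h0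
        · right; left
          have hne : O'.Nonempty := by
            rcases O'.eq_empty_or_nonempty with he | hne
            · rw [he, Finset.sum_empty] at hval
              exact absurd hval (by linarith)
            · exact hne
          obtain ⟨a, ha⟩ := Finset.card_eq_one.mp (le_antisymm hcard hne.card_pos)
          have haj : a ∈ bundle f j := hsub (ha ▸ Finset.mem_singleton_self a)
          have hfa : f a = j := by simpa [bundle] using haj
          refine ⟨a, ?_, ?_⟩
          · simp [bundle, hfa, hij]
          · have hva : val = v i a := by rw [hval, ha, Finset.sum_singleton]
            rw [max_eq_left h0.le, hva]
    · set val := -∑ o ∈ O', v i o with hval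
      have hs : ∑ o ∈ bundle f i \ O', v i o = (∑ o ∈ bundle f i, v i o) + val := by
        rw [Finset.sum_sdiff_eq_sub hsub, hval]; ring
      refine ⟨max val 0, le_max_right _ _, ?_, ?_⟩
      · rw [hs] at hineq
        have := le_max_left val 0
        linarith
      · rcases le_or_gt val 0 with h0 | h0
        · left; exact max_eq_right h0
        · right; right
          have hne : O'.Nonempty := by
            rcases O'.eq_empty_or_nonempty with he | hne
            · rw [he, Finset.sum_empty, neg_zero] at hval
              exact absurd hval (by linarith)
            · exact hne
          obtain ⟨a, ha⟩ := Finset.card_eq_one.mp (le_antisymm hcard hne.card_pos)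
          have hai : a ∈ bundle f i := hsub (ha ▸ Finset.mem_singleton_self a)
          refine ⟨a, hai, ?_⟩
          have hva : val = -v i a := by rw [hval, ha, Finset.sum_singleton]
          rw [max_eq_left h0.le, ← hva]
  choose C hC0 hCineq hCwit using claim
  obtain ⟨j₀, _, hj₀⟩ := Finset.exists_max_image Finset.univ C ⟨i, Finset.mem_univ i⟩
  set M := C j₀ with hM
  have hM0 : 0 ≤ M := hC0 j₀
  have hall : ∀ j, ∑ o ∈ bundle f j, v i o ≤ (∑ o ∈ bundle f i, v i o) + M := by
    intro j
    have h1 := hCineq j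
    have h2 := hj₀ j (Finset.mem_univ j)
    linarith
  have hsumfib : ∑ j : Fin n, ∑ o ∈ bundle f j, v i o = ∑ o : Fin m, v i o := by
    simpa [bundle] using Finset.sum_fiberwise Finset.univ f (v i)
  have hnpos : (0:ℝ) < n := by exact_mod_cast hn
  have hkey : (∑ o : Fin m, v i o) / n ≤ (∑ o ∈ bundle f i, v i o) + M := by
    rw [div_le_iff₀ hnpos]
    calc ∑ o : Fin m, v i o = ∑ j : Fin n, ∑ o ∈ bundle f j, v i o := hsumfib.symm
      _ ≤ ∑ _j : Fin n, ((∑ o ∈ bundle f i, v i o) + M) :=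
          Finset.sum_le_sum fun j _ => hall j
      _ = ((∑ o ∈ bundle f i, v i o) + M) * n := by
          rw [Finset.sum_const, Finset.card_univ, Fintype.card_fin, nsmul_eq_mul]; ring
  rcases hCwit j₀ with h | ⟨o, ho, hv⟩ | ⟨o, ho, hv⟩
  · left; linarith
  · right; left
    refine ⟨o, ho, ?_⟩
    rw [Finset.sum_insert ho]
    linarith
  · right; right
    refine ⟨o, ho, ?_⟩
    have hs : ∑ o' ∈ bundle f i \ {o}, v i o' = (∑ o' ∈ bundle f i, v i o') - v i o := by
      rw [Finset.sum_sdiff_eq_sub (Finset.singleton_subset_iff.mpr ho), Finset.sum_singleton]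
    rw [hs]
    linarith
end

section
/- For any number n of agents with additive utility functions over a finite set of indivisible chores (every item has non-positive value to every agent), there always exists a complete allocation that satisfies proportionality up to any item (PROPX). -/
open Finset


open Classical in
/-- agents whose current load is at most the proportional share 1/n -/
noncomputable def activeSet {n : ℕ} (L : Fin n → ℝ) : Finset (Fin n) :=
  Finset.univ.filter fun i => L i ≤ 1/(n:ℝ)

lemma mem_activeSet {n : ℕ} {L : Fin n → ℝ} {i : Fin n} :
    i ∈ activeSet L ↔ L i ≤ 1/(n:ℝ) := by
  simp [activeSet]

noncomputable def pickAg {n : ℕ} (hn : 0 < n) (d : Fin n → ℕ → ℝ) (t : ℕ) (L : Fin n → ℝ) :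
    Fin n :=
  if h : (activeSet L).Nonempty then
    (Finset.exists_min_image (activeSet L) (fun i => d i t) h).choose
  else ⟨0, hn⟩

lemma pickAg_mem {n : ℕ} (hn : 0 < n) (d : Fin n → ℕ → ℝ) (t : ℕ) (L : Fin n → ℝ)
    (h : (activeSet L).Nonempty) : pickAg hn d t L ∈ activeSet L := by
  rw [pickAg, dif_pos h]
  exact (Finset.exists_min_image (activeSet L) (fun i => d i t) h).choose_spec.1

lemma pickAg_min {n : ℕ} (hn : 0 < n) (d : Fin n → ℕ → ℝ) (t : ℕ) (L : Fin n → ℝ)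
    (h : (activeSet L).Nonempty) : ∀ j ∈ activeSet L, d (pickAg hn d t L) t ≤ d j t := by
  rw [pickAg, dif_pos h]
  exact (Finset.exists_min_image (activeSet L) (fun i => d i t) h).choose_spec.2

noncomputable def loads {n : ℕ} (hn : 0 < n) (d : Fin n → ℕ → ℝ) : ℕ → Fin n → ℝ
  | 0 => 0
  | t+1 => fun i =>
      loads hn d t i + (if pickAg hn d t (loads hn d t) = i then d i t else 0)

noncomputable def galg {n : ℕ} (hn : 0 < n) (d : Fin n → ℕ → ℝ) (t : ℕ) : Fin n :=
  pickAg hn d t (loads hn d t)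

lemma loads_eq_sum {n : ℕ} (hn : 0 < n) (d : Fin n → ℕ → ℝ) (t : ℕ) (i : Fin n) :
    loads hn d t i = ∑ s ∈ (range t).filter (fun s => galg hn d s = i), d i s := by
  induction t with
  | zero => simp [loads]
  | succ t ih =>
    rw [range_add_one, filter_insert]
    by_cases h : galg hn d t = i
    · rw [if_pos h, sum_insert (by simp)]
      simp only [loads, galg] at *
      rw [if_pos h, ih]; ring
    · rw [if_neg h]
      simp only [loads, galg] at *
      rw [if_neg h, ih]; ring

lemma loads_mono {n : ℕ} (hn : 0 < n) (d : Fin n → ℕ → ℝ) (hpos : ∀ i t, 0 ≤ d i t)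
    (i : Fin n) : Monotone (fun t => loads hn d t i) := by
  apply monotone_nat_of_le_succ
  intro t
  simp only [loads]
  have : (0:ℝ) ≤ if pickAg hn d t (loads hn d t) = i then d i t else 0 := by
    split <;> simp [hpos]
  linarith

lemma sum_loads {n : ℕ} (hn : 0 < n) (d : Fin n → ℕ → ℝ) (t : ℕ) :
    ∑ i, loads hn d t i = ∑ s ∈ range t, d (galg hn d s) s := by
  induction t with
  | zero => simp [loads]
  | succ t ih =>
    rw [range_add_one, sum_insert (by simp)]
    simp only [loads]
    rw [sum_add_distrib, ih]
    have : ∑ i, (if pickAg hn d t (loads hn d t) = i then d i t else 0)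
        = d (galg hn d t) t := by
      rw [← galg]
      simp
    rw [this]; ring

/-- key invariant: at every time `t ≤ m` some agent is still active -/
lemma active_nonempty {n : ℕ} (hn : 0 < n) (m : ℕ) (d : Fin n → ℕ → ℝ)
    (hpos : ∀ i t, 0 ≤ d i t) (hsum : ∀ i, ∑ t ∈ range m, d i t = 1) :
    ∀ t, t ≤ m → (activeSet (loads hn d t)).Nonempty := by
  intro t
  induction t with
  | zero =>
    intro _
    refine ⟨⟨0, hn⟩, ?_⟩
    rw [mem_activeSet]
    simp [loads]
  | succ t ih =>
    intro htm
    have ih' := ih (le_of_lt (Nat.lt_of_succ_le htm))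
    by_contra hne
    rw [Finset.not_nonempty_iff_eq_empty] at hne
    have hall : ∀ j : Fin n, 1/(n:ℝ) < loads hn d (t+1) j := by
      intro j
      by_contra hj
      push_neg at hj
      have : j ∈ activeSet (loads hn d (t+1)) := mem_activeSet.2 hj
      rw [hne] at this; exact absurd this (notMem_empty j)
    obtain ⟨k, hk⟩ := ih'
    have hkact : ∀ s, s ≤ t → k ∈ activeSet (loads hn d s) := by
      intro s hs
      rw [mem_activeSet]
      exact le_trans (loads_mono hn d hpos k hs) (mem_activeSet.1 hk)
    have hmin : ∀ s, s ≤ t → d (galg hn d s) s ≤ d k s := by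
      intro s hs
      exact pickAg_min hn d s (loads hn d s) ⟨k, hkact s hs⟩ k (hkact s hs)
    have h1 : (1:ℝ) < ∑ i, loads hn d (t+1) i := by
      have : ∑ _i : Fin n, (1/(n:ℝ)) < ∑ i, loads hn d (t+1) i := by
        apply Finset.sum_lt_sum_of_nonempty ⟨⟨0, hn⟩, mem_univ _⟩
        intro i _; exact hall i
      have hcast : (0:ℝ) < (n:ℝ) := by exact_mod_cast hn
      rw [Finset.sum_const, card_univ, Fintype.card_fin] at this
      rw [nsmul_eq_mul] at this
      rw [mul_one_div, div_self (ne_of_gt hcast)] at this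
      exact this
    have h2 : ∑ i, loads hn d (t+1) i ≤ ∑ s ∈ range (t+1), d k s := by
      rw [sum_loads]
      apply Finset.sum_le_sum
      intro s hs
      exact hmin s (Nat.lt_succ_iff.1 (mem_range.1 hs))
    have h3 : ∑ s ∈ range (t+1), d k s ≤ ∑ s ∈ range m, d k s := by
      apply Finset.sum_le_sum_of_subset_of_nonneg
      · exact Finset.range_subset_range.2 htm
      · intro s _ _; exact hpos k s
    rw [hsum k] at h3
    linarith

theorem stage1 {n : ℕ} (hn : 0 < n) (m : ℕ) (d : Fin n → ℕ → ℝ)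
    (hpos : ∀ i t, 0 ≤ d i t) (hanti : ∀ i, Antitone (d i))
    (hsum : ∀ i, ∑ t ∈ range m, d i t = 1) :
    ∃ g : ℕ → Fin n, ∀ i, ∀ t ∈ (range m).filter (fun s => g s = i), 0 < d i t →
      ∑ s ∈ ((range m).filter (fun s => g s = i)).erase t, d i s ≤ 1/(n:ℝ) := by
  classical
  refine ⟨galg hn d, ?_⟩
  intro i t ht hdt
  rw [mem_filter, mem_range] at ht
  obtain ⟨htm, hgt⟩ := ht
  set B := (range m).filter (fun s => galg hn d s = i) with hB
  -- the largest index in B with positive value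
  set P := B.filter (fun s => 0 < d i s) with hP
  have htP : t ∈ P := by
    rw [hP, mem_filter]
    exact ⟨by rw [hB, mem_filter, mem_range]; exact ⟨htm, hgt⟩, hdt⟩
  set tp := P.max' ⟨t, htP⟩ with htp
  have htpP : tp ∈ P := P.max'_mem ⟨t, htP⟩
  have htle : t ≤ tp := P.le_max' t htP
  have htpB : tp ∈ B := (mem_filter.1 htpP).1
  have htpm : tp < m := mem_range.1 (mem_filter.1 htpB).1
  have hgtp : galg hn d tp = i := (mem_filter.1 htpB).2
  have hdtp : 0 < d i tp := (mem_filter.1 htpP).2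
  have htB : t ∈ B := by rw [hB, mem_filter, mem_range]; exact ⟨htm, hgt⟩
  -- Σ_{B.erase t} = Σ_B - d i t ≤ Σ_B - d i tp = Σ_{B.erase tp}
  have e1 : ∑ s ∈ B.erase t, d i s = (∑ s ∈ B, d i s) - d i t := by
    rw [← Finset.sum_erase_add B _ htB]; ring
  have e2 : ∑ s ∈ B.erase tp, d i s = (∑ s ∈ B, d i s) - d i tp := by
    rw [← Finset.sum_erase_add B _ htpB]; ring
  have hdd : d i tp ≤ d i t := hanti i htle
  -- Σ_{B.erase tp} splits at tp: indices above tp have value 0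
  have e3 : ∑ s ∈ B.erase tp, d i s = ∑ s ∈ (B.erase tp).filter (fun s => s < tp), d i s
      + ∑ s ∈ (B.erase tp).filter (fun s => ¬ s < tp), d i s :=
    (Finset.sum_filter_add_sum_filter_not _ _ _).symm
  have e4 : ∑ s ∈ (B.erase tp).filter (fun s => ¬ s < tp), d i s = 0 := by
    apply Finset.sum_eq_zero
    intro s hs
    rw [mem_filter, Finset.mem_erase] at hs
    obtain ⟨⟨hne, hsB⟩, hnlt⟩ := hs
    by_contra hds
    have hpos' : 0 < d i s := lt_of_le_of_ne (hpos i s) (Ne.symm hds)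
    have hsP : s ∈ P := by rw [hP, mem_filter]; exact ⟨hsB, hpos'⟩
    have := P.le_max' s hsP
    rw [← htp] at this
    omega
  have e5 : (B.erase tp).filter (fun s => s < tp) = (range tp).filter (fun s => galg hn d s = i) := by
    ext s
    simp only [mem_filter, Finset.mem_erase, mem_range, hB]
    constructor
    · rintro ⟨⟨hne, hsm, hg⟩, hlt⟩; exact ⟨hlt, hg⟩
    · rintro ⟨hlt, hg⟩; exact ⟨⟨by omega, by omega, hg⟩, hlt⟩
  have e6 : ∑ s ∈ (range tp).filter (fun s => galg hn d s = i), d i s = loads hn d tp i :=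
    (loads_eq_sum hn d tp i).symm
  -- agent i = galg tp was active at time tp
  have hact : loads hn d tp i ≤ 1/(n:ℝ) := by
    have hne := active_nonempty hn m d hpos hsum tp (le_of_lt htpm)
    have := pickAg_mem hn d tp (loads hn d tp) hne
    rw [← galg, hgtp, mem_activeSet] at this
    exact this
  calc ∑ s ∈ B.erase t, d i s = (∑ s ∈ B, d i s) - d i t := e1
    _ ≤ (∑ s ∈ B, d i s) - d i tp := by linarith
    _ = ∑ s ∈ B.erase tp, d i s := e2.symm
    _ = loads hn d tp i := by rw [e3, e4, e5, e6]; ring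
    _ ≤ 1/(n:ℝ) := hact


noncomputable def pickMin {m : ℕ} (hm : 0 < m) (w : Fin m → ℝ) (S : Finset (Fin m)) : Fin m :=
  if h : S.Nonempty then (Finset.exists_min_image S w h).choose else ⟨0, hm⟩

lemma pickMin_mem {m : ℕ} (hm : 0 < m) (w : Fin m → ℝ) {S : Finset (Fin m)}
    (h : S.Nonempty) : pickMin hm w S ∈ S := by
  rw [pickMin, dif_pos h]
  exact (Finset.exists_min_image S w h).choose_spec.1

lemma pickMin_min {m : ℕ} (hm : 0 < m) (w : Fin m → ℝ) {S : Finset (Fin m)}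
    (h : S.Nonempty) : ∀ o ∈ S, w (pickMin hm w S) ≤ w o := by
  rw [pickMin, dif_pos h]
  exact (Finset.exists_min_image S w h).choose_spec.2

noncomputable def remSet {m : ℕ} (hm : 0 < m) (W : ℕ → Fin m → ℝ) : ℕ → Finset (Fin m)
  | 0 => Finset.univ
  | t+1 => (remSet hm W t).erase (pickMin hm (W t) (remSet hm W t))

noncomputable def chosen {m : ℕ} (hm : 0 < m) (W : ℕ → Fin m → ℝ) (t : ℕ) : Fin m :=
  pickMin hm (W t) (remSet hm W t)

lemma remSet_card {m : ℕ} (hm : 0 < m) (W : ℕ → Fin m → ℝ) :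
    ∀ t, t ≤ m → (remSet hm W t).card = m - t := by
  intro t
  induction t with
  | zero => intro _; simp [remSet]
  | succ t ih =>
    intro h
    have h1 := ih (by omega)
    have hne : (remSet hm W t).Nonempty := by
      rw [← Finset.card_pos, h1]; omega
    rw [remSet, Finset.card_erase_of_mem (pickMin_mem hm (W t) hne), h1]
    omega

lemma remSet_nonempty {m : ℕ} (hm : 0 < m) (W : ℕ → Fin m → ℝ) {t : ℕ} (h : t < m) :
    (remSet hm W t).Nonempty := by
  rw [← Finset.card_pos, remSet_card hm W t (le_of_lt h)]; omega

lemma chosen_mem {m : ℕ} (hm : 0 < m) (W : ℕ → Fin m → ℝ) {t : ℕ} (h : t < m) :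
    chosen hm W t ∈ remSet hm W t :=
  pickMin_mem hm (W t) (remSet_nonempty hm W h)

lemma chosen_min {m : ℕ} (hm : 0 < m) (W : ℕ → Fin m → ℝ) {t : ℕ} (h : t < m) :
    ∀ o ∈ remSet hm W t, W t (chosen hm W t) ≤ W t o :=
  pickMin_min hm (W t) (remSet_nonempty hm W h)

lemma remSet_subset {m : ℕ} (hm : 0 < m) (W : ℕ → Fin m → ℝ) {s t : ℕ} (h : s ≤ t) :
    remSet hm W t ⊆ remSet hm W s := by
  induction t with
  | zero => rw [Nat.le_zero.1 h]
  | succ t ih =>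
    rcases Nat.lt_or_ge s (t+1) with h' | h'
    · exact subset_trans (by rw [remSet]; exact Finset.erase_subset _ _) (ih (by omega))
    · have : s = t+1 := by omega
      rw [this]
  
lemma chosen_not_mem {m : ℕ} (hm : 0 < m) (W : ℕ → Fin m → ℝ) {s t : ℕ} (h : s < t) :
    chosen hm W s ∉ remSet hm W t := by
  intro hmem
  have := remSet_subset hm W (show s+1 ≤ t by omega) hmem
  rw [remSet] at this
  exact (Finset.ne_of_mem_erase this) rfl

lemma chosen_inj {m : ℕ} (hm : 0 < m) (W : ℕ → Fin m → ℝ) {s t : ℕ}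
    (hs : s < m) (ht : t < m) (h : chosen hm W s = chosen hm W t) : s = t := by
  rcases Nat.lt_trichotomy s t with h' | h' | h'
  · exact absurd (h ▸ chosen_mem hm W ht) (chosen_not_mem hm W h')
  · exact h'
  · exact absurd (h ▸ chosen_mem hm W hs) (fun hh => chosen_not_mem hm W h' hh)

lemma chosen_surj {m : ℕ} (hm : 0 < m) (W : ℕ → Fin m → ℝ) (o : Fin m) :
    ∃ t, t < m ∧ chosen hm W t = o := by
  classical
  have hM : o ∉ remSet hm W m := by
    have : (remSet hm W m).card = 0 := by rw [remSet_card hm W m (le_refl m)]; omega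
    rw [Finset.card_eq_zero] at this
    rw [this]; exact Finset.notMem_empty o
  have hex : ∃ t, o ∉ remSet hm W t := ⟨m, hM⟩
  set t0 := Nat.find hex with ht0
  have ht0spec : o ∉ remSet hm W t0 := Nat.find_spec hex
  have ht0le : t0 ≤ m := Nat.find_min' hex hM
  have ht0pos : 0 < t0 := by
    rcases Nat.eq_zero_or_pos t0 with h | h
    · exfalso; apply ht0spec; rw [h]; exact Finset.mem_univ o
    · exact h
  have hprev : o ∈ remSet hm W (t0 - 1) := by
    by_contra h
    have := Nat.find_min' hex h
    omega
  refine ⟨t0 - 1, by omega, ?_⟩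
  have heq : t0 = (t0 - 1) + 1 := by omega
  rw [heq, remSet] at ht0spec
  by_contra hne
  exact ht0spec (Finset.mem_erase.2 ⟨fun hh => hne hh.symm, hprev⟩)

lemma card_filter_ge (m c : ℕ) (hc : c ≤ m) :
    ((Finset.univ : Finset (Fin m)).filter fun u : Fin m => c ≤ (u:ℕ)).card = m - c := by
  classical
  have : ((Finset.univ : Finset (Fin m)).filter fun u : Fin m => c ≤ (u:ℕ))
      = Finset.image (fun j : Fin (m - c) => (⟨c + j.1, by omega⟩ : Fin m)) Finset.univ := by
    ext u
    simp only [mem_filter, Finset.mem_univ, true_and, Finset.mem_image]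
    constructor
    · intro hu
      exact ⟨⟨u.1 - c, by omega⟩, by apply Fin.ext; simp; omega⟩
    · rintro ⟨j, rfl⟩; simp
  rw [this, Finset.card_image_of_injective _ (fun a b hab => by
    apply Fin.ext
    have := Fin.mk.injEq .. ▸ hab
    simp at this ⊢
    omega), Finset.card_univ, Fintype.card_fin]


/-- With additive utilities over indivisible chores (every item has non-positive
value to every agent), there always exists a complete allocation satisfying PROPX. -/
theorem propx_exists_chores (n m : ℕ) (hn : 0 < n) (v : Fin n → Fin m → ℝ)
    (hchores : ∀ i o, v i o ≤ 0) :
    ∃ f : Fin m → Fin n, ∀ i : Fin n,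
      (∀ o ∈ bundle f i, v i o < 0 →
        (∑ o' ∈ bundle f i \ {o}, v i o') ≥ (∑ o' : Fin m, v i o') / n) ∧
      (∀ o : Fin m, o ∉ bundle f i → v i o > 0 →
        (∑ o' ∈ insert o (bundle f i), v i o') ≥ (∑ o' : Fin m, v i o') / n) := by
  classical
  rcases Nat.eq_zero_or_pos m with hm | hm
  · subst hm
    exact ⟨fun o => o.elim0, fun i => ⟨fun o _ _ => o.elim0, fun o _ _ => o.elim0⟩⟩
  by_cases hz : ∃ k, ∀ o, v k o = 0
  · obtain ⟨k, hk⟩ := hz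
    refine ⟨fun _ => k, fun i => ⟨?_, ?_⟩⟩
    · intro o ho hvo
      rw [bundle, mem_filter] at ho
      rw [← ho.2] at hvo
      rw [hk o] at hvo
      exact absurd hvo (lt_irrefl 0)
    · intro o _ hvo
      exact absurd hvo (not_lt.2 (hchores i o))
  push_neg at hz
  -- disutilities and normalization
  set dt : Fin n → Fin m → ℝ := fun i o => -v i o with hdt
  have hdtnn : ∀ i o, 0 ≤ dt i o := fun i o => by simp [hdt]; exact hchores i o
  set Tot : Fin n → ℝ := fun i => ∑ o, dt i o with hTot
  have hTotpos : ∀ i, 0 < Tot i := by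
    intro i
    obtain ⟨o, ho⟩ := hz i
    apply Finset.sum_pos'
    · intro o' _; exact hdtnn i o'
    · exact ⟨o, mem_univ o, lt_of_le_of_ne (hdtnn i o) (by simp [hdt]; exact fun h => ho h)⟩
  set D : Fin n → Fin m → ℝ := fun i o => dt i o / Tot i with hD
  have hDnn : ∀ i o, 0 ≤ D i o := fun i o => div_nonneg (hdtnn i o) (le_of_lt (hTotpos i))
  have hDsum : ∀ i, ∑ o, D i o = 1 := by
    intro i
    rw [hD]
    rw [← Finset.sum_div]
    exact div_self (ne_of_gt (hTotpos i))
  -- sort each agent's values decreasingly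
  set σ : Fin n → Equiv.Perm (Fin m) := fun i => Tuple.sort (fun o => -(D i o)) with hσ
  have hσanti : ∀ i, Antitone (fun u : Fin m => D i (σ i u)) := by
    intro i a b hab
    have := Tuple.monotone_sort (fun o => -(D i o)) hab
    simp only [Function.comp_apply] at this
    simp only [hσ]
    linarith
  set d' : Fin n → ℕ → ℝ := fun i t => if h : t < m then D i (σ i ⟨t, h⟩) else 0 with hd'
  have hd'nn : ∀ i t, 0 ≤ d' i t := by
    intro i t
    simp only [hd']
    split
    · exact hDnn i _
    · exact le_refl 0
  have hd'anti : ∀ i, Antitone (d' i) := by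
    intro i a b hab
    simp only [hd']
    by_cases hb : b < m
    · have ha : a < m := lt_of_le_of_lt hab hb
      rw [dif_pos hb, dif_pos ha]
      exact hσanti i (show (⟨a, ha⟩ : Fin m) ≤ ⟨b, hb⟩ from hab)
    · rw [dif_neg hb]
      split
      · exact hDnn i _
      · exact le_refl 0
  have hd'sum : ∀ i, ∑ t ∈ range m, d' i t = 1 := by
    intro i
    rw [← Fin.sum_univ_eq_sum_range (fun t => d' i t) m]
    have : ∀ u : Fin m, d' i (u : ℕ) = D i (σ i u) := by
      intro u
      simp only [hd']
      rw [dif_pos u.2]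
    rw [Finset.sum_congr rfl (fun u _ => this u)]
    rw [Equiv.sum_comp (σ i) (D i)]
    exact hDsum i
  obtain ⟨g, hg⟩ := stage1 hn m d' hd'nn hd'anti hd'sum
  -- picking stage
  set W : ℕ → Fin m → ℝ := fun t o => D (g (m - 1 - t)) o with hW
  -- key bound : the chore picked at round t is no worse than sorted position m-1-t
  have hkey : ∀ t, t < m → D (g (m-1-t)) (chosen hm W t) ≤ d' (g (m-1-t)) (m-1-t) := by
    intro t htm
    set i' := g (m-1-t) with hi'
    set c := m - 1 - t with hc
    have hcm : c < m := by omega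
    set U : Finset (Fin m) := Finset.univ.filter (fun u : Fin m => c ≤ (u:ℕ)) with hU
    have hUcard : U.card = t + 1 := by
      rw [hU, card_filter_ge m c (by omega)]; omega
    set V : Finset (Fin m) := U.image (σ i') with hV
    have hVcard : V.card = t + 1 := by
      rw [hV, Finset.card_image_of_injective _ (σ i').injective, hUcard]
    have hremcard : (remSet hm W t).card = m - t := remSet_card hm W t (le_of_lt htm)
    have hinter : (remSet hm W t ∩ V).Nonempty := by
      by_contra hcon
      rw [Finset.not_nonempty_iff_eq_empty] at hcon
      have hdisj : Disjoint (remSet hm W t) V := Finset.disjoint_iff_inter_eq_empty.2 hcon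
      have := Finset.card_union_of_disjoint hdisj
      have hle := Finset.card_le_univ (remSet hm W t ∪ V)
      rw [this, hremcard, hVcard, Fintype.card_fin] at hle
      omega
    obtain ⟨o', ho'⟩ := hinter
    rw [Finset.mem_inter] at ho'
    obtain ⟨horem, hoV⟩ := ho'
    rw [hV, Finset.mem_image] at hoV
    obtain ⟨u, huU, huo⟩ := hoV
    have hcu : c ≤ (u : ℕ) := by
      rw [hU, mem_filter] at huU; exact huU.2
    have h1 : W t (chosen hm W t) ≤ W t o' := chosen_min hm W htm o' horem
    have h2 : W t o' = D i' o' := by rw [hW]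
    have h3 : D i' o' = d' i' (u : ℕ) := by
      rw [← huo]
      simp only [hd']
      rw [dif_pos u.2]
    have h4 : d' i' (u : ℕ) ≤ d' i' c := hd'anti i' hcu
    have h5 : W t (chosen hm W t) = D i' (chosen hm W t) := by rw [hW]
    rw [h5, h2, h3] at h1
    exact le_trans h1 h4
  -- the final allocation
  have hsurj : ∀ o : Fin m, ∃ t, t < m ∧ chosen hm W t = o := chosen_surj hm W
  set pickT : Fin m → ℕ := fun o => (hsurj o).choose with hpT
  have hpTlt : ∀ o, pickT o < m := fun o => (hsurj o).choose_spec.1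
  have hpTeq : ∀ o, chosen hm W (pickT o) = o := fun o => (hsurj o).choose_spec.2
  set f : Fin m → Fin n := fun o => g (m - 1 - pickT o) with hf
  have hmemb : ∀ i (o' : Fin m), o' ∈ bundle f i ↔
      ∃ t, t < m ∧ g (m-1-t) = i ∧ chosen hm W t = o' := by
    intro i o'
    rw [bundle, mem_filter]
    constructor
    · rintro ⟨-, hfo⟩
      exact ⟨pickT o', hpTlt o', hfo, hpTeq o'⟩
    · rintro ⟨t, htm, hgt, hct⟩
      refine ⟨mem_univ o', ?_⟩
      have : pickT o' = t := chosen_inj hm W (hpTlt o') htm (by rw [hpTeq o', hct])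
      rw [hf]
      simp only []
      rw [this]
      exact hgt
  refine ⟨f, fun i => ⟨?_, ?_⟩⟩
  swap
  · intro o _ hvo
    exact absurd hvo (not_lt.2 (hchores i o))
  intro o ho hvo
  -- setup of index sets
  set t₀ := pickT o with ht₀
  have ht₀m : t₀ < m := hpTlt o
  have hct₀ : chosen hm W t₀ = o := hpTeq o
  have hfo : g (m-1-t₀) = i := by
    have := (hmemb i o).1 ho
    obtain ⟨t, htm, hgt, hct⟩ := this
    have : t₀ = t := chosen_inj hm W ht₀m htm (by rw [hct₀, hct])
    rw [this]; exact hgt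
  set s₀ := m - 1 - t₀ with hs₀
  have hs₀m : s₀ < m := by omega
  set Ti : Finset ℕ := (range m).filter (fun t => g (m-1-t) = i) with hTi
  set Si : Finset ℕ := (range m).filter (fun s => g s = i) with hSi
  have ht₀Ti : t₀ ∈ Ti := by
    rw [hTi, mem_filter, mem_range]; exact ⟨ht₀m, hfo⟩
  -- bundle minus o as an image
  have hbe : (bundle f i).erase o = (Ti.erase t₀).image (chosen hm W) := by
    ext o'
    rw [Finset.mem_erase, Finset.mem_image]
    constructor
    · rintro ⟨hne, hb⟩
      obtain ⟨t, htm, hgt, hct⟩ := (hmemb i o').1 hb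
      refine ⟨t, ?_, hct⟩
      rw [Finset.mem_erase]
      refine ⟨?_, by rw [hTi, mem_filter, mem_range]; exact ⟨htm, hgt⟩⟩
      intro hteq
      apply hne
      rw [← hct, hteq, hct₀]
    · rintro ⟨t, htTi, hct⟩
      rw [Finset.mem_erase, hTi, mem_filter, mem_range] at htTi
      obtain ⟨htne, htm, hgt⟩ := htTi
      constructor
      · intro heq
        apply htne
        exact chosen_inj hm W htm ht₀m (by rw [hct, heq, hct₀])
      · exact (hmemb i o').2 ⟨t, htm, hgt, hct⟩
  have hinjTi : ∀ x ∈ Ti.erase t₀, ∀ y ∈ Ti.erase t₀, chosen hm W x = chosen hm W y → x = y := by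
    intro x hx y hy hxy
    rw [Finset.mem_erase, hTi, mem_filter, mem_range] at hx hy
    exact chosen_inj hm W hx.2.1 hy.2.1 hxy
  have hsum1 : ∑ o' ∈ (bundle f i).erase o, D i o' = ∑ t ∈ Ti.erase t₀, D i (chosen hm W t) := by
    rw [hbe, Finset.sum_image hinjTi]
  -- termwise bound
  have hsum2 : ∑ t ∈ Ti.erase t₀, D i (chosen hm W t) ≤ ∑ t ∈ Ti.erase t₀, d' i (m-1-t) := by
    apply Finset.sum_le_sum
    intro t ht
    rw [Finset.mem_erase, hTi, mem_filter, mem_range] at ht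
    obtain ⟨-, htm, hgt⟩ := ht
    have := hkey t htm
    rw [hgt] at this
    exact this
  -- reindex to the sorted instance
  have hSieq : Si.erase s₀ = (Ti.erase t₀).image (fun t => m - 1 - t) := by
    ext s
    rw [Finset.mem_erase, hSi, mem_filter, mem_range, Finset.mem_image]
    constructor
    · rintro ⟨hne, hsm, hgs⟩
      refine ⟨m - 1 - s, ?_, by omega⟩
      rw [Finset.mem_erase, hTi, mem_filter, mem_range]
      have : m - 1 - (m - 1 - s) = s := by omega
      rw [this]
      refine ⟨by omega, by omega, hgs⟩
    · rintro ⟨t, htTi, hts⟩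
      rw [Finset.mem_erase, hTi, mem_filter, mem_range] at htTi
      obtain ⟨htne, htm, hgt⟩ := htTi
      refine ⟨by omega, by omega, by rw [← hts]; exact hgt⟩
  have hsum3 : ∑ t ∈ Ti.erase t₀, d' i (m-1-t) = ∑ s ∈ Si.erase s₀, d' i s := by
    rw [hSieq, Finset.sum_image]
    intro x hx y hy hxy
    rw [Finset.mem_coe, Finset.mem_erase, hTi, mem_filter, mem_range] at hx hy
    beta_reduce at hxy
    omega
  -- apply stage 1 at s₀
  have hs₀Si : s₀ ∈ (range m).filter (fun s => g s = i) := by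
    rw [mem_filter, mem_range]
    exact ⟨hs₀m, hfo⟩
  have hd's₀pos : 0 < d' i s₀ := by
    have hk := hkey t₀ ht₀m
    rw [hfo, hct₀] at hk
    have : 0 < D i o := by
      rw [hD]
      apply div_pos _ (hTotpos i)
      rw [hdt]
      simp only []
      linarith
    calc (0:ℝ) < D i o := this
      _ ≤ d' i (m-1-t₀) := hk
      _ = d' i s₀ := by rw [hs₀]
  have hfinal : ∑ s ∈ Si.erase s₀, d' i s ≤ 1/(n:ℝ) := by
    have := hg i s₀ hs₀Si hd's₀pos
    rw [hSi]
    exact this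
  -- put it all together
  have hDle : ∑ o' ∈ (bundle f i).erase o, D i o' ≤ 1/(n:ℝ) := by
    rw [hsum1]
    calc ∑ t ∈ Ti.erase t₀, D i (chosen hm W t) ≤ ∑ t ∈ Ti.erase t₀, d' i (m-1-t) := hsum2
      _ = ∑ s ∈ Si.erase s₀, d' i s := hsum3
      _ ≤ 1/(n:ℝ) := hfinal
  have hdtle : ∑ o' ∈ (bundle f i).erase o, dt i o' ≤ Tot i / n := by
    have heq : ∑ o' ∈ (bundle f i).erase o, dt i o'
        = Tot i * ∑ o' ∈ (bundle f i).erase o, D i o' := by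
      rw [Finset.mul_sum]
      apply Finset.sum_congr rfl
      intro o' _
      simp only [hD]
      rw [mul_comm, div_mul_cancel₀ _ (ne_of_gt (hTotpos i))]
    rw [heq]
    calc Tot i * ∑ o' ∈ (bundle f i).erase o, D i o' ≤ Tot i * (1/(n:ℝ)) :=
          mul_le_mul_of_nonneg_left hDle (le_of_lt (hTotpos i))
      _ = Tot i / n := by ring
  have hveq : ∑ o' ∈ bundle f i \ {o}, v i o' = -∑ o' ∈ (bundle f i).erase o, dt i o' := by
    rw [Finset.sdiff_singleton_eq_erase, ← Finset.sum_neg_distrib]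
    apply Finset.sum_congr rfl
    intro o' _
    simp [hdt]
  have hvteq : ∑ o' : Fin m, v i o' = -Tot i := by
    rw [hTot, ← Finset.sum_neg_distrib]
    apply Finset.sum_congr rfl
    intro o' _
    simp [hdt]
  rw [hveq, hvteq, ge_iff_le, neg_div]
  have hncast : (0:ℝ) < (n:ℝ) := by exact_mod_cast hn
  have : Tot i / n = Tot i * (1/(n:ℝ)) := by ring
  linarith
end

section
/- For agents with additive utility functions over a finite set of indivisible chores (every item has non-positive value to every agent), every allocation satisfying envy-freeness up to any non-zero valued item (EFX) also satisfies proportionality up to any item (PROPX). -/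
open Finset

/-- With additive utilities over indivisible chores (every item has non-positive
value to every agent), every complete allocation satisfying EFX (envy-freeness up to any
non-zero valued item) also satisfies PROPX. -/
theorem efx_implies_propx_chores (n m : ℕ) (hn : 0 < n) (v : Fin n → Fin m → ℝ)
    (hchores : ∀ i o, v i o ≤ 0) (f : Fin m → Fin n)
    (hEFX : ∀ i j : Fin n, ∀ o ∈ bundle f i, v i o ≠ 0 →
      (∑ o' ∈ bundle f i \ {o}, v i o') ≥ ∑ o' ∈ bundle f j, v i o') :
    ∀ i : Fin n,
      (∀ o ∈ bundle f i, v i o < 0 →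
        (∑ o' ∈ bundle f i \ {o}, v i o') ≥ (∑ o' : Fin m, v i o') / n) ∧
      (∀ o : Fin m, o ∉ bundle f i → v i o > 0 →
        (∑ o' ∈ insert o (bundle f i), v i o') ≥ (∑ o' : Fin m, v i o') / n) := by
  intro i
  constructor
  · intro o ho hv
    have htot : (∑ o' : Fin m, v i o') = ∑ j : Fin n, ∑ o' ∈ bundle f j, v i o' := by
      rw [← Finset.sum_fiberwise Finset.univ f (v i)]; rfl
    have hkey : ∀ j : Fin n, (∑ o' ∈ bundle f i \ {o}, v i o') ≥ ∑ o' ∈ bundle f j, v i o' :=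
      fun j => hEFX i j o ho (ne_of_lt hv)
    have hsum : (n : ℝ) * (∑ o' ∈ bundle f i \ {o}, v i o') ≥ ∑ o' : Fin m, v i o' := by
      rw [htot]
      calc ∑ j : Fin n, ∑ o' ∈ bundle f j, v i o'
          ≤ ∑ _j : Fin n, ∑ o' ∈ bundle f i \ {o}, v i o' :=
            Finset.sum_le_sum fun j _ => hkey j
        _ = (n : ℝ) * (∑ o' ∈ bundle f i \ {o}, v i o') := by
            simp [Finset.sum_const, Finset.card_univ, mul_comm]
    rw [ge_iff_le, div_le_iff₀ (by exact_mod_cast hn)]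
    linarith [hsum]
  · intro o _ hv
    exact absurd (hchores i o) (not_le.mpr hv)
end

section
/- There exists an instance with two agents and two indivisible goods, in which both agents value each good at 1, together with an allocation (giving both goods to one agent) that satisfies proportionality up to any item (PROPX) but does not satisfy envy-freeness up to any positively valued good (EFX); hence PROPX does not imply EFX for indivisible goods. -/
open Finset

lemma bundle0 : bundle (fun _ : Fin 2 => (0 : Fin 2)) 0 = Finset.univ := by
  decide

lemma bundle1 : bundle (fun _ : Fin 2 => (0 : Fin 2)) 1 = ∅ := by
  decide

/-- There is an instance with two agents and two indivisible goods, in which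
both agents value each good at 1, together with an allocation giving both goods to one
agent, that satisfies PROPX but not EFX; hence PROPX does not imply EFX for goods. -/
theorem propx_not_implies_efx :
    ∃ (v : Fin 2 → Fin 2 → ℝ) (f : Fin 2 → Fin 2),
      -- both agents value each good at 1
      (∀ i o, v i o = 1) ∧
      -- the allocation gives both goods to one agent
      (∃ a : Fin 2, ∀ o, f o = a) ∧
      -- the allocation satisfies PROPX
      (∀ i : Fin 2,
        (∀ o ∈ bundle f i, v i o < 0 →
          (∑ o' ∈ bundle f i \ {o}, v i o') ≥ (∑ o' : Fin 2, v i o') / 2) ∧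
        (∀ o : Fin 2, o ∉ bundle f i → v i o > 0 →
          (∑ o' ∈ insert o (bundle f i), v i o') ≥ (∑ o' : Fin 2, v i o') / 2)) ∧
      -- the allocation does not satisfy EFX
      ¬ (∀ i j : Fin 2, ∀ g ∈ bundle f j, v i g > 0 →
          (∑ o ∈ bundle f i, v i o) ≥ ∑ o ∈ bundle f j \ {g}, v i o) := by
  refine ⟨fun _ _ => 1, fun _ => 0, fun _ _ => rfl, ⟨0, fun _ => rfl⟩, ?_, ?_⟩
  · intro i
    constructor
    · intro o _ h; norm_num at h
    · intro o ho _
      fin_cases i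
      · simp [bundle0] at ho
      · simp [bundle1, Finset.sum_const, Fin.sum_univ_two]
  · intro h
    have := h 1 0 0 (by simp [bundle0]) (by norm_num)
    rw [bundle0, bundle1,
      show Finset.univ \ ({0} : Finset (Fin 2)) = {1} from by decide] at this
    simp at this
    linarith
end

section
/- For agents with additive utility functions over a finite set of indivisible items and any α ∈ (0, 1], if there exists an allocation satisfying the α-approximate maximin share guarantee (α-MMS), then there exists an allocation that is simultaneously α-MMS and Pareto optimal (PO). -/
open Finset

/-- The maximin share of agent `i`: the maximum, over all `n`-partitions of the items
(encoded as assignments `Fin m → Fin n`), of the minimum value of a part. -/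
noncomputable def mms (n m : ℕ) (hn : 0 < n) (v : Fin n → Fin m → ℝ) (i : Fin n) : ℝ :=
  haveI : Nonempty (Fin n) := Fin.pos_iff_nonempty.mp hn
  Finset.univ.sup' Finset.univ_nonempty fun f : Fin m → Fin n =>
    Finset.univ.inf' Finset.univ_nonempty fun j : Fin n => ∑ o ∈ bundle f j, v i o

/-- With additive utilities over indivisible items and `α ∈ (0, 1]`, if an
`α`-MMS allocation exists, then an allocation exists that is both `α`-MMS and Pareto
optimal. -/
theorem alpha_mms_and_po_exists (n m : ℕ) (hn : 0 < n) (v : Fin n → Fin m → ℝ)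
    (α : ℝ) (hα0 : 0 < α) (hα1 : α ≤ 1)
    (hex : ∃ f : Fin m → Fin n, ∀ i : Fin n,
      (∑ o ∈ bundle f i, v i o) ≥
        min (α * mms n m hn v i) ((1 / α) * mms n m hn v i)) :
    ∃ f : Fin m → Fin n,
      (∀ i : Fin n,
        (∑ o ∈ bundle f i, v i o) ≥
          min (α * mms n m hn v i) ((1 / α) * mms n m hn v i)) ∧
      ¬ ∃ g : Fin m → Fin n,
        (∀ i : Fin n, (∑ o ∈ bundle f i, v i o) ≤ ∑ o ∈ bundle g i, v i o) ∧
        (∃ j : Fin n, (∑ o ∈ bundle f j, v j o) < ∑ o ∈ bundle g j, v j o) := by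
  classical
  set P : (Fin m → Fin n) → Prop := fun f => ∀ i : Fin n,
      (∑ o ∈ bundle f i, v i o) ≥
        min (α * mms n m hn v i) ((1 / α) * mms n m hn v i) with hP
  set S : Finset (Fin m → Fin n) := Finset.univ.filter P with hS
  obtain ⟨f0, hf0⟩ := hex
  have hSne : S.Nonempty := ⟨f0, Finset.mem_filter.mpr ⟨Finset.mem_univ _, hf0⟩⟩
  obtain ⟨f, hfS, hfmax⟩ := S.exists_max_image
    (fun f => ∑ i : Fin n, ∑ o ∈ bundle f i, v i o) hSne
  have hfP : P f := (Finset.mem_filter.mp hfS).2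
  refine ⟨f, hfP, ?_⟩
  rintro ⟨g, hge, j, hj⟩
  have hgP : P g := fun i => le_trans (hfP i) (hge i)
  have hgS : g ∈ S := Finset.mem_filter.mpr ⟨Finset.mem_univ _, hgP⟩
  have hlt : (∑ i : Fin n, ∑ o ∈ bundle f i, v i o) <
      ∑ i : Fin n, ∑ o ∈ bundle g i, v i o := by
    apply Finset.sum_lt_sum (fun i _ => hge i) ⟨j, Finset.mem_univ j, hj⟩
  exact absurd (hfmax g hgS) (not_le.mpr hlt)
end

section
/- An allocation O = (O_1, ..., O_n) of indivisible items is envy-freeable (i.e., can be made envy-free by some non-negative subsidy payments) if and only if it maximizes utilitarian welfare among all reassignments of its bundles, i.e., for every permutation σ of the agents, Σ_{i=1}^n u_i(O_i) ≥ Σ_{i=1}^n u_i(O_{σ(i)}). -/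
open Finset

/-- Bellman-Ford iteration: value of the best path of length `k` starting at `i`. -/
noncomputable def bfq {n : ℕ} [NeZero n] (w : Fin n → Fin n → ℝ) : ℕ → Fin n → ℝ
  | 0 => fun _ => 0
  | k + 1 => fun i => univ.sup' univ_nonempty (fun j => w i j + bfq w k j)

lemma bfq_le_succ {n : ℕ} [NeZero n] (w : Fin n → Fin n → ℝ) (k : ℕ) (i j : Fin n) :
    w i j + bfq w k j ≤ bfq w (k + 1) i := by
  show w i j + bfq w k j ≤ univ.sup' univ_nonempty (fun j => w i j + bfq w k j)
  exact le_sup' (fun j => w i j + bfq w k j) (mem_univ j)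

lemma bfq_mono {n : ℕ} [NeZero n] (w : Fin n → Fin n → ℝ) (hw : ∀ i, w i i = 0) :
    ∀ k i, bfq w k i ≤ bfq w (k + 1) i := by
  intro k
  induction k with
  | zero =>
    intro i
    have := bfq_le_succ w 0 i i
    rw [hw i] at this
    simpa [bfq] using this
  | succ k ih =>
    intro i
    show univ.sup' univ_nonempty (fun j => w i j + bfq w k j) ≤
      univ.sup' univ_nonempty (fun j => w i j + bfq w (k+1) j)
    exact sup'_mono_fun fun j _ => add_le_add le_rfl (ih j)

lemma bfq_mono' {n : ℕ} [NeZero n] (w : Fin n → Fin n → ℝ) (hw : ∀ i, w i i = 0)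
    {k k' : ℕ} (h : k ≤ k') (i : Fin n) : bfq w k i ≤ bfq w k' i :=
  monotone_nat_of_le_succ (fun k => bfq_mono w hw k i) h

/-- Key lemma: if no permutation has positive total weight, potentials exist. -/
lemma key {n : ℕ} [NeZero n] (w : Fin n → Fin n → ℝ) (hw : ∀ i, w i i = 0)
    (hcyc : ∀ σ : Equiv.Perm (Fin n), ∑ i, w i (σ i) ≤ 0) :
    ∃ p : Fin n → ℝ, (∀ i, 0 ≤ p i) ∧ ∀ i j, p i ≥ w i j + p j := by
  have hstep : ∀ k (i : Fin n), bfq w (k+1) i < bfq w (k+2) i →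
      ∃ j, bfq w k j < bfq w (k+1) j ∧ bfq w (k+2) i = w i j + bfq w (k+1) j := by
    intro k i hlt
    obtain ⟨j, -, hj⟩ := exists_mem_eq_sup' (univ_nonempty (α := Fin n))
      (fun j => w i j + bfq w (k+1) j)
    have hj' : bfq w (k+2) i = w i j + bfq w (k+1) j := hj
    refine ⟨j, ?_, hj'⟩
    by_contra hle
    push_neg at hle
    have h2 : w i j + bfq w k j ≤ bfq w (k+1) i := bfq_le_succ w k i j
    linarith
  have hstab : ∀ i, bfq w (n+1) i ≤ bfq w n i := by
    intro i0
    by_contra hlt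
    push_neg at hlt
    have chain : ∀ s, s ≤ n → ∃ c : ℕ → Fin n,
        (∀ t ≤ s, bfq w (n - t) (c t) < bfq w (n - t + 1) (c t)) ∧
        (∀ t < s, bfq w (n - t + 1) (c t) = w (c t) (c (t+1)) + bfq w (n - t) (c (t+1))) := by
      intro s
      induction s with
      | zero =>
        intro _
        exact ⟨fun _ => i0, by intro t ht; interval_cases t; simpa using hlt,
          by intro t ht; omega⟩
      | succ s ih =>
        intro hs
        obtain ⟨c, hc1, hc2⟩ := ih (by omega)
        have hcs := hc1 s le_rfl
        have hk1 : n - s = (n - (s+1)) + 1 := by omega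
        have hcs' : bfq w ((n - (s+1)) + 1) (c s) < bfq w ((n - (s+1)) + 2) (c s) := by
          have e2 : n - s + 1 = (n - (s+1)) + 2 := by omega
          rw [← hk1, ← e2]; exact hcs
        obtain ⟨j, hj1, hj2⟩ := hstep (n - (s+1)) (c s) hcs'
        refine ⟨fun t => if t ≤ s then c t else j, ?_, ?_⟩
        · intro t ht
          by_cases h : t ≤ s
          · simpa [h] using hc1 t h
          · have : t = s + 1 := by omega
            subst this
            simpa [h] using hj1
        · intro t ht
          by_cases h : t < s
          · have h1 : t ≤ s := by omega
            have h2 : t + 1 ≤ s := by omega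
            simpa [h1, h2] using hc2 t h
          · have : t = s := by omega
            subst this
            have h1 : t ≤ t := le_rfl
            have h2 : ¬ (t + 1 ≤ t) := by omega
            simp only [h1, if_pos, h2, if_neg, if_true, if_false]
            have e1 : n - t + 1 = (n - (t+1)) + 2 := by omega
            have e2 : n - t = (n - (t+1)) + 1 := by omega
            rw [e1, e2]; exact hj2
    obtain ⟨c, hc1, hc2⟩ := chain n le_rfl
    have hpig : ∃ a ∈ Finset.range (n+1), ∃ b ∈ Finset.range (n+1), a ≠ b ∧ c a = c b := by
      apply exists_ne_map_eq_of_card_lt_of_maps_to (t := (univ : Finset (Fin n)))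
      · simp
      · intro a _; exact mem_univ _
    have hrep : ∃ d, 0 < d ∧ ∃ a, a + d ≤ n ∧ c a = c (a + d) := by
      obtain ⟨a, ha, b, hb, hne, heq⟩ := hpig
      simp only [mem_range] at ha hb
      rcases Nat.lt_or_ge a b with h | h
      · exact ⟨b - a, by omega, a, by omega, by rw [heq]; congr 1; omega⟩
      · exact ⟨a - b, by omega, b, by omega, by rw [← heq]; congr 1; omega⟩
    classical
    set d := Nat.find hrep with hd
    obtain ⟨hd0, a, hab, hcab⟩ := Nat.find_spec hrep
    have hinj : ∀ s1 ∈ Finset.range d, ∀ s2 ∈ Finset.range d,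
        c (a + s1) = c (a + s2) → s1 = s2 := by
      intro s1 h1 s2 h2 he
      simp only [mem_range] at h1 h2
      by_contra hne
      rcases Nat.lt_or_ge s1 s2 with h | h
      · have hP : 0 < s2 - s1 ∧ ∃ a', a' + (s2 - s1) ≤ n ∧ c a' = c (a' + (s2 - s1)) :=
          ⟨by omega, a + s1, by omega, by rw [he]; congr 1; omega⟩
        have := Nat.find_min' hrep hP
        omega
      · have h' : s2 < s1 := by omega
        have hP : 0 < s1 - s2 ∧ ∃ a', a' + (s1 - s2) ≤ n ∧ c a' = c (a' + (s1 - s2)) :=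
          ⟨by omega, a + s2, by omega, by rw [← he]; congr 1; omega⟩
        have := Nat.find_min' hrep hP
        omega
    set L : List (Fin n) := (List.range d).map (fun s => c (a + s)) with hL
    have hLlen : L.length = d := by simp [hL]
    have hLget : ∀ (s : ℕ) (h : s < L.length), L[s] = c (a + s) := by
      intro s h; simp [hL]
    have hLnd : L.Nodup := by
      rw [hL, List.nodup_map_iff_inj_on List.nodup_range]
      intro s1 h1 s2 h2 he
      exact hinj s1 (mem_range.mpr (by simpa using h1)) s2 (mem_range.mpr (by simpa using h2)) he
    set σ := L.formPerm with hσ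
    have hsum : ∑ x : Fin n, w x (σ x) = ∑ s ∈ Finset.range d, w (c (a+s)) (c (a+s+1)) := by
      have hsub : ∑ x ∈ L.toFinset, w x (σ x) = ∑ x : Fin n, w x (σ x) := by
        apply sum_subset (subset_univ _)
        intro x _ hx
        rw [hσ, List.formPerm_apply_of_notMem (by simpa using hx)]
        exact hw x
      have hTF : L.toFinset = (Finset.range d).image (fun s => c (a + s)) := by
        rw [hL]; ext x; simp
      rw [← hsub, hTF, sum_image hinj]
      apply sum_congr rfl
      intro s hs
      simp only [mem_range] at hs
      have hs' : s < L.length := by omega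
      have happ : σ (c (a + s)) = c (a + (s+1) % d) := by
        rw [← hLget s hs', hσ, List.formPerm_apply_getElem L hLnd s hs',
          hLget _ (by rw [hLlen]; exact Nat.mod_lt _ hd0)]
        congr 2
        rw [hLlen]
      rw [happ]
      rcases Nat.lt_or_ge (s+1) d with h | h
      · rw [Nat.mod_eq_of_lt h]
        congr 2
      · have hsd : s + 1 = d := by omega
        rw [hsd, Nat.mod_self, show a + s + 1 = a + d by omega, ← hcab]
        congr 2
    have htel : ∑ s ∈ Finset.range d, w (c (a+s)) (c (a+s+1)) =
        bfq w (n - a + 1) (c a) - bfq w (n - (a+d) + 1) (c (a+d)) := by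
      have hterm : ∀ s ∈ Finset.range d, w (c (a+s)) (c (a+s+1)) =
          (fun t => bfq w (n - (a+t) + 1) (c (a+t))) s
            - (fun t => bfq w (n - (a+t) + 1) (c (a+t))) (s+1) := by
        intro s hs
        simp only [mem_range] at hs
        have h2 := hc2 (a+s) (by omega)
        have e : n - (a+s) = n - (a+s+1) + 1 := by omega
        have h3 : bfq w (n - (a+s)) (c (a+s+1)) = bfq w (n - (a+s+1) + 1) (c (a+s+1)) := by
          rw [e]
        show w (c (a+s)) (c (a+s+1)) =
          bfq w (n - (a+s) + 1) (c (a+s)) - bfq w (n - (a+s+1) + 1) (c (a+s+1))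
        linarith
      rw [sum_congr rfl hterm,
        Finset.sum_range_sub' (fun t => bfq w (n - (a+t) + 1) (c (a+t))) d]
      simp
    have hpos : (0:ℝ) < ∑ s ∈ Finset.range d, w (c (a+s)) (c (a+s+1)) := by
      rw [htel, ← hcab]
      have h1 : bfq w (n - a) (c a) < bfq w (n - a + 1) (c a) := hc1 a (by omega)
      have h2 : bfq w (n - (a+d) + 1) (c a) ≤ bfq w (n - a) (c a) :=
        bfq_mono' w hw (by omega) _
      linarith
    have := hcyc σ
    rw [hsum] at this
    linarith
  refine ⟨bfq w n, fun i => ?_, fun i j => ?_⟩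
  · have := bfq_mono' w hw (Nat.zero_le n) i
    simpa [bfq] using this
  · have h1 : w i j + bfq w n j ≤ bfq w (n+1) i := bfq_le_succ w n i j
    have h2 := hstab i
    linarith

/-- An allocation of indivisible items is envy-freeable (can be made envy-free
by non-negative subsidy payments) iff it maximizes utilitarian welfare among all
reassignments (permutations) of its bundles. -/
theorem envy_freeable_iff_welfare_maximizing (n m : ℕ)
    (u : Fin n → Finset (Fin m) → ℝ) (hu0 : ∀ i, u i ∅ = 0)
    (f : Fin m → Fin n) :
    (∃ p : Fin n → ℝ, (∀ i, 0 ≤ p i) ∧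
        ∀ i j : Fin n, u i (bundle f i) + p i ≥ u i (bundle f j) + p j) ↔
      (∀ σ : Equiv.Perm (Fin n),
        ∑ i : Fin n, u i (bundle f i) ≥ ∑ i : Fin n, u i (bundle f (σ i))) := by
  constructor
  · rintro ⟨p, hp0, hp⟩ σ
    have h1 : ∑ i : Fin n, (u i (bundle f (σ i)) + p (σ i)) ≤
        ∑ i : Fin n, (u i (bundle f i) + p i) :=
      Finset.sum_le_sum (fun i _ => hp i (σ i))
    have h2 : ∑ i : Fin n, p (σ i) = ∑ i : Fin n, p i := Equiv.sum_comp σ p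
    rw [Finset.sum_add_distrib, Finset.sum_add_distrib, h2] at h1
    linarith
  · intro hmax
    rcases Nat.eq_zero_or_pos n with hn | hn
    · subst hn
      exact ⟨fun _ => 0, fun i => le_rfl, fun i => i.elim0⟩
    haveI : NeZero n := ⟨by omega⟩
    obtain ⟨p, hp0, hp⟩ := key (fun i j => u i (bundle f j) - u i (bundle f i))
      (fun i => by ring)
      (by
        intro σ
        have := hmax σ
        rw [Finset.sum_sub_distrib]
        linarith)
    refine ⟨p, hp0, fun i j => ?_⟩
    have := hp i j
    simp only [ge_iff_le] at *
    linarith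
end

section
/- An allocation O = (O_1, ..., O_n) of indivisible items is envy-freeable (i.e., can be made envy-free by some non-negative subsidy payments) if and only if its envy graph G_O contains no directed cycle of strictly positive total weight. -/
/-!
Write `w i j = u i (O j) - u i (O i)` for the edge weights of the envy graph; envy-freeness of
payments `p` says `w i j ≤ p i - p j`. Around a cycle these differences telescope to zero, so
envy-free payments force every cycle to have nonpositive weight. Conversely, if no simple cycle
is positive, pay each agent the largest weight of a simple path starting at them: the empty path
makes this nonnegative, and comparing a heaviest path from `j` with the edge `(i, j)` gives
`w i j ≤ p i - p j`.
-/

open Finset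

theorem finRotate_apply_eq_mk_mod {k : ℕ} (t : Fin k) :
    finRotate k t = ⟨(t + 1) % k, Nat.mod_lt _ t.pos⟩ := by
  have := t.neZero
  ext
  rw [finRotate_apply, Fin.val_add, Fin.val_one', Nat.add_mod_mod]

section Potential

variable {ι : Type*} (w : ι → ι → ℝ)

theorem sum_cycle_nonpos_of_le_sub {p : ι → ℝ} (hp : ∀ i j, w i j ≤ p i - p j)
    {k : ℕ} (c : Fin k → ι) :
    ∑ t : Fin k, w (c t) (c (finRotate k t)) ≤ 0 :=
  calc ∑ t : Fin k, w (c t) (c (finRotate k t))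
      ≤ ∑ t : Fin k, (p (c t) - p (c (finRotate k t))) := sum_le_sum fun t _ => hp _ _
    _ = 0 := by rw [sum_sub_distrib, Equiv.sum_comp (finRotate k) (fun t => p (c t)), sub_self]

/-- The weight of the walk `i → l[0] → l[1] → ⋯`. -/
def pathWeight (i : ι) (l : List ι) : ℝ :=
  (List.zipWith w (i :: l) l).sum

theorem pathWeight_cons (i j : ι) (l : List ι) :
    pathWeight w i (j :: l) = w i j + pathWeight w j l := by
  simp [pathWeight]

theorem pathWeight_append_cons (i j : ι) (l₁ l₂ : List ι) :
    pathWeight w i (l₁ ++ j :: l₂) = pathWeight w i (l₁ ++ [j]) + pathWeight w j l₂ := by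
  induction l₁ generalizing i with
  | nil => simp [pathWeight]
  | cons a l₁ ih => simp [pathWeight_cons, ih, add_assoc]

theorem pathWeight_append_self_eq_sum (i : ι) (l : List ι) :
    pathWeight w i (l ++ [i]) = ∑ t : Fin (l.length + 1),
      w ((i :: l).get t) ((i :: l).get (finRotate _ t)) := by
  have hrot : l ++ [i] = (i :: l).rotate 1 := by simp
  rw [pathWeight, ← List.sum_ofFn]
  congr 1
  refine List.ext_getElem (by simp) fun t _ ht => ?_
  simp only [List.getElem_zipWith, List.getElem_ofFn, List.get_eq_getElem, finRotate_apply_eq_mk_mod]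
  congr 1
  · exact List.getElem_append_left (as := i :: l) (bs := [i]) (by simpa using ht)
  · simp_rw [hrot, List.getElem_rotate]

variable [Fintype ι]

instance (i : ι) : Finite {l : List ι // (i :: l).Nodup} :=
  Finite.of_injective (fun l => (⟨l.1, l.2.of_cons⟩ : {l : List ι // l.Nodup}))
    fun _ _ h => Subtype.ext (Subtype.mk.inj h)

noncomputable def maxPathWeight (i : ι) : ℝ :=
  ⨆ l : {l : List ι // (i :: l).Nodup}, pathWeight w i l

variable {w}

theorem pathWeight_le_maxPathWeight {i : ι} {l : List ι} (hl : (i :: l).Nodup) :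
    pathWeight w i l ≤ maxPathWeight w i :=
  le_ciSup (f := fun l : {l : List ι // (i :: l).Nodup} => pathWeight w i l)
    (Finite.bddAbove_range _) ⟨l, hl⟩

theorem exists_pathWeight_eq_maxPathWeight (i : ι) :
    ∃ l : List ι, (i :: l).Nodup ∧ pathWeight w i l = maxPathWeight w i := by
  have : Nonempty {l : List ι // (i :: l).Nodup} := ⟨⟨[], List.nodup_singleton i⟩⟩
  obtain ⟨⟨l, hl⟩, h⟩ := exists_eq_ciSup_of_finite
    (f := fun l : {l : List ι // (i :: l).Nodup} => pathWeight w i l)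
  exact ⟨l, hl, h⟩

theorem maxPathWeight_nonneg (i : ι) : 0 ≤ maxPathWeight w i :=
  pathWeight_le_maxPathWeight (l := []) (List.nodup_singleton i)

/-- If `i` lies on a heaviest simple path from `j`, closing that path at `i` gives a simple
cycle through the edge `(i, j)`; otherwise `i` can be prepended to it. -/
theorem le_maxPathWeight_sub_maxPathWeight
    (hcyc : ∀ i l, (i :: l).Nodup → pathWeight w i (l ++ [i]) ≤ 0) (i j : ι) :
    w i j ≤ maxPathWeight w i - maxPathWeight w j := by
  obtain ⟨l, hl, hmax⟩ := exists_pathWeight_eq_maxPathWeight (w := w) j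
  suffices pathWeight w i (j :: l) ≤ maxPathWeight w i by
    rw [pathWeight_cons, hmax] at this
    linarith
  by_cases hi : i ∈ j :: l
  · obtain ⟨l₁, l₂, hsplit⟩ := List.append_of_mem hi
    rw [hsplit] at hl ⊢
    have hcycle : (i :: l₁).Nodup :=
      (List.perm_middle.nodup_iff.mp hl).sublist ((List.sublist_append_left l₁ l₂).cons_cons i)
    have hpath : (i :: l₂).Nodup := hl.sublist (List.sublist_append_right _ _)
    rw [pathWeight_append_cons]
    linarith [hcyc i l₁ hcycle, pathWeight_le_maxPathWeight (w := w) hpath]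
  · exact pathWeight_le_maxPathWeight (List.nodup_cons.mpr ⟨hi, hl⟩)

theorem exists_nonneg_potential_iff_sum_cycle_nonpos (hw : ∀ i, w i i ≤ 0) :
    (∃ p : ι → ℝ, (∀ i, 0 ≤ p i) ∧ ∀ i j, w i j ≤ p i - p j) ↔
      ∀ k, 2 ≤ k → ∀ c : Fin k → ι, Function.Injective c →
        ∑ t : Fin k, w (c t) (c (finRotate k t)) ≤ 0 := by
  refine ⟨fun ⟨p, _, hp⟩ k _ c _ => sum_cycle_nonpos_of_le_sub w hp c, fun hcyc => ?_⟩
  refine ⟨maxPathWeight w, maxPathWeight_nonneg, le_maxPathWeight_sub_maxPathWeight ?_⟩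
  rintro i (_ | ⟨j, l⟩) hl
  · simpa [pathWeight] using hw i
  · rw [pathWeight_append_self_eq_sum]
    exact hcyc _ (by simp) _ (List.nodup_iff_injective_get.mp hl)

end Potential

/-- An allocation of indivisible items is envy-freeable (can be made envy-free
by non-negative subsidy payments) iff its envy graph (edge `(i, j)` has weight
`u i (O j) - u i (O i)`) contains no directed cycle of strictly positive total weight.
A directed cycle is given by `k ≥ 2` distinct agents `c 0, …, c (k-1)` traversed cyclically. -/
theorem envy_freeable_iff_no_positive_cycle (n m : ℕ)
    (u : Fin n → Finset (Fin m) → ℝ)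
    (f : Fin m → Fin n) :
    (∃ p : Fin n → ℝ, (∀ i, 0 ≤ p i) ∧
        ∀ i j : Fin n, u i (bundle f i) + p i ≥ u i (bundle f j) + p j) ↔
      (∀ (k : ℕ) (hk : 2 ≤ k) (c : Fin k → Fin n), Function.Injective c →
        ∑ t : Fin k,
          (u (c t) (bundle f (c ⟨((t : ℕ) + 1) % k, Nat.mod_lt _ (by omega)⟩)) -
            u (c t) (bundle f (c t))) ≤ 0) := by
  have hfree : ∀ p : Fin n → ℝ, ∀ i j,
      u i (bundle f i) + p i ≥ u i (bundle f j) + p j ↔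
        u i (bundle f j) - u i (bundle f i) ≤ p i - p j := fun p i j => by
    constructor <;> intro <;> linarith
  have h := exists_nonneg_potential_iff_sum_cycle_nonpos
    (w := fun i j => u i (bundle f j) - u i (bundle f i)) fun i => (sub_self _).le
  simp only [finRotate_apply_eq_mk_mod] at h
  simp_rw [hfree]
  exact h
end

section
/- For any allocation O = (O_1, ..., O_n) of indivisible items, there exists a permutation σ of the agents such that the reassigned allocation (O_{σ(1)}, ..., O_{σ(n)}) is envy-freeable; that is, every allocation can be made envy-freeable by reassigning the bundles among the agents. -/
/-!
Hand out the bundles by a permutation `σ` maximising the utilitarian welfare `∑ i, u i (O (σ i))`.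
In the envy graph with weights `w i j = u i (O (σ j)) - u i (O (σ i))` no permutation has positive
total weight, and by Birkhoff's theorem neither has any closed walk: its matrix of edge
multiplicities, padded on the diagonal, is a multiple of a doubly stochastic matrix. So the weights
of walks starting at `i` are bounded above, and their supremum `p i` is a nonnegative payment
(the empty walk has weight `0`) with `w i j + p j ≤ p i` (prepend the edge `i → j`), which is
envy-freeness.
-/

open Finset

section

variable {ι : Type*}

/-- The weight of the walk `i → l[0] → l[1] → ⋯`. -/
def walkWeight (w : ι → ι → ℝ) : ι → List ι → ℝ
  | _, [] => 0
  | i, j :: l => w i j + walkWeight w j l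

theorem walkWeight_add_eq_sum_zip (w : ι → ι → ℝ) (i k : ι) (l : List ι) :
    walkWeight w i l + w ((i :: l).getLast (List.cons_ne_nil i l)) k =
      (((i :: l).zip (l ++ [k])).map fun e => w e.1 e.2).sum := by
  induction l generalizing i with
  | nil => simp [walkWeight]
  | cons j l ih => simp [walkWeight, ← ih, add_assoc]

variable [Fintype ι] [DecidableEq ι]

theorem Multiset.sum_count_mk_left (E : Multiset (ι × ι)) (x : ι) :
    ∑ y, E.count (x, y) = (E.map Prod.fst).count x := by
  induction E using Multiset.induction_on with
  | empty => simp
  | cons e E ih =>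
    simp only [Multiset.count_cons, sum_add_distrib, ih, Multiset.map_cons]
    by_cases h : x = e.1 <;> simp [Prod.ext_iff, h]

theorem Multiset.sum_count_mk_right (E : Multiset (ι × ι)) (y : ι) :
    ∑ x, E.count (x, y) = (E.map Prod.snd).count y := by
  induction E using Multiset.induction_on with
  | empty => simp
  | cons e E ih =>
    simp only [Multiset.count_cons, sum_add_distrib, ih, Multiset.map_cons]
    by_cases h : y = e.2 <;> simp [Prod.ext_iff, h]

theorem Multiset.sum_map_eq_sum_count_mul (E : Multiset (ι × ι)) (f : ι → ι → ℝ) :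
    (E.map fun e => f e.1 e.2).sum = ∑ x, ∑ y, (E.count (x, y) : ℝ) * f x y := by
  rw [sum_multiset_map_count, ← Fintype.sum_prod_type' fun x y => (E.count (x, y) : ℝ) * f x y]
  simp only [nsmul_eq_mul]
  apply sum_subset (subset_univ _)
  intro e _ he
  rw [Multiset.count_eq_zero_of_notMem (mt Multiset.mem_toFinset.2 he), Nat.cast_zero, zero_mul]

theorem Matrix.sum_mul_nonpos_of_sum_row_eq_of_sum_col_eq {w : ι → ι → ℝ}
    (hw : ∀ σ : Equiv.Perm ι, ∑ x, w x (σ x) ≤ 0) {M : Matrix ι ι ℝ} {s : ℝ} (hs : 0 < s)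
    (hM : ∀ x y, 0 ≤ M x y) (hrow : ∀ x, ∑ y, M x y = s) (hcol : ∀ y, ∑ x, M x y = s) :
    ∑ x, ∑ y, M x y * w x y ≤ 0 := by
  have hds : s⁻¹ • M ∈ doublyStochastic ℝ ι := by
    refine mem_doublyStochastic_iff_sum.2 ⟨fun x y => ?_, fun x => ?_, fun y => ?_⟩
    · simpa using mul_nonneg (inv_nonneg.2 hs.le) (hM x y)
    · simp [← mul_sum, hrow, hs.ne']
    · simp [← mul_sum, hcol, hs.ne']
  obtain ⟨c, hc, -, hcM⟩ := exists_eq_sum_perm_of_mem_doublyStochastic hds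
  have hperm (σ : Equiv.Perm ι) : ∑ x, ∑ y, σ.permMatrix ℝ x y * w x y = ∑ x, w x (σ x) := by
    simp [Equiv.Perm.permMatrix, PEquiv.toMatrix_apply]
  have hsum : ∑ x, ∑ y, M x y * w x y = s * ∑ σ, c σ * ∑ x, w x (σ x) := by
    rw [← smul_inv_smul₀ hs.ne' M, ← hcM]
    simp only [← hperm, Matrix.smul_apply, Matrix.sum_apply, smul_eq_mul, mul_sum, sum_mul]
    rw [sum_comm_cycle]
    simp only [mul_assoc]
  rw [hsum]
  exact mul_nonpos_of_nonneg_of_nonpos hs.le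
    (sum_nonpos fun σ _ => mul_nonpos_of_nonneg_of_nonpos (hc σ) (hw σ))

theorem Multiset.sum_map_nonpos_of_map_fst_eq_map_snd {w : ι → ι → ℝ} (hw0 : ∀ x, w x x = 0)
    (hw : ∀ σ : Equiv.Perm ι, ∑ x, w x (σ x) ≤ 0) {E : Multiset (ι × ι)}
    (hE : E.map Prod.fst = E.map Prod.snd) : (E.map fun e => w e.1 e.2).sum ≤ 0 := by
  obtain rfl | hE0 := eq_or_ne E 0
  · simp
  set N : ℝ := ↑(Multiset.card E)
  set d : ι → ℝ := fun x => ↑((E.map Prod.fst).count x)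
  have hN : 0 < N := by simpa [N, Multiset.card_pos] using hE0
  have hd (x : ι) : d x ≤ N := by
    simpa [d, N] using Multiset.count_le_card x (E.map Prod.fst)
  -- `x` is the source of `d x` edges and, by `hE`, the target of as many, so padding the diagonal
  -- entry by `N - d x` makes every row and column sum equal to `N`.
  let M : Matrix ι ι ℝ := fun x y => E.count (x, y) + if x = y then N - d x else 0
  have hrow (x : ι) : ∑ y, M x y = N := by
    simp [M, sum_add_distrib, ← Nat.cast_sum, Multiset.sum_count_mk_left, d]
  have hcol (y : ι) : ∑ x, M x y = N := by
    simp [M, sum_add_distrib, ← Nat.cast_sum, Multiset.sum_count_mk_right, d, hE]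
  have hM (x y : ι) : 0 ≤ M x y := by
    have := hd x
    simp only [M]
    split_ifs <;> positivity
  have hpad : ∑ x, ∑ y, M x y * w x y = ∑ x, ∑ y, (E.count (x, y) : ℝ) * w x y := by
    simp [M, add_mul, sum_add_distrib, ite_mul, hw0]
  rw [Multiset.sum_map_eq_sum_count_mul, ← hpad]
  exact Matrix.sum_mul_nonpos_of_sum_row_eq_of_sum_col_eq hw hN hM hrow hcol

theorem walkWeight_add_closing_nonpos {w : ι → ι → ℝ} (hw0 : ∀ x, w x x = 0)
    (hw : ∀ σ : Equiv.Perm ι, ∑ x, w x (σ x) ≤ 0) (i : ι) (l : List ι) :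
    walkWeight w i l + w ((i :: l).getLast (List.cons_ne_nil i l)) i ≤ 0 := by
  have hlen : (i :: l).length = (l ++ [i]).length := by simp
  rw [walkWeight_add_eq_sum_zip]
  simpa using Multiset.sum_map_nonpos_of_map_fst_eq_map_snd hw0 hw
    (E := ((i :: l).zip (l ++ [i]) : Multiset (ι × ι))) (by
      simp only [Multiset.map_coe, List.map_fst_zip hlen.le, List.map_snd_zip hlen.ge]
      exact Multiset.coe_eq_coe.2 (List.perm_append_singleton i l).symm)

theorem bddAbove_range_walkWeight {w : ι → ι → ℝ} (hw0 : ∀ x, w x x = 0)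
    (hw : ∀ σ : Equiv.Perm ι, ∑ x, w x (σ x) ≤ 0) (i : ι) :
    BddAbove (Set.range (walkWeight w i)) := by
  refine ⟨∑ x, |w x i|, ?_⟩
  rintro _ ⟨l, rfl⟩
  set x := (i :: l).getLast (List.cons_ne_nil i l)
  have hclosed := walkWeight_add_closing_nonpos hw0 hw i l
  have hx : |w x i| ≤ ∑ y, |w y i| := single_le_sum (fun y _ => abs_nonneg (w y i)) (mem_univ x)
  linarith [neg_le_abs (w x i)]

theorem exists_nonneg_potential {w : ι → ι → ℝ} (hw0 : ∀ x, w x x = 0)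
    (hw : ∀ σ : Equiv.Perm ι, ∑ x, w x (σ x) ≤ 0) :
    ∃ p : ι → ℝ, (∀ i, 0 ≤ p i) ∧ ∀ i j, w i j + p j ≤ p i := by
  refine ⟨fun i => ⨆ l, walkWeight w i l, fun i => ?_, fun i j => ?_⟩
  · exact le_ciSup (bddAbove_range_walkWeight hw0 hw i) []
  · rw [← le_sub_iff_add_le']
    refine ciSup_le fun l => ?_
    rw [le_sub_iff_add_le']
    exact le_ciSup (bddAbove_range_walkWeight hw0 hw i) (j :: l)

theorem exists_envyFree_payments_of_forall_sum_le (v : ι → ι → ℝ) (σ : Equiv.Perm ι)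
    (hσ : ∀ τ : Equiv.Perm ι, ∑ i, v i (τ i) ≤ ∑ i, v i (σ i)) :
    ∃ p : ι → ℝ, (∀ i, 0 ≤ p i) ∧ ∀ i j, v i (σ j) + p j ≤ v i (σ i) + p i := by
  have hgain (τ : Equiv.Perm ι) : ∑ i, (v i (σ (τ i)) - v i (σ i)) ≤ 0 := by
    simpa [sum_sub_distrib] using hσ (σ * τ)
  obtain ⟨p, hp0, hp⟩ := exists_nonneg_potential (w := fun i j => v i (σ j) - v i (σ i))
    (fun _ => sub_self _) hgain
  exact ⟨p, hp0, fun i j => by linarith [hp i j]⟩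

end

theorem exists_envy_freeable_reassignment_general (n m : ℕ)
    (u : Fin n → Finset (Fin m) → ℝ)
    (f : Fin m → Fin n) :
    ∃ σ : Equiv.Perm (Fin n), ∃ p : Fin n → ℝ, (∀ i, 0 ≤ p i) ∧
      ∀ i j : Fin n,
        u i (bundle f (σ i)) + p i ≥ u i (bundle f (σ j)) + p j := by
  obtain ⟨σ, hσ⟩ := Finite.exists_max fun σ : Equiv.Perm (Fin n) => ∑ i, u i (bundle f (σ i))
  obtain ⟨p, hp0, hp⟩ :=
    exists_envyFree_payments_of_forall_sum_le (fun i b => u i (bundle f b)) σ hσ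
  exact ⟨σ, p, hp0, hp⟩

/-- For any allocation of indivisible items, there exists a permutation `σ` of
the agents such that the reassigned allocation `(O_{σ(1)}, …, O_{σ(n)})` is envy-freeable,
i.e., admits non-negative subsidy payments making it envy-free. -/
theorem exists_envy_freeable_reassignment (n m : ℕ)
    (u : Fin n → Finset (Fin m) → ℝ) (hu0 : ∀ i, u i ∅ = 0)
    (f : Fin m → Fin n) :
    ∃ σ : Equiv.Perm (Fin n), ∃ p : Fin n → ℝ, (∀ i, 0 ≤ p i) ∧
      ∀ i j : Fin n,
        u i (bundle f (σ i)) + p i ≥ u i (bundle f (σ j)) + p j :=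
  exists_envy_freeable_reassignment_general n m u f
end

section
/- For any number n of agents with additive utility functions over a finite set of indivisible goods, where each agent values each good at most 1, there exists an allocation O and a payment vector p ∈ ℝ^n_{≥0} such that (O, p) is envy-free and the total subsidy satisfies Σ_{i=1}^n p_i ≤ n − 1. -/
open Finset

namespace OneDollar

variable {α : Type*}

/-- Weight of a walk starting at `i` visiting the vertices in `l` in order. -/
def wkW (w : α → α → ℝ) : α → List α → ℝ
  | _, [] => 0
  | i, j :: l => w i j + wkW w j l

/-- Endpoint of a walk. -/
def wkE : α → List α → α
  | i, [] => i
  | _, j :: l => wkE j l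

@[simp] lemma wkW_nil (w : α → α → ℝ) (i : α) : wkW w i [] = 0 := rfl
@[simp] lemma wkW_cons (w : α → α → ℝ) (i j : α) (l : List α) :
    wkW w i (j :: l) = w i j + wkW w j l := rfl
@[simp] lemma wkE_nil (i : α) : wkE i [] = i := rfl
@[simp] lemma wkE_cons (i j : α) (l : List α) : wkE i (j :: l) = wkE j l := rfl

lemma wkE_append (i : α) (l l' : List α) : wkE i (l ++ l') = wkE (wkE i l) l' := by
  induction l generalizing i with
  | nil => simp
  | cons j t ih => simp [ih]

@[simp] lemma wkE_concat (i x : α) (l : List α) : wkE i (l ++ [x]) = x := by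
  rw [wkE_append]; simp

lemma wkW_append (w : α → α → ℝ) (i : α) (l l' : List α) :
    wkW w i (l ++ l') = wkW w i l + wkW w (wkE i l) l' := by
  induction l generalizing i with
  | nil => simp
  | cons j t ih => simp [ih, add_assoc]

lemma wkW_sum {β : Type*} (s : Finset β) (W : β → α → α → ℝ) (i : α) (l : List α) :
    wkW (fun a b => ∑ x ∈ s, W x a b) i l = ∑ x ∈ s, wkW (W x) i l := by
  induction l generalizing i with
  | nil => simp
  | cons j t ih => simp [ih, Finset.sum_add_distrib]

lemma dup_split (l : List α) (h : ¬ l.Nodup) :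
    ∃ (a : List α) (x : α) (b c : List α), l = a ++ x :: (b ++ x :: c) := by
  induction l with
  | nil => simp at h
  | cons y t ih =>
    by_cases hy : y ∈ t
    · obtain ⟨s, u, rfl⟩ := List.append_of_mem hy
      exact ⟨[], y, s, u, by simp⟩
    · have ht : ¬ t.Nodup := fun hnd => h (List.nodup_cons.mpr ⟨hy, hnd⟩)
      obtain ⟨a, x, b, c, rfl⟩ := ih ht
      exact ⟨y :: a, x, b, c, by simp⟩

lemma closed_walk_nonpos (w : α → α → ℝ)
    (hA : ∀ (i : α) (l : List α), (i :: l).Nodup → wkW w i (l ++ [i]) ≤ 0) :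
    ∀ (i : α) (l : List α), wkW w i (l ++ [i]) ≤ 0 := by
  have key : ∀ (N : ℕ) (i : α) (l : List α), l.length ≤ N → wkW w i (l ++ [i]) ≤ 0 := by
    intro N
    induction N with
    | zero =>
      intro i l hl
      have : l = [] := List.length_eq_zero_iff.mp (Nat.le_zero.mp hl)
      subst this
      exact hA i [] (by simp)
    | succ N ih =>
      intro i l hl
      by_cases hnd : (i :: l).Nodup
      · exact hA i l hnd
      by_cases hi : i ∈ l
      · obtain ⟨s, t, rfl⟩ := List.append_of_mem hi
        have h1 : (s ++ i :: t) ++ [i] = (s ++ [i]) ++ (t ++ [i]) := by simp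
        rw [h1, wkW_append, wkE_concat]
        have hlen := hl
        simp only [List.length_append, List.length_cons] at hlen
        have hs := ih i s (by omega)
        have ht := ih i t (by omega)
        linarith
      · have hlnd : ¬ l.Nodup := fun hnd' => hnd (List.nodup_cons.mpr ⟨hi, hnd'⟩)
        obtain ⟨a, x, b, c, rfl⟩ := dup_split l hlnd
        have hlen := hl
        simp only [List.length_append, List.length_cons] at hlen
        have h1 : (a ++ x :: (b ++ x :: c)) ++ [i]
            = (a ++ [x]) ++ ((b ++ [x]) ++ (c ++ [i])) := by simp
        rw [h1, wkW_append, wkE_concat, wkW_append w x (b ++ [x]) (c ++ [i]), wkE_concat]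
        have hb := ih x b (by omega)
        have houter := ih i (a ++ x :: c) (by simp; omega)
        rw [show (a ++ x :: c) ++ [i] = (a ++ [x]) ++ (c ++ [i]) by simp,
          wkW_append, wkE_concat] at houter
        linarith
  exact fun i l => key l.length i l le_rfl

lemma walk_le_one (w : α → α → ℝ)
    (hA : ∀ (i : α) (l : List α), (i :: l).Nodup → wkW w i (l ++ [i]) ≤ 0)
    (hB : ∀ (i : α) (l : List α), (i :: l).Nodup → wkW w i l ≤ 1) :
    ∀ (i : α) (l : List α), wkW w i l ≤ 1 := by
  have hC := closed_walk_nonpos w hA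
  have key : ∀ (N : ℕ) (i : α) (l : List α), l.length ≤ N → wkW w i l ≤ 1 := by
    intro N
    induction N with
    | zero =>
      intro i l hl
      have : l = [] := List.length_eq_zero_iff.mp (Nat.le_zero.mp hl)
      subst this
      simp
    | succ N ih =>
      intro i l hl
      by_cases hnd : (i :: l).Nodup
      · exact hB i l hnd
      by_cases hi : i ∈ l
      · obtain ⟨s, t, rfl⟩ := List.append_of_mem hi
        have h1 : s ++ i :: t = (s ++ [i]) ++ t := by simp
        rw [h1, wkW_append, wkE_concat]
        have hlen := hl
        simp only [List.length_append, List.length_cons] at hlen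
        have ht := ih i t (by omega)
        have hs := hC i s
        linarith
      · have hlnd : ¬ l.Nodup := fun hnd' => hnd (List.nodup_cons.mpr ⟨hi, hnd'⟩)
        obtain ⟨a, x, b, c, rfl⟩ := dup_split l hlnd
        have hlen := hl
        simp only [List.length_append, List.length_cons] at hlen
        have h1 : a ++ x :: (b ++ x :: c) = (a ++ [x]) ++ ((b ++ [x]) ++ c) := by simp
        rw [h1, wkW_append, wkE_concat, wkW_append w x (b ++ [x]) c, wkE_concat]
        have hb := hC x b
        have houter := ih i (a ++ x :: c) (by simp; omega)
        rw [show a ++ x :: c = (a ++ [x]) ++ c by simp, wkW_append, wkE_concat] at houter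
        linarith
  exact fun i l => key l.length i l le_rfl



lemma exists_all_nonpos [Fintype α] [Nonempty α] (w : α → α → ℝ)
    (h1 : ∀ (i : α) (l : List α), wkW w i l ≤ 1) :
    ∃ i : α, ∀ l : List α, wkW w i l ≤ 0 := by
  by_contra hc
  push_neg at hc
  choose L hL using hc
  set δ : ℝ := univ.inf' univ_nonempty (fun i : α => wkW w i (L i)) with hδ
  have hδpos : 0 < δ := by
    rw [hδ, Finset.lt_inf'_iff]
    exact fun i _ => hL i
  have hmem : ∀ i : α, δ ≤ wkW w i (L i) := fun i => Finset.inf'_le _ (mem_univ i)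
  -- build arbitrarily heavy walks
  let a : ℕ → α := fun k => Nat.rec (Classical.arbitrary α) (fun _ prev => wkE prev (L prev)) k
  let B : ℕ → List α := fun k => Nat.rec [] (fun k prev => prev ++ L (a k)) k
  have ha0 : a 0 = Classical.arbitrary α := rfl
  have haS : ∀ k, a (k + 1) = wkE (a k) (L (a k)) := fun k => rfl
  have hBS : ∀ k, B (k + 1) = B k ++ L (a k) := fun k => rfl
  have hinv : ∀ k, wkE (a 0) (B k) = a k ∧ (k : ℝ) * δ ≤ wkW w (a 0) (B k) := by
    intro k
    induction k with
    | zero =>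
      constructor
      · rfl
      · show ((0:ℕ) : ℝ) * δ ≤ wkW w (a 0) []
        simp
    | succ k ih =>
      obtain ⟨he, hw⟩ := ih
      constructor
      · rw [hBS, wkE_append, he, haS]
      · rw [hBS, wkW_append, he]
        have := hmem (a k)
        push_cast
        nlinarith
  obtain ⟨k, hk⟩ := exists_nat_gt (1 / δ)
  have h2 := (hinv k).2
  have h3 := h1 (a 0) (B k)
  have : 1 / δ * δ < (k : ℝ) * δ := by
    apply mul_lt_mul_of_pos_right hk hδpos
  rw [one_div_mul_cancel (ne_of_gt hδpos)] at this
  linarith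

lemma payments [Fintype α] [Nonempty α] (w : α → α → ℝ)
    (hA0 : ∀ (i : α) (l : List α), wkW w i (l ++ [i]) ≤ 0)
    (h1 : ∀ (i : α) (l : List α), wkW w i l ≤ 1) :
    ∃ p : α → ℝ, (∀ i, 0 ≤ p i) ∧ (∀ i j, w i j + p j ≤ p i) ∧
      ∑ i, p i ≤ (Fintype.card α : ℝ) - 1 := by
  classical
  set S : α → Set ℝ := fun i => {x | ∃ l : List α, wkW w i l = x} with hS
  have hSne : ∀ i, (S i).Nonempty := fun i => ⟨0, [], rfl⟩
  have hSub : ∀ i, ∀ x ∈ S i, x ≤ 1 := by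
    rintro i x ⟨l, rfl⟩; exact h1 i l
  have hSbdd : ∀ i, BddAbove (S i) := fun i => ⟨1, fun x hx => hSub i x hx⟩
  set p : α → ℝ := fun i => sSup (S i) with hp
  have hp0 : ∀ i, 0 ≤ p i := fun i => le_csSup (hSbdd i) ⟨[], rfl⟩
  have hp1 : ∀ i, p i ≤ 1 := fun i => csSup_le (hSne i) (hSub i)
  have hEF : ∀ i j, w i j + p j ≤ p i := by
    intro i j
    have hle : p j ≤ p i - w i j := by
      apply csSup_le (hSne j)
      rintro x ⟨l, rfl⟩
      have hmem : w i j + wkW w j l ∈ S i := ⟨j :: l, rfl⟩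
      have := le_csSup (hSbdd i) hmem
      linarith
    linarith
  obtain ⟨i0, hi0⟩ := exists_all_nonpos w h1
  have hpi0 : p i0 = 0 := by
    refine le_antisymm ?_ (hp0 i0)
    apply csSup_le (hSne i0)
    rintro x ⟨l, rfl⟩; exact hi0 l
  refine ⟨p, hp0, hEF, ?_⟩
  have hsplit : ∑ i, p i = ∑ i ∈ univ.erase i0, p i + p i0 :=
    (Finset.sum_erase_add _ _ (mem_univ i0)).symm
  rw [hsplit, hpi0, add_zero]
  calc ∑ i ∈ univ.erase i0, p i ≤ ∑ _i ∈ univ.erase i0, (1 : ℝ) :=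
        Finset.sum_le_sum fun i _ => hp1 i
    _ = ((univ.erase i0).card : ℝ) := by simp
    _ = (Fintype.card α : ℝ) - 1 := by
        rw [Finset.card_erase_of_mem (mem_univ i0)]
        have : 1 ≤ Fintype.card α := Fintype.card_pos
        rw [Finset.card_univ, Nat.cast_sub this]
        simp

variable {n m : ℕ}

def oval (v : Fin n → Fin m → ℝ) (i : Fin n) : Option (Fin m) → ℝ
  | none => 0
  | some o => v i o

@[simp] lemma oval_none (v : Fin n → Fin m → ℝ) (i : Fin n) : oval v i none = 0 := rfl
@[simp] lemma oval_some (v : Fin n → Fin m → ℝ) (i : Fin n) (o : Fin m) :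
    oval v i (some o) = v i o := rfl

def pw (v : Fin n → Fin m → ℝ) (g : Fin n → Option (Fin m)) : ℝ := ∑ i, oval v i (g i)

def used (g : Fin n → Option (Fin m)) : Finset (Fin m) :=
  univ.biUnion fun i => (g i).toFinset

lemma mem_used {g : Fin n → Option (Fin m)} {o : Fin m} :
    o ∈ used g ↔ ∃ i, g i = some o := by
  simp [used, Option.mem_toFinset, eq_comm]

def Valid (R : Finset (Fin m)) (g : Fin n → Option (Fin m)) : Prop :=
  (∀ i o, g i = some o → o ∈ R) ∧ ∀ i j o, g i = some o → g j = some o → i = j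

lemma exists_opt (v : Fin n → Fin m → ℝ) (hv : ∀ i o, 0 ≤ v i o) (i0 : Fin n)
    (R : Finset (Fin m)) :
    ∃ g, Valid R g ∧ (∀ g', Valid R g' → pw v g' ≤ pw v g) ∧
      (R.Nonempty → (used g).Nonempty) := by
  classical
  set S : Finset (Fin n → Option (Fin m)) := univ.filter (fun g => Valid R g) with hSdef
  have hbot : (fun _ : Fin n => (none : Option (Fin m))) ∈ S := by
    simp only [hSdef, mem_filter, mem_univ, true_and]
    exact ⟨fun i o h => by simp at h, fun i j o h => by simp at h⟩
  obtain ⟨g1, hg1S, hg1max⟩ := S.exists_max_image (pw v) ⟨_, hbot⟩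
  set S' : Finset (Fin n → Option (Fin m)) := S.filter (fun g => pw v g1 ≤ pw v g) with hS'def
  obtain ⟨g, hgS', hgmax⟩ := S'.exists_max_image (fun g => (used g).card)
    ⟨g1, by simp [hS'def, hg1S]⟩
  simp only [hS'def, mem_filter] at hgS'
  obtain ⟨hgS, hgw⟩ := hgS'
  have hgValid : Valid R g := by
    simpa only [hSdef, mem_filter, mem_univ, true_and] using hgS
  have hgopt : ∀ g', Valid R g' → pw v g' ≤ pw v g := by
    intro g' hg'
    have : g' ∈ S := by simp [hSdef, hg']
    exact le_trans (hg1max g' this) hgw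
  refine ⟨g, hgValid, hgopt, ?_⟩
  rintro ⟨o, hoR⟩
  by_contra hemp
  have hgnone : ∀ i, g i = none := by
    intro i
    cases hgi : g i with
    | none => rfl
    | some o' => exact absurd ⟨o', by rw [mem_used]; exact ⟨i, hgi⟩⟩ hemp
  set g2 : Fin n → Option (Fin m) := Function.update g i0 (some o) with hg2def
  have hg2some : ∀ i o', g2 i = some o' → i = i0 ∧ o' = o := by
    intro i o' h
    by_cases hne : i = i0
    · subst hne
      rw [hg2def, Function.update_self] at h
      exact ⟨rfl, (Option.some_inj.mp h).symm⟩
    · rw [hg2def, Function.update_of_ne hne, hgnone] at h; simp at h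
  have hg2Valid : Valid R g2 := by
    constructor
    · intro i o' h
      obtain ⟨h1, h2⟩ := hg2some i o' h
      subst h2; exact hoR
    · intro i j o' hi hj
      rw [(hg2some i o' hi).1, (hg2some j o' hj).1]
  have hpwg : pw v g = 0 := by
    simp [pw, hgnone]
  have hpwg2 : pw v g2 = v i0 o := by
    rw [pw]
    rw [Finset.sum_eq_single i0]
    · simp [hg2def]
    · intro i _ hne
      rw [hg2def, Function.update_of_ne hne, hgnone]; simp
    · simp
  have h1 : pw v g2 ≤ pw v g := hgopt g2 hg2Valid
  have h2 : v i0 o = 0 := le_antisymm (by rw [← hpwg2, ← hpwg] at *; linarith) (hv i0 o)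
  have hg2S' : g2 ∈ S' := by
    have : g2 ∈ S := by simp [hSdef, hg2Valid]
    simp only [hS'def, mem_filter]
    refine ⟨this, ?_⟩
    calc pw v g1 ≤ pw v g := hgw
      _ = pw v g2 := by rw [hpwg, hpwg2, h2]
  have hcard : (used g2).card ≤ (used g).card := hgmax g2 hg2S'
  have hmemo : o ∈ used g2 := by rw [mem_used]; exact ⟨i0, by simp [hg2def]⟩
  have hpos : 0 < (used g2).card := Finset.card_pos.mpr ⟨o, hmemo⟩
  have hempty : used g = ∅ := Finset.not_nonempty_iff_eq_empty.mp hemp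
  rw [hempty, Finset.card_empty] at hcard
  omega


section Algo

variable (v : Fin n → Fin m → ℝ) (hv : ∀ i o, 0 ≤ v i o) (i0 : Fin n)

noncomputable def MM : ℕ → Fin n → Option (Fin m)
  | t => (exists_opt v hv i0
      (univ \ (range t).attach.biUnion fun s => used (MM s.1))).choose
termination_by t => t
decreasing_by all_goals exact mem_range.mp s.2

noncomputable def Rm (t : ℕ) : Finset (Fin m) :=
  univ \ (range t).biUnion fun s => used (MM v hv i0 s)

lemma attach_biUnion_eq (t : ℕ) :
    ((range t).attach.biUnion fun s => used (MM v hv i0 s.1))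
      = (range t).biUnion fun s => used (MM v hv i0 s) := by
  ext o
  simp only [mem_biUnion, mem_attach, true_and, Subtype.exists]
  constructor
  · rintro ⟨s, hs, h⟩; exact ⟨s, hs, h⟩
  · rintro ⟨s, hs, h⟩; exact ⟨s, hs, h⟩

lemma MM_spec (t : ℕ) :
    Valid (Rm v hv i0 t) (MM v hv i0 t) ∧
    (∀ g', Valid (Rm v hv i0 t) g' → pw v g' ≤ pw v (MM v hv i0 t)) ∧
    ((Rm v hv i0 t).Nonempty → (used (MM v hv i0 t)).Nonempty) := by
  have heq : MM v hv i0 t = (exists_opt v hv i0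
      (univ \ (range t).attach.biUnion fun s => used (MM v hv i0 s.1))).choose := by
    rw [MM]
  have h := (exists_opt v hv i0
      (univ \ (range t).attach.biUnion fun s => used (MM v hv i0 s.1))).choose_spec
  rw [← heq] at h
  rw [attach_biUnion_eq] at h
  exact h

lemma MM_valid (t : ℕ) : Valid (Rm v hv i0 t) (MM v hv i0 t) := (MM_spec v hv i0 t).1
lemma MM_opt (t : ℕ) : ∀ g', Valid (Rm v hv i0 t) g' → pw v g' ≤ pw v (MM v hv i0 t) :=
  (MM_spec v hv i0 t).2.1
lemma MM_prog (t : ℕ) : (Rm v hv i0 t).Nonempty → (used (MM v hv i0 t)).Nonempty :=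
  (MM_spec v hv i0 t).2.2

lemma Rm_succ (t : ℕ) :
    Rm v hv i0 (t + 1) = Rm v hv i0 t \ used (MM v hv i0 t) := by
  ext o
  simp only [Rm, mem_sdiff, mem_univ, true_and, mem_biUnion, mem_range, not_exists, not_and]
  constructor
  · intro h
    exact ⟨fun s hs => h s (by omega), h t (by omega)⟩
  · rintro ⟨h1, h2⟩ s hs
    rcases Nat.lt_succ_iff_lt_or_eq.mp hs with hlt | rfl
    · exact h1 s hlt
    · exact h2

lemma Rm_anti {t s : ℕ} (h : t ≤ s) : Rm v hv i0 s ⊆ Rm v hv i0 t := by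
  induction s with
  | zero => have ht0 : t = 0 := Nat.le_zero.mp h; subst ht0; exact subset_rfl
  | succ s ih =>
    rcases Nat.lt_succ_iff_lt_or_eq.mp (Nat.lt_succ_of_le h) with hlt | rfl
    · have h1 : Rm v hv i0 (s + 1) ⊆ Rm v hv i0 s := by
        rw [Rm_succ]; exact sdiff_subset
      exact h1.trans (ih (by omega))
    · exact subset_rfl

lemma used_subset (t : ℕ) : used (MM v hv i0 t) ⊆ Rm v hv i0 t := by
  intro o ho
  rw [mem_used] at ho
  obtain ⟨i, hi⟩ := ho
  exact (MM_valid v hv i0 t).1 i o hi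

lemma Rm_card (t : ℕ) : (Rm v hv i0 t).card ≤ m - t := by
  induction t with
  | zero => simpa [Rm] using Finset.card_le_univ _
  | succ t ih =>
    rcases Finset.eq_empty_or_nonempty (Rm v hv i0 t) with he | hne
    · rw [Rm_succ, he]; simp
    · obtain ⟨o, ho⟩ := MM_prog v hv i0 t hne
      have : Rm v hv i0 (t + 1) ⊆ (Rm v hv i0 t).erase o := by
        rw [Rm_succ]
        intro x hx
        rw [mem_sdiff] at hx
        refine Finset.mem_erase.mpr ⟨?_, hx.1⟩
        rintro rfl; exact hx.2 ho
      have hcard := Finset.card_le_card this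
      rw [Finset.card_erase_of_mem (used_subset v hv i0 t ho)] at hcard
      omega

lemma Rm_m : Rm v hv i0 m = ∅ := by
  have h := Rm_card v hv i0 m
  rw [Nat.sub_self] at h
  exact Finset.card_eq_zero.mp (Nat.le_zero.mp h)

lemma round_unique {t s : ℕ} {i j : Fin n} {o : Fin m}
    (ht : MM v hv i0 t i = some o) (hs : MM v hv i0 s j = some o) : t = s ∧ i = j := by
  have key : ∀ t s : ℕ, t < s → ∀ (i j : Fin n),
      MM v hv i0 t i = some o → MM v hv i0 s j = some o → False := by
    intro t s hts i j hti hsj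
    have h1 : o ∈ used (MM v hv i0 t) := mem_used.mpr ⟨i, hti⟩
    have h2 : o ∈ Rm v hv i0 s := (MM_valid v hv i0 s).1 j o hsj
    have h3 : o ∈ Rm v hv i0 (t + 1) := Rm_anti v hv i0 (by omega : t + 1 ≤ s) h2
    rw [Rm_succ, mem_sdiff] at h3
    exact h3.2 h1
  rcases lt_trichotomy t s with hlt | rfl | hgt
  · exact absurd (key t s hlt i j ht hs) not_false
  · exact ⟨rfl, (MM_valid v hv i0 t).2 i j o ht hs⟩
  · exact absurd (key s t hgt j i hs ht) not_false

lemma cover (o : Fin m) : ∃ t, t < m ∧ ∃ i, MM v hv i0 t i = some o := by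
  have ho : o ∉ Rm v hv i0 m := by rw [Rm_m]; exact notMem_empty o
  simp only [Rm, mem_sdiff, mem_univ, true_and, not_not, mem_biUnion, mem_range] at ho
  obtain ⟨t, ht, hu⟩ := ho
  rw [mem_used] at hu
  obtain ⟨i, hi⟩ := hu
  exact ⟨t, ht, i, hi⟩

end Algo

section Bridge

variable {α : Type*}

lemma map_sigma_sum_cycle (w : α → α → ℝ) (σ : α → α) :
    ∀ (i : α) (l : List α) (z : α), (i :: l).map σ = l ++ [z] →
      ((i :: l).map fun x => w x (σ x)).sum = wkW w i (l ++ [z]) := by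
  intro i l
  induction l generalizing i with
  | nil =>
    intro z hz
    have hsz : σ i = z := by simpa using hz
    simp [wkW, hsz]
  | cons j t ih =>
    intro z hz
    simp only [List.map_cons, List.cons_append, List.cons.injEq] at hz
    obtain ⟨h1, h2⟩ := hz
    have h2' : (j :: t).map σ = t ++ [z] := by simpa using h2
    have := ih j z h2'
    simp only [List.map_cons, List.sum_cons] at this ⊢
    rw [this, h1]
    simp [wkW]

lemma map_sigma_sum_path (w : α → α → ℝ) (σ : α → α) :
    ∀ (i : α) (l : List α) (z : α), (i :: l).map σ = l ++ [z] →
      (((i :: l).dropLast).map fun x => w x (σ x)).sum = wkW w i l := by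
  intro i l
  induction l generalizing i with
  | nil => intro z _; simp
  | cons j t ih =>
    intro z hz
    simp only [List.map_cons, List.cons_append, List.cons.injEq] at hz
    obtain ⟨h1, h2⟩ := hz
    have h2' : (j :: t).map σ = t ++ [z] := by simpa using h2
    have := ih j z h2'
    rw [List.dropLast_cons₂, List.map_cons, List.sum_cons, this, h1]
    simp [wkW]

lemma map_formPerm_rotate [DecidableEq α] (c : List α) (h : c.Nodup) :
    c.map c.formPerm = c.rotate 1 := by
  apply List.ext_getElem
  · simp [List.length_rotate]
  · intro s h1 h2
    rw [List.getElem_map, List.formPerm_apply_getElem c h s (by simpa using h1),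
      List.getElem_rotate]

lemma wkE_mem (i : α) (l : List α) : wkE i l ∈ i :: l := by
  induction l generalizing i with
  | nil => simp
  | cons j t ih =>
    have := ih j
    simp only [wkE_cons]
    simp only [List.mem_cons] at this ⊢
    tauto

lemma cons_eq_dropLast_concat (i : α) (l : List α) :
    i :: l = (i :: l).dropLast ++ [wkE i l] := by
  induction l generalizing i with
  | nil => simp
  | cons j t ih =>
    show i :: j :: t = (i :: j :: t).dropLast ++ [wkE j t]
    rw [List.dropLast_cons₂, List.cons_append]
    congr 1
    exact ih j

end Bridge

section Rounds

variable (v : Fin n → Fin m → ℝ) (hv : ∀ i o, 0 ≤ v i o) (i0 : Fin n)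

lemma round_cycle (t : ℕ) (i : Fin n) (l : List (Fin n)) (h : (i :: l).Nodup) :
    wkW (fun a b => oval v a (MM v hv i0 t b) - oval v a (MM v hv i0 t a)) i (l ++ [i]) ≤ 0 := by
  classical
  set g := MM v hv i0 t with hg
  have hrot : (i :: l).map ⇑((i :: l).formPerm) = l ++ [i] := by
    rw [map_formPerm_rotate _ h, List.rotate_cons_succ, List.rotate_zero]
  set σ := (i :: l).formPerm with hσ
  have hval : Valid (Rm v hv i0 t) g := MM_valid v hv i0 t
  have hg' : Valid (Rm v hv i0 t) (fun x => g (σ x)) := by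
    constructor
    · intro x o hx; exact hval.1 (σ x) o hx
    · intro x y o hx hy
      exact σ.injective (hval.2 (σ x) (σ y) o hx hy)
  have hle : pw v (fun x => g (σ x)) ≤ pw v g := MM_opt v hv i0 t _ hg'
  have hsum : pw v (fun x => g (σ x)) - pw v g
      = ∑ x : Fin n, (oval v x (g (σ x)) - oval v x (g x)) := by
    rw [pw, pw, ← Finset.sum_sub_distrib]
  have hout : ∀ x ∈ univ, x ∉ (i :: l).toFinset →
      oval v x (g (σ x)) - oval v x (g x) = 0 := by
    intro x _ hx
    rw [hσ, List.formPerm_apply_of_notMem (by simpa using hx)]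
    ring
  have hrestrict : ∑ x ∈ (i :: l).toFinset, (oval v x (g (σ x)) - oval v x (g x))
      = ∑ x : Fin n, (oval v x (g (σ x)) - oval v x (g x)) :=
    Finset.sum_subset (subset_univ _) hout
  have hlist : ∑ x ∈ (i :: l).toFinset, (oval v x (g (σ x)) - oval v x (g x))
      = ((i :: l).map fun x => (oval v x (g (σ x)) - oval v x (g x))).sum :=
    List.sum_toFinset _ h
  have hwk := map_sigma_sum_cycle (fun a b => oval v a (g b) - oval v a (g a)) ⇑σ i l i hrot
  rw [hwk] at hlist
  linarith

lemma round_path (t : ℕ) (i : Fin n) (l : List (Fin n)) (h : (i :: l).Nodup) :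
    wkW (fun a b => oval v a (MM v hv i0 t b) - oval v a (MM v hv i0 t a)) i l
      ≤ oval v (wkE i l) (MM v hv i0 t (wkE i l))
        - oval v (wkE i l) (MM v hv i0 (t + 1) (wkE i l)) := by
  classical
  set g := MM v hv i0 t with hg
  set g2 := MM v hv i0 (t + 1) with hg2
  set e := wkE i l with he
  have hrot : (i :: l).map ⇑((i :: l).formPerm) = l ++ [i] := by
    rw [map_formPerm_rotate _ h, List.rotate_cons_succ, List.rotate_zero]
  set σ := (i :: l).formPerm with hσ
  have hval : Valid (Rm v hv i0 t) g := MM_valid v hv i0 t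
  have hval2 : Valid (Rm v hv i0 (t + 1)) g2 := MM_valid v hv i0 (t + 1)
  -- the comparison matching
  set g' : Fin n → Option (Fin m) := fun x => if x = e then g2 e else g (σ x) with hg'
  have hmem2 : ∀ o, g2 e = some o → o ∈ Rm v hv i0 (t + 1) := fun o ho => hval2.1 e o ho
  have hnotused : ∀ o, g2 e = some o → ∀ y, g y ≠ some o := by
    intro o ho y hy
    have h1 : o ∈ Rm v hv i0 (t + 1) := hmem2 o ho
    rw [Rm_succ, mem_sdiff] at h1
    exact h1.2 (mem_used.mpr ⟨y, hy⟩)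
  have hg'valid : Valid (Rm v hv i0 t) g' := by
    constructor
    · intro x o hx
      have hx' : (if x = e then g2 e else g (σ x)) = some o := hx
      by_cases hxe : x = e
      · rw [if_pos hxe] at hx'
        exact Rm_anti v hv i0 (Nat.le_succ t) (hmem2 o hx')
      · rw [if_neg hxe] at hx'
        exact hval.1 (σ x) o hx'
    · intro x y o hx hy
      have hx' : (if x = e then g2 e else g (σ x)) = some o := hx
      have hy' : (if y = e then g2 e else g (σ y)) = some o := hy
      by_cases hxe : x = e <;> by_cases hye : y = e
      · rw [hxe, hye]
      · rw [if_pos hxe] at hx'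
        rw [if_neg hye] at hy'
        exact absurd hy' (hnotused o hx' (σ y))
      · rw [if_pos hye] at hy'
        rw [if_neg hxe] at hx'
        exact absurd hx' (hnotused o hy' (σ x))
      · rw [if_neg hxe] at hx'
        rw [if_neg hye] at hy'
        exact σ.injective (hval.2 (σ x) (σ y) o hx' hy')
  have hle : pw v g' ≤ pw v g := MM_opt v hv i0 t _ hg'valid
  have hsum : pw v g' - pw v g = ∑ x : Fin n, (oval v x (g' x) - oval v x (g x)) := by
    rw [pw, pw, ← Finset.sum_sub_distrib]
  have hemem : e ∈ (i :: l).toFinset := by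
    rw [List.mem_toFinset, he]
    exact wkE_mem i l
  have hout : ∀ x ∈ univ, x ∉ (i :: l).toFinset →
      oval v x (g' x) - oval v x (g x) = 0 := by
    intro x _ hx
    have hxe : x ≠ e := fun hh => hx (hh ▸ hemem)
    show oval v x (if x = e then g2 e else g (σ x)) - oval v x (g x) = 0
    rw [if_neg hxe, hσ, List.formPerm_apply_of_notMem (by simpa using hx)]
    ring
  have hrestrict : ∑ x ∈ (i :: l).toFinset, (oval v x (g' x) - oval v x (g x))
      = ∑ x : Fin n, (oval v x (g' x) - oval v x (g x)) :=
    Finset.sum_subset (subset_univ _) hout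
  have hlist : ∑ x ∈ (i :: l).toFinset, (oval v x (g' x) - oval v x (g x))
      = ((i :: l).map fun x => (oval v x (g' x) - oval v x (g x))).sum :=
    List.sum_toFinset _ h
  -- split the list sum at the last element
  have hnd2 : ((i :: l).dropLast ++ [e]).Nodup := by
    rw [← cons_eq_dropLast_concat i l]; exact h
  have henotin : e ∉ (i :: l).dropLast := by
    have := List.disjoint_of_nodup_append hnd2
    intro hmem
    exact this hmem (by simp)
  have hsplit : ((i :: l).map fun x => (oval v x (g' x) - oval v x (g x))).sum
      = (((i :: l).dropLast).map fun x => (oval v x (g' x) - oval v x (g x))).sum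
        + (oval v e (g2 e) - oval v e (g e)) := by
    conv_lhs => rw [cons_eq_dropLast_concat i l]
    rw [List.map_append, List.sum_append, ← he]
    simp only [List.map_cons, List.map_nil, List.sum_cons, List.sum_nil, add_zero]
    congr 1
    show oval v e (if e = e then g2 e else g (σ e)) - oval v e (g e)
        = oval v e (g2 e) - oval v e (g e)
    rw [if_pos rfl]
  have hdrop : (((i :: l).dropLast).map fun x => (oval v x (g' x) - oval v x (g x))).sum
      = (((i :: l).dropLast).map fun x => (oval v x (g (σ x)) - oval v x (g x))).sum := by
    congr 1
    apply List.map_congr_left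
    intro x hx
    have hxe : x ≠ e := fun hh => henotin (hh ▸ hx)
    show oval v x (if x = e then g2 e else g (σ x)) - oval v x (g x)
        = oval v x (g (σ x)) - oval v x (g x)
    rw [if_neg hxe]
  have hwk := map_sigma_sum_path (fun a b => oval v a (g b) - oval v a (g a)) ⇑σ i l i hrot
  rw [hwk] at hdrop
  rw [hdrop] at hsplit
  linarith [hle, hsum, hrestrict, hlist, hsplit]

end Rounds

section Alloc

variable (v : Fin n → Fin m → ℝ) (hv : ∀ i o, 0 ≤ v i o) (i0 : Fin n)

noncomputable def rOf (o : Fin m) : ℕ := (cover v hv i0 o).choose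

lemma rOf_lt (o : Fin m) : rOf v hv i0 o < m := (cover v hv i0 o).choose_spec.1

noncomputable def fOf (o : Fin m) : Fin n :=
  (cover v hv i0 o).choose_spec.2.choose

lemma fOf_spec (o : Fin m) :
    MM v hv i0 (rOf v hv i0 o) (fOf v hv i0 o) = some o :=
  (cover v hv i0 o).choose_spec.2.choose_spec

lemma bundle_eq (j : Fin n) :
    bundle (fOf v hv i0) j = (range m).biUnion fun t => (MM v hv i0 t j).toFinset := by
  ext o
  simp only [bundle, mem_filter, mem_univ, true_and, mem_biUnion, mem_range,
    Option.mem_toFinset, Option.mem_def]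
  constructor
  · rintro rfl
    exact ⟨rOf v hv i0 o, rOf_lt v hv i0 o, fOf_spec v hv i0 o⟩
  · rintro ⟨t, _, hsome⟩
    exact (round_unique v hv i0 (fOf_spec v hv i0 o) hsome).2

lemma bundle_sum (i j : Fin n) :
    ∑ o ∈ bundle (fOf v hv i0) j, v i o = ∑ t ∈ range m, oval v i (MM v hv i0 t j) := by
  rw [bundle_eq]
  rw [Finset.sum_biUnion]
  · apply Finset.sum_congr rfl
    intro t _
    cases hmt : MM v hv i0 t j with
    | none => simp
    | some o => simp
  · intro t _ s _ hts
    simp only [Function.onFun]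
    rw [Finset.disjoint_left]
    intro o hot hos
    rw [Option.mem_toFinset, Option.mem_def] at hot hos
    exact hts (round_unique v hv i0 hot hos).1

include hv in
lemma oval_nonneg (i : Fin n) (x : Option (Fin m)) : 0 ≤ oval v i x := by
  cases x with
  | none => simp
  | some o => simpa using hv i o

lemma envy_W_eq :
    (fun a b => (∑ o ∈ bundle (fOf v hv i0) b, v a o)
        - (∑ o ∈ bundle (fOf v hv i0) a, v a o))
      = fun a b => ∑ t ∈ range m,
          (oval v a (MM v hv i0 t b) - oval v a (MM v hv i0 t a)) := by
  funext a b
  rw [bundle_sum, bundle_sum, ← Finset.sum_sub_distrib]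

lemma envy_cycle (i : Fin n) (l : List (Fin n)) (h : (i :: l).Nodup) :
    wkW (fun a b => (∑ o ∈ bundle (fOf v hv i0) b, v a o)
        - (∑ o ∈ bundle (fOf v hv i0) a, v a o)) i (l ++ [i]) ≤ 0 := by
  rw [envy_W_eq, wkW_sum]
  apply Finset.sum_nonpos
  intro t _
  exact round_cycle v hv i0 t i l h

lemma envy_path (hv1 : ∀ i o, v i o ≤ 1) (i : Fin n) (l : List (Fin n))
    (h : (i :: l).Nodup) :
    wkW (fun a b => (∑ o ∈ bundle (fOf v hv i0) b, v a o)
        - (∑ o ∈ bundle (fOf v hv i0) a, v a o)) i l ≤ 1 := by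
  rw [envy_W_eq, wkW_sum]
  have hstep : ∀ t ∈ range m,
      wkW (fun a b => oval v a (MM v hv i0 t b) - oval v a (MM v hv i0 t a)) i l
        ≤ oval v (wkE i l) (MM v hv i0 t (wkE i l))
          - oval v (wkE i l) (MM v hv i0 (t + 1) (wkE i l)) :=
    fun t _ => round_path v hv i0 t i l h
  calc ∑ t ∈ range m,
        wkW (fun a b => oval v a (MM v hv i0 t b) - oval v a (MM v hv i0 t a)) i l
      ≤ ∑ t ∈ range m, (oval v (wkE i l) (MM v hv i0 t (wkE i l))
          - oval v (wkE i l) (MM v hv i0 (t + 1) (wkE i l))) :=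
        Finset.sum_le_sum hstep
    _ = oval v (wkE i l) (MM v hv i0 0 (wkE i l))
        - oval v (wkE i l) (MM v hv i0 m (wkE i l)) :=
        Finset.sum_range_sub' (fun t => oval v (wkE i l) (MM v hv i0 t (wkE i l))) m
    _ ≤ 1 := by
        have h1 : oval v (wkE i l) (MM v hv i0 0 (wkE i l)) ≤ 1 := by
          cases hx : MM v hv i0 0 (wkE i l) with
          | none => simp
          | some o => simpa using hv1 (wkE i l) o
        have h2 : 0 ≤ oval v (wkE i l) (MM v hv i0 m (wkE i l)) :=
          oval_nonneg v hv (wkE i l) _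
        linarith

end Alloc

end OneDollar

/-- With additive utilities over indivisible goods, each good valued in
`[0, 1]` by every agent, there exists an allocation and non-negative payments such that the
pair is envy-free and the total subsidy is at most `n - 1`. -/
theorem ef_total_subsidy_n_minus_one (n m : ℕ) (hn : 0 < n)
    (v : Fin n → Fin m → ℝ) (hv : ∀ i o, 0 ≤ v i o ∧ v i o ≤ 1) :
    ∃ (f : Fin m → Fin n) (p : Fin n → ℝ),
      (∀ i, 0 ≤ p i) ∧
      (∀ i j : Fin n,
        (∑ o ∈ bundle f i, v i o) + p i ≥ (∑ o ∈ bundle f j, v i o) + p j) ∧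
      (∑ i : Fin n, p i) ≤ (n : ℝ) - 1 := by
  classical
  have hni : Nonempty (Fin n) := ⟨⟨0, hn⟩⟩
  have hv0 : ∀ i o, 0 ≤ v i o := fun i o => (hv i o).1
  have hv1 : ∀ i o, v i o ≤ 1 := fun i o => (hv i o).2
  set i0 : Fin n := ⟨0, hn⟩ with hi0
  set f : Fin m → Fin n := OneDollar.fOf v hv0 i0 with hf
  set W : Fin n → Fin n → ℝ := fun a b =>
    (∑ o ∈ bundle f b, v a o) - (∑ o ∈ bundle f a, v a o) with hW
  have hA : ∀ (i : Fin n) (l : List (Fin n)), (i :: l).Nodup →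
      OneDollar.wkW W i (l ++ [i]) ≤ 0 := fun i l h =>
    OneDollar.envy_cycle v hv0 i0 i l h
  have hB : ∀ (i : Fin n) (l : List (Fin n)), (i :: l).Nodup →
      OneDollar.wkW W i l ≤ 1 := fun i l h =>
    OneDollar.envy_path v hv0 i0 hv1 i l h
  have h1 := OneDollar.walk_le_one W hA hB
  have hA0 := OneDollar.closed_walk_nonpos W hA
  obtain ⟨p, hp0, hEF, hsum⟩ := OneDollar.payments W hA0 h1
  refine ⟨f, p, hp0, ?_, ?_⟩
  · intro i j
    have h2 : (∑ o ∈ bundle f j, v i o) - (∑ o ∈ bundle f i, v i o) + p j ≤ p i := hEF i j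
    linarith
  · simpa using hsum
end

section
/- Consider the instance with n agents and a single indivisible good g that every agent values at 1 (additive utilities). For every allocation O of the good and every payment vector p ∈ ℝ^n_{≥0} such that (O, p) is envy-free, the total subsidy satisfies Σ_{i=1}^n p_i ≥ n − 1; hence the bound n − 1 on the total subsidy required to guarantee envy-freeness is tight. -/
open Finset

/-- In the instance with `n` agents and one single indivisible good that every
agent values at 1 (additive utilities, so the value of a bundle is 1 if it contains the
good and 0 otherwise), every envy-free allocation with non-negative payments has total
subsidy at least `n - 1`; hence the bound `n - 1` is tight. -/
theorem single_good_total_subsidy_lower_bound (n : ℕ)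
    (v : Fin n → Fin 1 → ℝ) (hv : ∀ i o, v i o = 1)
    (f : Fin 1 → Fin n) (p : Fin n → ℝ) (hp : ∀ i, 0 ≤ p i)
    (hef : ∀ i j : Fin n,
      (∑ o ∈ bundle f i, v i o) + p i ≥ (∑ o ∈ bundle f j, v i o) + p j) :
    (n : ℝ) - 1 ≤ ∑ i : Fin n, p i := by
  set k := f 0 with hk
  have hbk : bundle f k = {0} := by
    ext o
    simp [bundle, Fin.fin_one_eq_zero o, hk]
  have hbi : ∀ i : Fin n, i ≠ k → bundle f i = ∅ := by
    intro i hi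
    ext o
    simp [bundle, Fin.fin_one_eq_zero o, ← hk, Ne.symm hi]
  have key : ∀ i : Fin n, i ≠ k → (1 : ℝ) ≤ p i := by
    intro i hi
    have h := hef i k
    rw [hbk, hbi i hi] at h
    simp [hv] at h
    have := hp k
    linarith
  have hsplit : ∑ i : Fin n, p i = p k + ∑ i ∈ univ.erase k, p i := by
    rw [add_comm, sum_erase_add univ p (mem_univ k)]
  have hcard : ((univ.erase k).card : ℝ) = (n : ℝ) - 1 := by
    rw [card_erase_of_mem (mem_univ k), card_univ, Fintype.card_fin]
    have : 1 ≤ n := Fin.pos k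
    push_cast [Nat.cast_sub this]
    ring
  have hsum : ((univ.erase k).card : ℝ) ≤ ∑ i ∈ univ.erase k, p i := by
    calc ((univ.erase k).card : ℝ) = ∑ i ∈ univ.erase k, (1 : ℝ) := by simp
    _ ≤ _ := sum_le_sum fun i hi => key i (ne_of_mem_erase hi)
  have := hp k
  linarith [hcard ▸ hsum]
end

section
/- For any number n of agents with additive utility functions over a finite set of indivisible goods, where each agent values each good at most 1, there exists an allocation O and a payment vector p ∈ ℝ^n_{≥0} such that the total subsidy satisfies Σ_{i=1}^n p_i ≤ n/4 and the allocation with payments is proportional: u_i(O_i) + p_i ≥ u_i(O)/n for every agent i. -/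
/-!
Each agent sorts its values decreasingly, `w 0 ≥ w 1 ≥ ⋯`. Fix a bijection between agents and
residues mod `n`, and let step `t < m` belong to the agent of residue `t mod n`. Distinct goods can
be given to distinct steps so that the good of step `t` is among the `t + 1` favourites of its
agent (Hall's condition is immediate), so the agent of residue `a` receives at least
`ℓ a = ∑_{t ≡ a} w t`. For each agent these `n` numbers add up to its total value and, `w` being
antitone with `w 0 ≤ 1`, pairwise differ by at most `1`; such numbers fall short of their mean by
at most `n / 4` in total, since the total shortfall equals the total excess and is at most both
`k α` and `(n - k)(1 - α)`, where `k` of them lie below the mean and the smallest lies `α` below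
it. Averaging over the `n` cyclic shifts of the bijection, some shift needs
total subsidy at most `n / 4`.
-/

open Finset

theorem exists_injective_mem_of_succ_le_card {m : ℕ} {α : Type*} [DecidableEq α]
    (T : Fin m → Finset α) (hT : ∀ t, t.val + 1 ≤ #(T t)) :
    ∃ σ : Fin m → α, Function.Injective σ ∧ ∀ t, σ t ∈ T t := by
  refine (all_card_le_biUnion_card_iff_exists_injective T).mp fun s => ?_
  rcases s.eq_empty_or_nonempty with rfl | hs
  · simp
  calc #s ≤ #(Iic (s.max' hs)) := card_le_card fun t ht => mem_Iic.mpr (s.le_max' t ht)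
    _ ≤ #(T (s.max' hs)) := by rw [Fin.card_Iic]; exact hT _
    _ ≤ #(s.biUnion T) := card_le_card (subset_biUnion_of_mem T (s.max'_mem hs))

section DecreasingRearrangement

variable {m : ℕ} (x : Fin m → ℝ)

/-- The `j`-th largest entry of `x`, counting from `0`, extended by `0` for `j ≥ m`. -/
noncomputable def decreasingRearrangement (j : ℕ) : ℝ :=
  if h : j < m then x (Tuple.sort (OrderDual.toDual ∘ x) ⟨j, h⟩) else 0

lemma antitone_comp_sort_toDual_comp : Antitone (x ∘ Tuple.sort (OrderDual.toDual ∘ x)) :=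
  monotone_toDual_comp_iff.mp (Tuple.monotone_sort _)

lemma decreasingRearrangement_of_le {j : ℕ} (h : m ≤ j) : decreasingRearrangement x j = 0 :=
  dif_neg h.not_gt

lemma decreasingRearrangement_le {C : ℝ} (hC : 0 ≤ C) (hx : ∀ o, x o ≤ C) (j : ℕ) :
    decreasingRearrangement x j ≤ C := by
  unfold decreasingRearrangement
  split_ifs
  exacts [hx _, hC]

lemma decreasingRearrangement_antitone (hx : ∀ o, 0 ≤ x o) :
    Antitone (decreasingRearrangement x) := by
  intro j k hjk
  unfold decreasingRearrangement
  by_cases hk : k < m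
  · rw [dif_pos hk, dif_pos (hjk.trans_lt hk)]
    exact antitone_comp_sort_toDual_comp x (show (⟨j, _⟩ : Fin m) ≤ ⟨k, hk⟩ from hjk)
  · rw [dif_neg hk]
    split_ifs
    exacts [hx _, le_rfl]

lemma sum_range_decreasingRearrangement :
    ∑ j ∈ range m, decreasingRearrangement x j = ∑ o, x o := by
  rw [← Fin.sum_univ_eq_sum_range, ← Equiv.sum_comp (Tuple.sort (OrderDual.toDual ∘ x)) x]
  exact sum_congr rfl fun t _ => dif_pos t.isLt

lemma succ_le_card_filter_decreasingRearrangement_le (t : Fin m) :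
    t.val + 1 ≤ #{o | decreasingRearrangement x t ≤ x o} := by
  rw [← Fin.card_Iic, ← card_map (Tuple.sort (OrderDual.toDual ∘ x)).toEmbedding]
  refine card_le_card fun o ho => ?_
  obtain ⟨j, hj, rfl⟩ := mem_map.mp ho
  simp only [mem_filter, mem_univ, true_and, decreasingRearrangement, dif_pos t.isLt]
  exact antitone_comp_sort_toDual_comp x (mem_Iic.mp hj)

end DecreasingRearrangement

theorem exists_bundle_sum_ge_of_picking {n m : ℕ} (v : Fin n → Fin m → ℝ)
    (picker : Fin m → Fin n) :
    ∃ f : Fin m → Fin n, ∀ i, ∑ t with picker t = i, decreasingRearrangement (v i) t ≤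
      ∑ o ∈ bundle f i, v i o := by
  obtain ⟨σ, hσ, hσT⟩ := exists_injective_mem_of_succ_le_card
    (fun t => {o | decreasingRearrangement (v (picker t)) t ≤ v (picker t) o})
    (fun t => succ_le_card_filter_decreasingRearrangement_le _ t)
  set e := Equiv.ofBijective σ (Finite.injective_iff_bijective.mp hσ)
  refine ⟨picker ∘ e.symm, fun i => ?_⟩
  rw [bundle, sum_filter, sum_filter,
    ← e.sum_comp fun o => if (picker ∘ e.symm) o = i then v i o else 0]
  refine sum_le_sum fun t _ => ?_
  simp only [Function.comp_apply, Equiv.symm_apply_apply]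
  split_ifs with ht
  · subst ht
    simpa [e] using hσT t
  · exact le_rfl

theorem exists_bundle_sum_ge_of_residue_assignment {n m : ℕ} [NeZero n]
    (v : Fin n → Fin m → ℝ) (π : Equiv.Perm (Fin n)) :
    ∃ f : Fin m → Fin n, ∀ i, ∑ j ∈ range m with j % n = π i, decreasingRearrangement (v i) j ≤
      ∑ o ∈ bundle f i, v i o := by
  obtain ⟨f, hf⟩ := exists_bundle_sum_ge_of_picking v fun t => π.symm (Fin.ofNat n t)
  refine ⟨f, fun i => le_of_eq_of_le ?_ (hf i)⟩
  rw [sum_filter, sum_filter, ← Fin.sum_univ_eq_sum_range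
    (fun j => if j % n = π i then decreasingRearrangement (v i) j else 0)]
  simp [Equiv.symm_apply_eq, Fin.ext_iff]

theorem Finset.sum_range_mul_filter_mod_eq {M : Type*} [AddCommMonoid M] (f : ℕ → M)
    {n a : ℕ} (ha : a < n) (K : ℕ) :
    ∑ j ∈ range (K * n) with j % n = a, f j = ∑ k ∈ range K, f (k * n + a) := by
  induction K with
  | zero => simp
  | succ K ih =>
    rw [sum_range_succ, ← ih, Nat.succ_mul, sum_filter, sum_filter, sum_range_add]
    congr 1
    rw [sum_congr rfl fun x hx => by
        rw [Nat.mul_add_mod_self_right, Nat.mod_eq_of_lt (mem_range.mp hx)],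
      sum_ite_eq' _ _ _, if_pos (mem_range.mpr ha)]

theorem sum_filter_mod_sub_sum_filter_mod_le {w : ℕ → ℝ} {m n a b : ℕ} (hw : Antitone w)
    (hm : ∀ j, m ≤ j → w j = 0) (ha : a < n) (hb : b < n) :
    ∑ j ∈ range m with j % n = a, w j - ∑ j ∈ range m with j % n = b, w j ≤ w 0 := by
  have hmn : m ≤ m * n := Nat.le_mul_of_pos_right m (by omega)
  have hresidue : ∀ c < n, ∑ j ∈ range m with j % n = c, w j = ∑ k ∈ range m, w (k * n + c) := by
    intro c hc
    rw [← sum_range_mul_filter_mod_eq w hc]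
    exact sum_subset (filter_subset_filter _ (range_subset_range.mpr hmn))
      fun j hj hj' => hm j (by simp_all)
  have hupper : ∑ k ∈ range m, w (k * n + a) ≤ ∑ k ∈ range m, w (k * n) :=
    sum_le_sum fun k _ => hw (Nat.le_add_right _ _)
  have hlower : ∑ k ∈ range m, w ((k + 1) * n) ≤ ∑ k ∈ range m, w (k * n + b) :=
    sum_le_sum fun k _ => hw (by rw [Nat.succ_mul]; omega)
  have htelescope := sum_range_sub' (fun k => w (k * n)) m
  rw [sum_sub_distrib, hm (m * n) hmn, zero_mul, sub_zero] at htelescope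
  rw [hresidue a ha, hresidue b hb]
  linarith

lemma le_add_mul_add_div_four {P t u α β : ℝ} (hP : 0 ≤ P) (ht : 0 ≤ t) (hu : 0 ≤ u)
    (hαβ : 0 ≤ α + β) (h₁ : P ≤ t * α) (h₂ : P ≤ u * β) : P ≤ (t + u) * (α + β) / 4 := by
  rcases lt_or_ge α 0 with hα | hα
  · nlinarith
  rcases lt_or_ge β 0 with hβ | hβ
  · nlinarith
  refine (mul_self_le_mul_self_iff hP (by positivity)).mpr ?_
  calc P * P ≤ (t * α) * (u * β) := mul_le_mul h₁ h₂ hP (by positivity)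
    _ = (t * u) * (α * β) := by ring
    _ ≤ ((t + u) ^ 2 / 4) * ((α + β) ^ 2 / 4) :=
        mul_le_mul (by nlinarith [sq_nonneg (t - u)]) (by nlinarith [sq_nonneg (α - β)])
          (by positivity) (by positivity)
    _ = _ := by ring

lemma sum_posPart_le_card_filter_pos_mul {ι : Type*} {s : Finset ι} {f : ι → ℝ} {c : ℝ}
    (h : ∀ a ∈ s, f a ≤ c) : ∑ a ∈ s, (f a)⁺ ≤ #{a ∈ s | 0 < f a} * c := by
  rw [← sum_filter_of_ne (p := fun a => 0 < f a) fun a _ ha => ?_, ← nsmul_eq_mul]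
  · refine sum_le_card_nsmul _ _ _ fun a ha => ?_
    rw [mem_filter] at ha
    exact sup_le (h a ha.1) (ha.2.le.trans (h a ha.1))
  · contrapose! ha
    exact posPart_eq_zero.mpr ha

theorem sum_posPart_mean_sub_le {ι : Type*} (s : Finset ι) (ℓ : ι → ℝ) {D : ℝ}
    (hD : ∀ a ∈ s, ∀ b ∈ s, ℓ a - ℓ b ≤ D) :
    ∑ a ∈ s, ((∑ b ∈ s, ℓ b) / #s - ℓ a)⁺ ≤ #s * D / 4 := by
  rcases s.eq_empty_or_nonempty with rfl | hs
  · simp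
  set μ := (∑ b ∈ s, ℓ b) / #s
  obtain ⟨a₀, ha₀, hmin⟩ := s.exists_min_image ℓ hs
  have hbalance : ∑ a ∈ s, (μ - ℓ a)⁺ = ∑ a ∈ s, (ℓ a - μ)⁺ := by
    have hzero : ∑ a ∈ s, (μ - ℓ a) = 0 := by
      rw [sum_sub_distrib, sum_const, nsmul_eq_mul, mul_div_cancel₀ _ (by simp [hs.ne_empty])]
      ring
    rw [← sub_eq_zero, ← sum_sub_distrib, ← hzero]
    refine sum_congr rfl fun a _ => ?_
    rw [← neg_sub μ, posPart_neg, posPart_sub_negPart]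
  have hbelow := sum_posPart_le_card_filter_pos_mul (f := fun a => μ - ℓ a) (c := μ - ℓ a₀)
    fun a ha => by linarith [hmin a ha]
  have habove := sum_posPart_le_card_filter_pos_mul (f := fun a => ℓ a - μ)
    (c := ℓ a₀ + D - μ) fun a ha => by linarith [hD a ha a₀ ha₀]
  have hcard : #{a ∈ s | 0 < μ - ℓ a} + #{a ∈ s | 0 < ℓ a - μ} ≤ #s := by
    rw [← card_filter_add_card_filter_not (s := s) (fun a => 0 < μ - ℓ a)]
    exact Nat.add_le_add_left (card_le_card (monotone_filter_right s
      (p := fun a => 0 < ℓ a - μ) (q := fun a => ¬ 0 < μ - ℓ a) fun a _ h => by linarith)) _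
  have hD₀ : 0 ≤ D := by simpa using hD a₀ ha₀ a₀ ha₀
  calc ∑ a ∈ s, (μ - ℓ a)⁺
      ≤ (#{a ∈ s | 0 < μ - ℓ a} + #{a ∈ s | 0 < ℓ a - μ}) * (μ - ℓ a₀ + (ℓ a₀ + D - μ)) / 4 :=
        le_add_mul_add_div_four (sum_nonneg fun a _ => posPart_nonneg _) (Nat.cast_nonneg _)
          (Nat.cast_nonneg _) (by linarith) hbelow (hbalance ▸ habove)
    _ ≤ #s * D / 4 := by
        rw [show μ - ℓ a₀ + (ℓ a₀ + D - μ) = D by ring]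
        gcongr
        exact_mod_cast hcard

/-- With additive utilities over indivisible goods, each good valued in
`[0, 1]` by every agent, there exists an allocation and non-negative payments with total
subsidy at most `n/4` such that the allocation with payments is proportional:
`u i (O i) + p i ≥ u i (O) / n` for every agent `i`. -/
theorem prop_total_subsidy_n_over_four (n m : ℕ) (hn : 0 < n)
    (v : Fin n → Fin m → ℝ) (hv : ∀ i o, 0 ≤ v i o ∧ v i o ≤ 1) :
    ∃ (f : Fin m → Fin n) (p : Fin n → ℝ),
      (∀ i, 0 ≤ p i) ∧
      (∑ i : Fin n, p i) ≤ (n : ℝ) / 4 ∧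
      (∀ i : Fin n,
        (∑ o ∈ bundle f i, v i o) + p i ≥ (∑ o : Fin m, v i o) / n) := by
  have : NeZero n := ⟨hn.ne'⟩
  set ℓ : Fin n → ℕ → ℝ := fun i a =>
    ∑ j ∈ range m with j % n = a, decreasingRearrangement (v i) j
  set share : Fin n → ℝ := fun i => (∑ o, v i o) / n
  have hℓ_sum : ∀ i, ∑ a ∈ range n, ℓ i a = ∑ o, v i o := fun i => by
    rw [sum_fiberwise_of_maps_to (fun j _ => mem_range.mpr (Nat.mod_lt j hn)),
      sum_range_decreasingRearrangement]
  have hℓ_sub : ∀ i, ∀ a ∈ range n, ∀ b ∈ range n, ℓ i a - ℓ i b ≤ 1 := fun i a ha b hb =>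
    (sum_filter_mod_sub_sum_filter_mod_le (decreasingRearrangement_antitone _ fun o => (hv i o).1)
      (fun j => decreasingRearrangement_of_le _) (mem_range.mp ha) (mem_range.mp hb)).trans
      (decreasingRearrangement_le _ zero_le_one (fun o => (hv i o).2) 0)
  choose F hF using fun c : Fin n => exists_bundle_sum_ge_of_residue_assignment v (Equiv.addRight c)
  simp only [Equiv.coe_addRight] at hF
  have hdeficit : ∑ c, ∑ i, (share i - ℓ i ↑(i + c))⁺ ≤ ∑ _c : Fin n, (n : ℝ) / 4 := by
    rw [sum_comm]
    refine sum_le_sum fun i _ => ?_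
    rw [Fintype.sum_equiv (Equiv.addLeft i) (fun a => (share i - ℓ i ↑(i + a))⁺)
        (fun a : Fin n => (share i - ℓ i a)⁺) fun _ => rfl,
      Fin.sum_univ_eq_sum_range (fun a => (share i - ℓ i a)⁺)]
    simpa [share, hℓ_sum] using sum_posPart_mean_sub_le (range n) (ℓ i) (hℓ_sub i)
  obtain ⟨c, -, hc⟩ := exists_le_of_sum_le univ_nonempty hdeficit
  refine ⟨F c, fun i => (share i - ∑ o ∈ bundle (F c) i, v i o)⁺, fun i => posPart_nonneg _,
    (sum_le_sum fun i _ => posPart_mono (sub_le_sub_left (hF c i) _)).trans hc, fun i => ?_⟩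
  linarith [le_posPart (share i - ∑ o ∈ bundle (F c) i, v i o)]
end
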